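/- arXiv:1806.11253 — 10 statements merged into one kernel-verified Lean document; each statement's English description precedes it below -/
import Mathlib

section
/- Suppose every non-stubborn agent is reachable from a stubborn agent and that the series ∑_{s=0}^∞ min_{i∈V₁} ω_i(s) diverges. Then the matrix G is invertible, and for every initial vector x(0) ∈ ℝ^N, the sequence defined by x(t+1) = (I + Ω(t)A)·x(t) satisfies: the subvector of x(t) indexed by V₁ converges, as t → ∞, to −G⁻¹·F·x_{V₀}(0), where x_{V₀}(0) is the subvector of x(0) indexed by V₀ (which is preserved by the dynamics since the rows of A indexed by V₀ are zero). -/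
open Matrix Filter Topology


-- helper lemmas about u k = B^k *ᵥ 1
private lemma mulVec_apply' {n : ℕ} (M : Matrix (Fin n) (Fin n) ℝ) (v : Fin n → ℝ) (i : Fin n) :
    (M *ᵥ v) i = ∑ j, M i j * v j := rfl

private lemma u_succ {n : ℕ} (B : Matrix (Fin n) (Fin n) ℝ) (k : ℕ) (i : Fin n) :
    ((B ^ (k+1)) *ᵥ fun _ => (1:ℝ)) i = ∑ j, B i j * ((B ^ k) *ᵥ fun _ => (1:ℝ)) j := by
  rw [pow_succ', ← mulVec_mulVec]
  exact mulVec_apply' _ _ _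

private lemma u_nonneg {n : ℕ} {B : Matrix (Fin n) (Fin n) ℝ}
    (hBnn : ∀ i j, 0 ≤ B i j) : ∀ (k : ℕ) (i : Fin n), 0 ≤ ((B ^ k) *ᵥ fun _ => (1:ℝ)) i := by
  intro k
  induction k with
  | zero => intro i; simp [one_mulVec]
  | succ k ih =>
    intro i
    rw [u_succ]
    exact Finset.sum_nonneg fun j _ => mul_nonneg (hBnn i j) (ih j)

private lemma u_le_one {n : ℕ} {B : Matrix (Fin n) (Fin n) ℝ}
    (hBnn : ∀ i j, 0 ≤ B i j) (hrow : ∀ i, ∑ j, B i j ≤ 1) :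
    ∀ (k : ℕ) (i : Fin n), ((B ^ k) *ᵥ fun _ => (1:ℝ)) i ≤ 1 := by
  intro k
  induction k with
  | zero => intro i; simp [one_mulVec]
  | succ k ih =>
    intro i
    rw [u_succ]
    calc ∑ j, B i j * ((B ^ k) *ᵥ fun _ => (1:ℝ)) j ≤ ∑ j, B i j * 1 :=
          Finset.sum_le_sum fun j _ => mul_le_mul_of_nonneg_left (ih j) (hBnn i j)
      _ ≤ 1 := by simpa using hrow i

private lemma u_anti {n : ℕ} {B : Matrix (Fin n) (Fin n) ℝ}
    (hBnn : ∀ i j, 0 ≤ B i j) (hrow : ∀ i, ∑ j, B i j ≤ 1) :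
    ∀ {k l : ℕ}, k ≤ l → ∀ i, ((B ^ l) *ᵥ fun _ => (1:ℝ)) i ≤ ((B ^ k) *ᵥ fun _ => (1:ℝ)) i := by
  have step : ∀ (k : ℕ) (i : Fin n),
      ((B ^ (k+1)) *ᵥ fun _ => (1:ℝ)) i ≤ ((B ^ k) *ᵥ fun _ => (1:ℝ)) i := by
    intro k
    induction k with
    | zero => intro i; simpa [one_mulVec] using u_le_one hBnn hrow 1 i
    | succ k ih =>
      intro i
      rw [u_succ, u_succ]
      exact Finset.sum_le_sum fun j _ => mul_le_mul_of_nonneg_left (ih j) (hBnn i j)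
  intro k l hkl
  induction l, hkl using Nat.le_induction with
  | base => intro i; exact le_rfl
  | succ l hl ih => intro i; exact (step l i).trans (ih i)

private lemma u_step_lt {n : ℕ} {B : Matrix (Fin n) (Fin n) ℝ}
    (hBnn : ∀ i j, 0 ≤ B i j) (hrow : ∀ i, ∑ j, B i j ≤ 1)
    {k : ℕ} {a b : Fin n} (hab : 0 < B a b)
    (hb : ((B ^ k) *ᵥ fun _ => (1:ℝ)) b < 1) :
    ((B ^ (k+1)) *ᵥ fun _ => (1:ℝ)) a < 1 := by
  rw [u_succ]
  calc ∑ j, B a j * ((B ^ k) *ᵥ fun _ => (1:ℝ)) j < ∑ j, B a j * 1 := by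
        refine Finset.sum_lt_sum
          (fun j _ => mul_le_mul_of_nonneg_left (u_le_one hBnn hrow k j) (hBnn a j))
          ⟨b, Finset.mem_univ b, ?_⟩
        exact mul_lt_mul_of_pos_left hb hab
    _ ≤ 1 := by simpa using hrow a

private lemma exists_weight {n : ℕ} (hn : 0 < n) (B : Matrix (Fin n) (Fin n) ℝ)
    (hBnn : ∀ i j, 0 ≤ B i j) (hrow : ∀ i, ∑ j, B i j ≤ 1)
    (hkey : ∀ i, ∃ m, ((B ^ m) *ᵥ fun _ => (1:ℝ)) i < 1) :
    ∃ (h : Fin n → ℝ) (δ : ℝ), (∀ i, 1 ≤ h i) ∧ 0 < δ ∧ δ ≤ 1 ∧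
      ∀ i, (B *ᵥ h) i ≤ h i - δ := by
  haveI : Nonempty (Fin n) := ⟨⟨0, hn⟩⟩
  choose m hm using hkey
  set N := Finset.univ.sup m with hN
  have huN : ∀ i, ((B ^ (N+1)) *ᵥ fun _ => (1:ℝ)) i < 1 := by
    intro i
    have h1 : m i ≤ N + 1 := le_trans (Finset.le_sup (Finset.mem_univ i)) (Nat.le_succ N)
    exact lt_of_le_of_lt (u_anti hBnn hrow h1 i) (hm i)
  set h : Fin n → ℝ := fun i => ∑ k ∈ Finset.range (N+1), ((B ^ k) *ᵥ fun _ => (1:ℝ)) i with hh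
  have hh1 : ∀ i, 1 ≤ h i := by
    intro i
    have := Finset.single_le_sum (f := fun k => ((B ^ k) *ᵥ fun _ => (1:ℝ)) i)
      (fun k _ => u_nonneg hBnn k i) (Finset.mem_range.mpr (Nat.succ_pos N))
    simpa [one_mulVec] using this
  have hBh : ∀ i, (B *ᵥ h) i = h i - 1 + ((B ^ (N+1)) *ᵥ fun _ => (1:ℝ)) i := by
    intro i
    have e1 : (B *ᵥ h) i = ∑ k ∈ Finset.range (N+1), ((B ^ (k+1)) *ᵥ fun _ => (1:ℝ)) i := by
      rw [mulVec_apply']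
      simp only [hh, Finset.mul_sum]
      rw [Finset.sum_comm]
      exact Finset.sum_congr rfl fun k _ => (u_succ B k i).symm
    have e2 : ∑ k ∈ Finset.range (N+2), ((B ^ k) *ᵥ fun _ => (1:ℝ)) i
        = (∑ k ∈ Finset.range (N+1), ((B ^ (k+1)) *ᵥ fun _ => (1:ℝ)) i)
          + ((B ^ 0) *ᵥ fun _ => (1:ℝ)) i :=
      Finset.sum_range_succ' _ (N+1)
    have e3 : ∑ k ∈ Finset.range (N+2), ((B ^ k) *ᵥ fun _ => (1:ℝ)) i
        = h i + ((B ^ (N+1)) *ᵥ fun _ => (1:ℝ)) i := by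
      rw [Finset.sum_range_succ]
    have e4 : ((B ^ 0) *ᵥ fun _ => (1:ℝ)) i = 1 := by simp [one_mulVec]
    rw [e1]; rw [e3, e4] at e2; linarith
  have hne : (Finset.univ : Finset (Fin n)).Nonempty := Finset.univ_nonempty
  set δ : ℝ := Finset.univ.inf' hne (fun i => 1 - ((B ^ (N+1)) *ᵥ fun _ => (1:ℝ)) i) with hδ
  refine ⟨h, δ, hh1, ?_, ?_, ?_⟩
  · rw [hδ, Finset.lt_inf'_iff]
    intro i _
    have := huN i; linarith
  · obtain ⟨i⟩ := ‹Nonempty (Fin n)›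
    have h1 : δ ≤ 1 - ((B ^ (N+1)) *ᵥ fun _ => (1:ℝ)) i := Finset.inf'_le _ (Finset.mem_univ i)
    have := u_nonneg hBnn (N+1) i; linarith
  · intro i
    have h1 : δ ≤ 1 - ((B ^ (N+1)) *ᵥ fun _ => (1:ℝ)) i := Finset.inf'_le _ (Finset.mem_univ i)
    rw [hBh i]; linarith

set_option maxHeartbeats 1000000 in
/-- Under reachability of every non-stubborn agent from a stubborn agent and
divergence of `∑ₛ minᵢ ωᵢ(s)`, the matrix `G` is invertible and the dynamics
`x(t+1) = (I + Ω(t)A) x(t)` drive the non-stubborn subvector to `-G⁻¹ F x_{V₀}(0)`. -/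
theorem opinion_mean_convergence
    (n₀ n₁ : ℕ) (hn₀ : 0 < n₀) (hn₁ : 0 < n₁)
    (A : Matrix (Fin n₀ ⊕ Fin n₁) (Fin n₀ ⊕ Fin n₁) ℝ)
    (hrow0 : ∀ (i : Fin n₀) (j : Fin n₀ ⊕ Fin n₁), A (Sum.inl i) j = 0)
    (hoff : ∀ i j, i ≠ j → 0 ≤ A i j)
    (hdiag : ∀ i, A i i ∈ Set.Icc (-1 : ℝ) 0)
    (hrowsum : ∀ i : Fin n₁, ∑ j, A (Sum.inr i) j = 0)
    (hreach : ∀ i : Fin n₁, ∃ (m : ℕ) (path : Fin (m + 1) → Fin n₀ ⊕ Fin n₁),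
      1 ≤ m ∧ (∃ k : Fin n₀, path 0 = Sum.inl k) ∧ path (Fin.last m) = Sum.inr i ∧
      ∀ l : Fin m, 0 < A (path l.succ) (path l.castSucc))
    (w : ℕ → Fin n₁ → ℝ) (hw : ∀ t i, w t i ∈ Set.Icc (0 : ℝ) 1)
    (hdiv : Tendsto (fun T => ∑ s ∈ Finset.range T, ⨅ i, w s i) atTop atTop) :
    IsUnit (A.toBlocks₂₂).det ∧
    ∀ x : ℕ → (Fin n₀ ⊕ Fin n₁) → ℝ,
      (∀ t, x (t + 1) = (1 + Matrix.diagonal (Sum.elim 0 (w t)) * A) *ᵥ x t) →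
      Tendsto (fun t => fun i : Fin n₁ => x t (Sum.inr i)) atTop
        (𝓝 ((-((A.toBlocks₂₂)⁻¹ * A.toBlocks₂₁)) *ᵥ fun k => x 0 (Sum.inl k))) := by
  haveI : Nonempty (Fin n₁) := ⟨⟨0, hn₁⟩⟩
  set G := A.toBlocks₂₂ with hGdef
  set F := A.toBlocks₂₁ with hFdef
  have hGa : ∀ i j, G i j = A (Sum.inr i) (Sum.inr j) := fun _ _ => rfl
  have hFa : ∀ i k, F i k = A (Sum.inr i) (Sum.inl k) := fun _ _ => rfl
  set B : Matrix (Fin n₁) (Fin n₁) ℝ := 1 + G with hBdef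
  have hBa : ∀ i j, B i j = (if i = j then (1:ℝ) else 0) + A (Sum.inr i) (Sum.inr j) := by
    intro i j
    rw [hBdef]
    simp [Matrix.add_apply, Matrix.one_apply, hGa]
  have hBnn : ∀ i j, 0 ≤ B i j := by
    intro i j
    rw [hBa]
    by_cases hij : i = j
    · subst hij
      rw [if_pos rfl]
      have := (hdiag (Sum.inr i)).1
      linarith
    · simp only [if_neg hij]
      have : Sum.inr (β := Fin n₁) (α := Fin n₀) i ≠ Sum.inr j := by
        simp [hij]
      have := hoff _ _ this
      linarith
  have hrowB : ∀ i, ∑ j, B i j = 1 - ∑ k, A (Sum.inr i) (Sum.inl k) := by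
    intro i
    have hs := hrowsum i
    rw [Fintype.sum_sum_type] at hs
    have : ∑ j, B i j = (∑ j, (if i = j then (1:ℝ) else 0)) + ∑ j, A (Sum.inr i) (Sum.inr j) := by
      rw [← Finset.sum_add_distrib]
      exact Finset.sum_congr rfl fun j _ => hBa i j
    rw [this]
    simp only [Finset.sum_ite_eq, Finset.mem_univ, if_pos]
    linarith
  have hrowB' : ∀ i, ∑ j, B i j ≤ 1 := by
    intro i
    rw [hrowB]
    have : 0 ≤ ∑ k, A (Sum.inr i) (Sum.inl k) :=
      Finset.sum_nonneg fun k _ => hoff _ _ (by simp)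
    linarith
  -- key: reachability gives deficiency
  have hkey : ∀ i : Fin n₁, ∃ m, ((B ^ m) *ᵥ fun _ => (1:ℝ)) i < 1 := by
    intro i
    obtain ⟨m, path, hm1, ⟨k₀, hp0⟩, hplast, hedge⟩ := hreach i
    have hnotinl : ∀ (l : ℕ) (hl : l < m) (c : Fin n₀),
        path ⟨l+1, by omega⟩ ≠ Sum.inl c := by
      intro l hl c hc
      have hpos : 0 < A (path ⟨l+1, by omega⟩) (path ⟨l, by omega⟩) := hedge ⟨l, hl⟩
      rw [hc, hrow0] at hpos
      exact lt_irrefl _ hpos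
    have hb1 : ∀ (j : Fin n₁) (k : Fin n₀), 0 < A (Sum.inr j) (Sum.inl k) →
        ((B ^ 1) *ᵥ fun _ => (1:ℝ)) j < 1 := by
      intro j k hpos
      have : ((B ^ 1) *ᵥ fun _ => (1:ℝ)) j = ∑ j', B j j' := by
        rw [pow_one, mulVec_apply']; simp
      rw [this, hrowB]
      have hk : A (Sum.inr j) (Sum.inl k) ≤ ∑ k', A (Sum.inr j) (Sum.inl k') :=
        Finset.single_le_sum (fun k' _ => hoff _ _ (by simp)) (Finset.mem_univ k)
      linarith
    have main : ∀ l, 1 ≤ l → ∀ hlm : l ≤ m, ∃ j, path ⟨l, by omega⟩ = Sum.inr j ∧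
        ((B ^ l) *ᵥ fun _ => (1:ℝ)) j < 1 := by
      intro l hl1
      induction l, hl1 using Nat.le_induction with
      | base =>
        intro hm'
        have hpos : 0 < A (path ⟨1, by omega⟩) (path ⟨0, by omega⟩) := hedge ⟨0, by omega⟩
        have h0 : (⟨0, by omega⟩ : Fin (m+1)) = 0 := by ext; simp
        rw [h0, hp0] at hpos
        rcases hq : path ⟨1, by omega⟩ with c | j₁
        · exact absurd hq (hnotinl 0 (by omega) c)
        · rw [hq] at hpos
          exact ⟨j₁, rfl, hb1 j₁ k₀ hpos⟩
      | succ l hl ih =>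
        intro hlm
        obtain ⟨jl, hpl, hul⟩ := ih (by omega)
        have hpos : 0 < A (path ⟨l+1, by omega⟩) (path ⟨l, by omega⟩) := hedge ⟨l, by omega⟩
        rw [hpl] at hpos
        rcases hq : path ⟨l+1, by omega⟩ with c | j'
        · exact absurd hq (hnotinl l (by omega) c)
        · rw [hq] at hpos
          have hne : j' ≠ jl := by
            intro he
            subst he
            have := (hdiag (Sum.inr j')).2
            linarith
          have hBpos : 0 < B j' jl := by
            rw [hBa, if_neg hne]
            linarith
          exact ⟨j', rfl, u_step_lt hBnn hrowB' hBpos hul⟩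
    obtain ⟨j, hpj, huj⟩ := main m hm1 le_rfl
    have : path (⟨m, by omega⟩ : Fin (m+1)) = Sum.inr i := hplast
    rw [this] at hpj
    obtain rfl : j = i := by injection hpj.symm
    exact ⟨m, huj⟩
  obtain ⟨h, δ, hh1, hδ0, hδ1, hBh⟩ := exists_weight hn₁ B hBnn hrowB' hkey
  have hhpos : ∀ i, 0 < h i := fun i => lt_of_lt_of_le one_pos (hh1 i)
  have hGh : ∀ i, (G *ᵥ h) i ≤ -δ := by
    intro i
    have he : (B *ᵥ h) i = h i + (G *ᵥ h) i := by
      rw [hBdef, add_mulVec, one_mulVec]; rfl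
    have h2 := hBh i
    rw [he] at h2; linarith
  have hne : (Finset.univ : Finset (Fin n₁)).Nonempty := Finset.univ_nonempty
  -- invertibility of G
  have hGdet : IsUnit G.det := by
    rw [← Matrix.isUnit_iff_isUnit_det, ← Matrix.mulVec_injective_iff_isUnit]
    intro v1 v2 heq
    have hv0 : G *ᵥ (v1 - v2) = 0 := by rw [Matrix.mulVec_sub, heq, sub_self]
    set v := v1 - v2 with hv
    have hBv : ∀ i, (B *ᵥ v) i = v i := by
      intro i
      rw [hBdef, add_mulVec, one_mulVec]
      show v i + (G *ᵥ v) i = v i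
      rw [hv0]; simp
    set c := Finset.univ.sup' hne (fun i => |v i| / h i) with hc
    have hvc : ∀ i, |v i| ≤ c * h i := by
      intro i
      have h1 : |v i| / h i ≤ c := by
        rw [hc]; exact Finset.le_sup' (fun i => |v i| / h i) (Finset.mem_univ i)
      exact (div_le_iff₀ (hhpos i)).mp h1
    have hveq0 : v = 0 := by
      rcases le_or_gt c 0 with hc0 | hc0
      · funext i
        have h1 := hvc i
        have h2 : c * h i ≤ 0 := by nlinarith [hhpos i]
        simpa using abs_nonpos_iff.mp (h1.trans h2)
      · exfalso
        obtain ⟨i₀, -, hi₀⟩ := Finset.exists_mem_eq_sup' hne (fun i => |v i| / h i)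
        have heq0 : |v i₀| = c * h i₀ := by
          have h1 : c = |v i₀| / h i₀ := by rw [hc, hi₀]
          rw [h1, div_mul_cancel₀ _ (ne_of_gt (hhpos i₀))]
        have h2 : |v i₀| ≤ ∑ j, B i₀ j * |v j| := by
          conv_lhs => rw [← hBv i₀]
          rw [mulVec_apply']
          refine (Finset.abs_sum_le_sum_abs _ _).trans ?_
          exact Finset.sum_le_sum fun j _ => by
            rw [abs_mul, abs_of_nonneg (hBnn i₀ j)]
        have h3 : ∑ j, B i₀ j * |v j| ≤ ∑ j, B i₀ j * (c * h j) :=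
          Finset.sum_le_sum fun j _ => mul_le_mul_of_nonneg_left (hvc j) (hBnn i₀ j)
        have h4 : ∑ j, B i₀ j * (c * h j) = c * (B *ᵥ h) i₀ := by
          rw [mulVec_apply', Finset.mul_sum]
          exact Finset.sum_congr rfl fun j _ => by ring
        have h5 := hBh i₀
        nlinarith [hhpos i₀]
    exact sub_eq_zero.mp hveq0
  refine ⟨hGdet, ?_⟩
  intro x hx
  set x₀ : Fin n₀ → ℝ := fun k => x 0 (Sum.inl k) with hx₀
  -- stubborn agents are constant
  have hstub : ∀ t k, x t (Sum.inl k) = x 0 (Sum.inl k) := by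
    intro t
    induction t with
    | zero => intro k; rfl
    | succ t ih =>
      intro k
      rw [hx t]
      rw [add_mulVec, one_mulVec, ← mulVec_mulVec]
      show x t (Sum.inl k) + (Matrix.diagonal (Sum.elim 0 (w t)) *ᵥ (A *ᵥ x t)) (Sum.inl k)
        = x 0 (Sum.inl k)
      rw [mulVec_diagonal]
      simp [ih k]
  -- recurrence for non-stubborn agents
  have hyrec : ∀ t i, x (t+1) (Sum.inr i) = x t (Sum.inr i)
      + w t i * ((∑ k, A (Sum.inr i) (Sum.inl k) * x 0 (Sum.inl k))
        + ∑ j, A (Sum.inr i) (Sum.inr j) * x t (Sum.inr j)) := by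
    intro t i
    rw [hx t]
    rw [add_mulVec, one_mulVec, ← mulVec_mulVec]
    show x t (Sum.inr i) + (Matrix.diagonal (Sum.elim 0 (w t)) *ᵥ (A *ᵥ x t)) (Sum.inr i) = _
    rw [mulVec_diagonal]
    have : (A *ᵥ x t) (Sum.inr i) = (∑ k, A (Sum.inr i) (Sum.inl k) * x 0 (Sum.inl k))
        + ∑ j, A (Sum.inr i) (Sum.inr j) * x t (Sum.inr j) := by
      show ∑ j, A (Sum.inr i) j * x t j = _
      rw [Fintype.sum_sum_type]
      congr 1
      exact Finset.sum_congr rfl fun k _ => by rw [hstub t k]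
    rw [this]
    rfl
  set ystar : Fin n₁ → ℝ := (-(G⁻¹ * F)) *ᵥ x₀ with hystar
  have hfix : ∀ i, (∑ k, A (Sum.inr i) (Sum.inl k) * x 0 (Sum.inl k)) + (G *ᵥ ystar) i = 0 := by
    intro i
    have h1 : G *ᵥ ystar = -(F *ᵥ x₀) := by
      rw [hystar, mulVec_mulVec, Matrix.mul_neg, Matrix.mul_nonsing_inv_cancel_left _ _ hGdet,
        neg_mulVec]
    have h2 : (F *ᵥ x₀) i = ∑ k, A (Sum.inr i) (Sum.inl k) * x 0 (Sum.inl k) := by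
      show ∑ k, F i k * x₀ k = _
      refine Finset.sum_congr rfl fun k _ => ?_
      simp only [hFa, hx₀]
    rw [h1]
    simp [h2]
  set e : ℕ → Fin n₁ → ℝ := fun t i => x t (Sum.inr i) - ystar i with he
  have hGe : ∀ t i, (G *ᵥ e t) i = (∑ k, A (Sum.inr i) (Sum.inl k) * x 0 (Sum.inl k))
      + ∑ j, A (Sum.inr i) (Sum.inr j) * x t (Sum.inr j) := by
    intro t i
    have h1 : (G *ᵥ e t) i = (∑ j, G i j * x t (Sum.inr j)) - (G *ᵥ ystar) i := by
      rw [mulVec_apply']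
      simp only [he, mul_sub]
      rw [Finset.sum_sub_distrib]
      rfl
    rw [h1]
    have h2 := hfix i
    have h3 : ∀ j, G i j = A (Sum.inr i) (Sum.inr j) := hGa i
    simp only [h3]
    linarith
  have herec : ∀ t i, e (t+1) i = e t i + w t i * (G *ᵥ e t) i := by
    intro t i
    simp only [he]
    rw [hyrec t i, hGe t i]
    ring
  -- contraction machinery
  set H : ℝ := Finset.univ.sup' hne h with hH
  have hhH : ∀ i, h i ≤ H := fun i => Finset.le_sup' _ (Finset.mem_univ i)
  have hH1 : (1:ℝ) ≤ H := le_trans (hh1 (Classical.arbitrary _)) (hhH _)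
  have hHpos : (0:ℝ) < H := lt_of_lt_of_le one_pos hH1
  set mw : ℕ → ℝ := fun s => ⨅ i, w s i with hmw
  have hmw0 : ∀ s, 0 ≤ mw s := fun s => Real.iInf_nonneg fun i => (hw s i).1
  have hmwle : ∀ s i, mw s ≤ w s i := fun s i => ciInf_le (Finite.bddBelow_range _) i
  have hmw1 : ∀ s, mw s ≤ 1 := fun s =>
    le_trans (hmwle s (Classical.arbitrary _)) (hw s (Classical.arbitrary _)).2
  set q : ℕ → ℝ := fun s => 1 - δ * mw s / H with hq
  have hq0 : ∀ s, 0 ≤ q s := by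
    intro s
    have h1 : δ * mw s ≤ 1 := by nlinarith [hmw0 s, hmw1 s]
    have h2 : δ * mw s / H ≤ 1 := by
      rw [div_le_one hHpos]; linarith
    simp only [hq]; linarith
  have hq1 : ∀ s, q s ≤ 1 := by
    intro s
    have h1 : 0 ≤ δ * mw s / H := div_nonneg (mul_nonneg hδ0.le (hmw0 s)) hHpos.le
    simp only [hq]; linarith
  set c : ℕ → ℝ := fun t => Finset.univ.sup' hne (fun i => |e t i| / h i) with hc
  have hce : ∀ t i, |e t i| ≤ c t * h i := by
    intro t i
    have h1 : |e t i| / h i ≤ c t := by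
      rw [hc]; exact Finset.le_sup' (fun i => |e t i| / h i) (Finset.mem_univ i)
    exact (div_le_iff₀ (hhpos i)).mp h1
  have hcnn : ∀ t, 0 ≤ c t := by
    intro t
    have i : Fin n₁ := Classical.arbitrary _
    have h1 : |e t i| / h i ≤ c t := by
      rw [hc]; exact Finset.le_sup' (fun i => |e t i| / h i) (Finset.mem_univ i)
    exact le_trans (div_nonneg (abs_nonneg _) (hhpos i).le) h1
  have hstepc : ∀ t, c (t+1) ≤ q t * c t := by
    intro t
    apply Finset.sup'_le
    intro i _
    rw [div_le_iff₀ (hhpos i)]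
    set P : Fin n₁ → ℝ := fun j => (if i = j then (1:ℝ) else 0) + w t i * G i j with hP
    have hPe : e (t+1) i = ∑ j, P j * e t j := by
      rw [herec t i]
      simp only [hP, add_mul, ite_mul, one_mul, zero_mul]
      rw [Finset.sum_add_distrib, Finset.sum_ite_eq]
      simp only [Finset.mem_univ, if_pos]
      rw [mulVec_apply', Finset.mul_sum]
      congr 1
      exact Finset.sum_congr rfl fun j _ => by ring
    have hPnn : ∀ j, 0 ≤ P j := by
      intro j
      by_cases hij : i = j
      · subst hij
        have h1 := (hdiag (Sum.inr i)).1
        have h2 := hw t i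
        have h4 : w t i * -1 ≤ w t i * A (Sum.inr i) (Sum.inr i) :=
          mul_le_mul_of_nonneg_left h1 h2.1
        show (0:ℝ) ≤ (if i = i then (1:ℝ) else 0) + w t i * G i i
        rw [if_pos rfl, hGa]
        nlinarith [h2.2]
      · simp only [hP, if_neg hij]
        have hne' : Sum.inr (α := Fin n₀) i ≠ Sum.inr j := fun hcon => hij (by injection hcon)
        have h4 := hoff _ _ hne'
        rw [hGa]
        nlinarith [(hw t i).1]
    have hPh : ∑ j, P j * h j ≤ q t * h i := by
      have e1 : ∑ j, P j * h j = h i + w t i * (G *ᵥ h) i := by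
        simp only [hP, add_mul, ite_mul, one_mul, zero_mul]
        rw [Finset.sum_add_distrib, Finset.sum_ite_eq]
        simp only [Finset.mem_univ, if_pos]
        rw [mulVec_apply', Finset.mul_sum]
        congr 1
        exact Finset.sum_congr rfl fun j _ => by ring
      rw [e1]
      have e2 : w t i * (G *ᵥ h) i ≤ w t i * (-δ) := mul_le_mul_of_nonneg_left (hGh i) (hw t i).1
      have e3 : mw t ≤ w t i := hmwle t i
      have e4 : (δ * mw t / H) * h i ≤ δ * mw t := by
        have e5 : (δ * mw t / H) * h i ≤ (δ * mw t / H) * H :=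
          mul_le_mul_of_nonneg_left (hhH i) (div_nonneg (mul_nonneg hδ0.le (hmw0 t)) hHpos.le)
        rwa [div_mul_cancel₀ _ (ne_of_gt hHpos)] at e5
      have e6 : w t i * (-δ) ≤ mw t * (-δ) := by nlinarith
      simp only [hq]
      nlinarith
    calc |e (t+1) i| ≤ ∑ j, P j * |e t j| := by
          rw [hPe]
          refine (Finset.abs_sum_le_sum_abs _ _).trans ?_
          exact Finset.sum_le_sum fun j _ => by rw [abs_mul, abs_of_nonneg (hPnn j)]
      _ ≤ ∑ j, P j * (c t * h j) :=
          Finset.sum_le_sum fun j _ => mul_le_mul_of_nonneg_left (hce t j) (hPnn j)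
      _ = c t * ∑ j, P j * h j := by
          rw [Finset.mul_sum]; exact Finset.sum_congr rfl fun j _ => by ring
      _ ≤ c t * (q t * h i) := mul_le_mul_of_nonneg_left hPh (hcnn t)
      _ = q t * c t * h i := by ring
  have hcb : ∀ T, c T ≤ c 0 * ∏ s ∈ Finset.range T, q s := by
    intro T
    induction T with
    | zero => simp
    | succ T ih =>
      rw [Finset.prod_range_succ]
      calc c (T+1) ≤ q T * c T := hstepc T
        _ ≤ q T * (c 0 * ∏ s ∈ Finset.range T, q s) := mul_le_mul_of_nonneg_left ih (hq0 T)
        _ = c 0 * ((∏ s ∈ Finset.range T, q s) * q T) := by ring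
  have hprodle : ∀ T, ∏ s ∈ Finset.range T, q s
      ≤ Real.exp (-(δ/H) * ∑ s ∈ Finset.range T, mw s) := by
    intro T
    have e0 : Real.exp (-(δ/H) * ∑ s ∈ Finset.range T, mw s)
        = ∏ s ∈ Finset.range T, Real.exp (-(δ/H) * mw s) := by
      rw [Finset.mul_sum, Real.exp_sum]
    rw [e0]
    refine Finset.prod_le_prod (fun s _ => hq0 s) fun s _ => ?_
    have h1 := Real.add_one_le_exp (-(δ/H) * mw s)
    have h2 : δ * mw s / H = (δ/H) * mw s := by ring
    simp only [hq]
    linarith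
  have hexp0 : Tendsto (fun T => c 0 * Real.exp (-(δ/H) * ∑ s ∈ Finset.range T, mw s))
      atTop (𝓝 0) := by
    have h1 : Tendsto (fun T => -(δ/H) * ∑ s ∈ Finset.range T, mw s) atTop atBot := by
      have hdiv' : Tendsto (fun T => ∑ s ∈ Finset.range T, mw s) atTop atTop := hdiv
      refine Tendsto.const_mul_atTop_of_neg ?_ hdiv'
      have : 0 < δ / H := div_pos hδ0 hHpos
      linarith
    have h2 := Real.tendsto_exp_atBot.comp h1
    have h3 := h2.const_mul (c 0)
    simpa using h3
  have hc0 : Tendsto c atTop (𝓝 0) :=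
    squeeze_zero hcnn
      (fun T => (hcb T).trans (mul_le_mul_of_nonneg_left (hprodle T) (hcnn 0))) hexp0
  rw [tendsto_pi_nhds]
  intro i
  have he0 : Tendsto (fun t => e t i) atTop (𝓝 0) := by
    apply squeeze_zero_norm (a := fun t => c t * h i)
    · intro t; simpa using hce t i
    · have := hc0.mul_const (h i); simpa using this
  have hfin := he0.add (tendsto_const_nhds (x := ystar i))
  simp only [zero_add] at hfin
  have : (fun t => e t i + ystar i) = fun t => x t (Sum.inr i) := by
    funext t; simp [he]
  rwa [this] at hfin
end

section
/- Suppose every non-stubborn agent is reachable from a stubborn agent and the series ∑_{s=0}^∞ min_{i∈V₁} ω_i(s) diverges. Define G'(−1) = I and G'(t) = (I + Ω₁(t)G)·G'(t−1) for t ≥ 0, where Ω₁(t) is the n₁×n₁ diagonal block of Ω(t) indexed by V₁. Then G'(t) → 0 (entrywise) as t → ∞. -/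
open Matrix Filter Topology

private lemma mulVec_mono' {n : ℕ} {M : Matrix (Fin n) (Fin n) ℝ} (hM : ∀ i j, 0 ≤ M i j)
    {x y : Fin n → ℝ} (h : ∀ j, x j ≤ y j) (i : Fin n) : (M *ᵥ x) i ≤ (M *ᵥ y) i := by
  simp only [Matrix.mulVec, dotProduct]
  exact Finset.sum_le_sum fun j _ => mul_le_mul_of_nonneg_left (h j) (hM i j)

/-- Under reachability and divergence of `∑ₛ minᵢ ωᵢ(s)`, the products
`G'(t) = (I + Ω₁(t)G)⋯(I + Ω₁(0)G)` tend to the zero matrix. -/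
theorem Gprime_tendsto_zero
    (n₀ n₁ : ℕ) (hn₀ : 0 < n₀) (hn₁ : 0 < n₁)
    (A : Matrix (Fin n₀ ⊕ Fin n₁) (Fin n₀ ⊕ Fin n₁) ℝ)
    (hrow0 : ∀ (i : Fin n₀) (j : Fin n₀ ⊕ Fin n₁), A (Sum.inl i) j = 0)
    (hoff : ∀ i j, i ≠ j → 0 ≤ A i j)
    (hdiag : ∀ i, A i i ∈ Set.Icc (-1 : ℝ) 0)
    (hrowsum : ∀ i : Fin n₁, ∑ j, A (Sum.inr i) j = 0)
    (hreach : ∀ i : Fin n₁, ∃ (m : ℕ) (path : Fin (m + 1) → Fin n₀ ⊕ Fin n₁),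
      1 ≤ m ∧ (∃ k : Fin n₀, path 0 = Sum.inl k) ∧ path (Fin.last m) = Sum.inr i ∧
      ∀ l : Fin m, 0 < A (path l.succ) (path l.castSucc))
    (w : ℕ → Fin n₁ → ℝ) (hw : ∀ t i, w t i ∈ Set.Icc (0 : ℝ) 1)
    (hdiv : Tendsto (fun T => ∑ s ∈ Finset.range T, ⨅ i, w s i) atTop atTop)
    (G' : ℕ → Matrix (Fin n₁) (Fin n₁) ℝ)
    (hG0 : G' 0 = (1 + Matrix.diagonal (w 0) * A.toBlocks₂₂) * 1)
    (hGrec : ∀ t, G' (t + 1) = (1 + Matrix.diagonal (w (t + 1)) * A.toBlocks₂₂) * G' t) :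
    Tendsto G' atTop (𝓝 0) := by
  classical
  set Gm := A.toBlocks₂₂ with hGmdef
  set P : Matrix (Fin n₁) (Fin n₁) ℝ := 1 + Gm with hPdef
  have hGm_apply : ∀ i j, Gm i j = A (Sum.inr i) (Sum.inr j) := fun i j => rfl
  have hGdiag : ∀ i, Gm i i ∈ Set.Icc (-1 : ℝ) 0 := fun i => hdiag _
  have hGoff : ∀ i j, i ≠ j → 0 ≤ Gm i j := fun i j hij =>
    hoff _ _ (by simpa using hij)
  have i₀ : Fin n₁ := ⟨0, hn₁⟩
  have hPapply : ∀ i j, P i j = (if i = j then (1:ℝ) else 0) + Gm i j := by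
    intro i j
    simp [hPdef, Matrix.add_apply, Matrix.one_apply]
  have hPnn : ∀ i j, 0 ≤ P i j := by
    intro i j
    rcases eq_or_ne i j with rfl | hij
    · rw [hPapply]; have := (hGdiag i).1; simp; linarith
    · rw [hPapply]; simp [hij]; exact hGoff i j hij
  -- row deficits
  set f : Fin n₁ → ℝ := fun i => ∑ j, A (Sum.inr i) (Sum.inl j) with hfdef
  have hf_nn : ∀ i, 0 ≤ f i :=
    fun i => Finset.sum_nonneg fun j _ => hoff _ _ (by simp)
  have hProw : ∀ i, ∑ j, P i j = 1 - f i := by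
    intro i
    have hsplit := hrowsum i
    rw [Fintype.sum_sum_type] at hsplit
    have h1 : ∑ j, P i j = (∑ j, (if i = j then (1:ℝ) else 0)) + ∑ j, Gm i j := by
      rw [← Finset.sum_add_distrib]
      exact Finset.sum_congr rfl fun j _ => hPapply i j
    rw [h1]
    simp only [Finset.sum_ite_eq, Finset.mem_univ, if_true]
    have : ∑ j, Gm i j = ∑ j, A (Sum.inr i) (Sum.inr j) := rfl
    rw [this]
    linarith [hsplit]
  -- the iterates u k = P^k 1
  set u : ℕ → Fin n₁ → ℝ := fun k => (P ^ k) *ᵥ (fun _ => (1:ℝ)) with hudef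
  have hu0 : ∀ i, u 0 i = 1 := by intro i; simp [hudef]
  have husucc : ∀ k, u (k + 1) = P *ᵥ u k := by
    intro k
    show (P ^ (k+1)) *ᵥ _ = P *ᵥ ((P ^ k) *ᵥ _)
    rw [Matrix.mulVec_mulVec, ← pow_succ']
  have husucc_apply : ∀ k i, u (k + 1) i = ∑ j, P i j * u k j := by
    intro k i
    rw [husucc]
    simp [Matrix.mulVec, dotProduct]
  have hu_nn : ∀ k i, 0 ≤ u k i := by
    intro k
    induction k with
    | zero => intro i; rw [hu0]; norm_num
    | succ k ih =>
      intro i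
      rw [husucc_apply]
      exact Finset.sum_nonneg fun j _ => mul_nonneg (hPnn i j) (ih j)
  have hu_le1 : ∀ k i, u k i ≤ 1 := by
    intro k
    induction k with
    | zero => intro i; rw [hu0]
    | succ k ih =>
      intro i
      rw [husucc_apply]
      calc ∑ j, P i j * u k j ≤ ∑ j, P i j :=
            Finset.sum_le_sum fun j _ => mul_le_of_le_one_right (hPnn i j) (ih j)
        _ = 1 - f i := hProw i
        _ ≤ 1 := by linarith [hf_nn i]
  have hu_succ_le : ∀ k i, u (k + 1) i ≤ u k i := by
    intro k
    induction k with
    | zero =>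
      intro i
      rw [husucc_apply]
      calc ∑ j, P i j * u 0 j ≤ ∑ j, P i j :=
            Finset.sum_le_sum fun j _ => mul_le_of_le_one_right (hPnn i j) (hu_le1 0 j)
        _ = 1 - f i := hProw i
        _ ≤ 1 := by linarith [hf_nn i]
        _ = u 0 i := (hu0 i).symm
    | succ k ih =>
      intro i
      rw [husucc_apply, husucc_apply k i]
      exact Finset.sum_le_sum fun j _ => mul_le_mul_of_nonneg_left (ih j) (hPnn i j)
  have hanti : ∀ i, Antitone fun k => u k i :=
    fun i => antitone_nat_of_succ_le fun k => hu_succ_le k i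
  -- a strict contraction step
  have hstep_lt : ∀ (i : Fin n₁) (x : Fin n₁ → ℝ) (j₀ : Fin n₁),
      (∀ j, x j ≤ 1) → 0 < P i j₀ → x j₀ < 1 → ∑ j, P i j * x j < 1 := by
    intro i x j₀ hx hpos hlt
    calc ∑ j, P i j * x j < ∑ j, P i j :=
          Finset.sum_lt_sum (fun j _ => mul_le_of_le_one_right (hPnn i j) (hx j))
            ⟨j₀, Finset.mem_univ _, by
              calc P i j₀ * x j₀ < P i j₀ * 1 := by
                    exact mul_lt_mul_of_pos_left hlt hpos
                _ = P i j₀ := mul_one _⟩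
      _ = 1 - f i := hProw i
      _ ≤ 1 := by linarith [hf_nn i]
  -- reachability gives strict decay at each coordinate
  have hstrict : ∀ i, ∃ M, u M i < 1 := by
    intro i
    obtain ⟨m, path, hm1, ⟨k, hk0⟩, hlast, hstep⟩ := hreach i
    have claim : ∀ l : ℕ, ∀ hl : l < m,
        ∃ q : Fin n₁, path ⟨l + 1, by omega⟩ = Sum.inr q ∧ u (l + 1) q < 1 := by
      intro l
      induction l with
      | zero =>
        intro hl
        have hs := hstep ⟨0, hl⟩
        have hc : (⟨0, hl⟩ : Fin m).castSucc = (0 : Fin (m + 1)) := by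
          ext; simp
        rw [hc, hk0] at hs
        have hsuccidx : (⟨0, hl⟩ : Fin m).succ = (⟨1, by omega⟩ : Fin (m+1)) := by
          ext; simp
        rw [hsuccidx] at hs
        obtain ⟨q, hq⟩ : ∃ q, path ⟨1, by omega⟩ = Sum.inr q := by
          rcases hpath : path ⟨1, by omega⟩ with a | q
          · rw [hpath, hrow0] at hs; exact absurd hs (lt_irrefl 0)
          · exact ⟨q, rfl⟩
        rw [hq] at hs
        refine ⟨q, hq, ?_⟩
        have hfq : 0 < f q :=
          lt_of_lt_of_le hs
            (Finset.single_le_sum (f := fun j => A (Sum.inr q) (Sum.inl j))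
              (fun j _ => hoff _ _ (by simp)) (Finset.mem_univ k))
        rw [husucc_apply]
        have h1 : ∑ j, P q j * u 0 j = ∑ j, P q j :=
          Finset.sum_congr rfl fun j _ => by rw [hu0, mul_one]
        rw [h1, hProw]
        linarith
      | succ l ih =>
        intro hl
        obtain ⟨q, hq, hqlt⟩ := ih (by omega)
        have hs := hstep ⟨l + 1, hl⟩
        have hc : (⟨l + 1, hl⟩ : Fin m).castSucc = (⟨l + 1, by omega⟩ : Fin (m+1)) := by
          ext; simp
        have hsuccidx : (⟨l + 1, hl⟩ : Fin m).succ = (⟨l + 2, by omega⟩ : Fin (m+1)) := by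
          ext; simp
        rw [hc, hq, hsuccidx] at hs
        obtain ⟨q', hq'⟩ : ∃ q', path ⟨l + 2, by omega⟩ = Sum.inr q' := by
          rcases hpath : path ⟨l + 2, by omega⟩ with a | q'
          · rw [hpath, hrow0] at hs; exact absurd hs (lt_irrefl 0)
          · exact ⟨q', rfl⟩
        rw [hq'] at hs
        refine ⟨q', hq', ?_⟩
        have hPpos : 0 < P q' q := by
          rcases eq_or_ne q' q with rfl | hne
          · exact absurd hs (not_lt.mpr (hdiag _).2)
          · rw [hPapply]; simp [hne]; exact hs
        rw [husucc_apply]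
        exact hstep_lt q' (u (l + 1)) q (fun j => hu_le1 _ j) hPpos hqlt
    obtain ⟨q, hq, hqlt⟩ := claim (m - 1) (by omega)
    have hlast' : path ⟨(m - 1) + 1, by omega⟩ = Sum.inr i := by
      rw [← hlast]; congr 1; ext; simp [Fin.last]; omega
    rw [hlast'] at hq
    obtain rfl : i = q := Sum.inr.inj hq
    exact ⟨m - 1 + 1, hqlt⟩
  -- uniform strict decay after M steps
  choose Mi hMi using hstrict
  set M : ℕ := 1 + Finset.univ.sup Mi with hMdef
  have hM1 : 0 < M := by omega
  have huM : ∀ i, u M i < 1 := fun i =>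
    lt_of_le_of_lt
      (hanti i (le_trans (Finset.le_sup (Finset.mem_univ i)) (Nat.le_add_left _ 1)))
      (hMi i)
  -- the Lyapunov vector
  set v : Fin n₁ → ℝ := fun i => ∑ k ∈ Finset.range M, u k i with hvdef
  have hv1 : ∀ i, 1 ≤ v i := by
    intro i
    have h : u 0 i ≤ v i := Finset.single_le_sum (f := fun k => u k i) (fun k _ => hu_nn k i)
      (Finset.mem_range.mpr hM1)
    rw [hu0 i] at h
    exact h
  have hGveq : ∀ i, (Gm *ᵥ v) i = u M i - 1 := by
    intro i
    have hPv : (P *ᵥ v) i = ∑ k ∈ Finset.range M, u (k + 1) i := by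
      show ∑ j, P i j * v j = _
      calc ∑ j, P i j * ∑ k ∈ Finset.range M, u k j
          = ∑ j, ∑ k ∈ Finset.range M, P i j * u k j := by
            exact Finset.sum_congr rfl fun j _ => Finset.mul_sum _ _ _
        _ = ∑ k ∈ Finset.range M, ∑ j, P i j * u k j := Finset.sum_comm
        _ = ∑ k ∈ Finset.range M, u (k + 1) i :=
            Finset.sum_congr rfl fun k _ => (husucc_apply k i).symm
    have htel : ∑ k ∈ Finset.range M, u (k + 1) i = v i - u 0 i + u M i := by
      have h1 : ∑ k ∈ Finset.range (M + 1), u k i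
          = ∑ k ∈ Finset.range M, u (k + 1) i + u 0 i := Finset.sum_range_succ' _ _
      have h2 : ∑ k ∈ Finset.range (M + 1), u k i
          = ∑ k ∈ Finset.range M, u k i + u M i := Finset.sum_range_succ _ _
      show _ = (∑ k ∈ Finset.range M, u k i) - u 0 i + u M i
      linarith
    have hP2 : (P *ᵥ v) i = v i + (Gm *ᵥ v) i := by
      rw [hPdef, Matrix.add_mulVec, Matrix.one_mulVec]
      simp
    rw [hPv, htel, hu0] at *
    linarith [hP2]
  have hunivne : (Finset.univ : Finset (Fin n₁)).Nonempty := ⟨i₀, Finset.mem_univ _⟩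
  set ε : ℝ := Finset.univ.inf' hunivne (fun i => 1 - u M i) with hεdef
  have hε_pos : 0 < ε := by
    rw [hεdef, Finset.lt_inf'_iff]
    intro i _
    linarith [huM i]
  have hε_le : ∀ i, ε ≤ 1 - u M i := fun i => Finset.inf'_le _ (Finset.mem_univ i)
  have hε1 : ε ≤ 1 := le_trans (hε_le i₀) (by linarith [hu_nn M i₀])
  set V : ℝ := Finset.univ.sup' hunivne v with hVdef
  have hvV : ∀ i, v i ≤ V := fun i => Finset.le_sup' v (Finset.mem_univ i)
  have hV1 : (1:ℝ) ≤ V := le_trans (hv1 i₀) (hvV i₀)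
  have hVpos : (0:ℝ) < V := by linarith
  have hGvε : ∀ i, (Gm *ᵥ v) i ≤ -ε := by
    intro i
    rw [hGveq i]
    linarith [hε_le i]
  -- the minima
  set ms : ℕ → ℝ := fun s => ⨅ i, w s i with hmsdef
  haveI : Nonempty (Fin n₁) := ⟨i₀⟩
  have hms_nn : ∀ s, 0 ≤ ms s := fun s => le_ciInf fun i => (hw s i).1
  have hms_le : ∀ s i, ms s ≤ w s i := fun s i =>
    ciInf_le (Set.Finite.bddBelow (Set.finite_range _)) i
  have hms1 : ∀ s, ms s ≤ 1 := fun s => le_trans (hms_le s i₀) (hw s i₀).2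
  -- contraction factors
  set ρ : ℕ → ℝ := fun s => 1 - ε * ms s / V with hρdef
  have hρ_nn : ∀ s, 0 ≤ ρ s := by
    intro s
    have h1 : ε * ms s ≤ 1 := mul_le_one₀ hε1 (hms_nn s) (hms1 s)
    have h2 : ε * ms s / V ≤ 1 := (div_le_one hVpos).mpr (le_trans h1 hV1)
    simp only [hρdef]
    linarith
  have hρ_le1 : ∀ s, ρ s ≤ 1 := by
    intro s
    have : 0 ≤ ε * ms s / V := div_nonneg (mul_nonneg hε_pos.le (hms_nn s)) hVpos.le
    simp only [hρdef]; linarith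
  have hρ_exp : ∀ s, ρ s ≤ Real.exp (-(ε * ms s / V)) := by
    intro s
    have := Real.add_one_le_exp (-(ε * ms s / V))
    simp only [hρdef]; linarith
  -- the update matrices
  set Mt : ℕ → Matrix (Fin n₁) (Fin n₁) ℝ :=
    fun t => 1 + Matrix.diagonal (w t) * Gm with hMtdef
  have hMt_apply : ∀ t i j,
      Mt t i j = (if i = j then (1:ℝ) else 0) + w t i * Gm i j := by
    intro t i j
    simp [hMtdef, Matrix.add_apply, Matrix.one_apply, Matrix.diagonal_mul]
  have hMt_nn : ∀ t i j, 0 ≤ Mt t i j := by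
    intro t i j
    rw [hMt_apply]
    rcases eq_or_ne i j with rfl | hij
    · simp
      nlinarith [(hw t i).1, (hw t i).2, (hGdiag i).1, (hGdiag i).2]
    · simp [hij]
      exact mul_nonneg (hw t i).1 (hGoff i j hij)
  have hMtv : ∀ t i, (Mt t *ᵥ v) i ≤ ρ t * v i := by
    intro t i
    have h1 : (Mt t *ᵥ v) i = v i + w t i * (Gm *ᵥ v) i := by
      rw [hMtdef]
      rw [Matrix.add_mulVec, Matrix.one_mulVec, Pi.add_apply,
        ← Matrix.mulVec_mulVec, Matrix.mulVec_diagonal]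
    have h2 : w t i * (Gm *ᵥ v) i ≤ w t i * (-ε) :=
      mul_le_mul_of_nonneg_left (hGvε i) (hw t i).1
    have h3 : w t i * (-ε) ≤ ms t * (-ε) :=
      mul_le_mul_of_nonpos_right (hms_le t i) (by linarith)
    have hkey : ε * ms t / V * v i ≤ ε * ms t := by
      rw [div_mul_eq_mul_div, div_le_iff₀ hVpos]
      exact mul_le_mul_of_nonneg_left (hvV i) (mul_nonneg hε_pos.le (hms_nn t))
    simp only [hρdef]
    nlinarith [h1, h2, h3, hkey]
  -- nonnegativity of the products
  have hGnn : ∀ t i j, 0 ≤ G' t i j := by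
    intro t
    induction t with
    | zero =>
      intro i j
      rw [hG0, mul_one]
      exact hMt_nn 0 i j
    | succ t ih =>
      intro i j
      rw [hGrec t]
      show 0 ≤ ∑ k, Mt (t + 1) i k * G' t k j
      exact Finset.sum_nonneg fun k _ => mul_nonneg (hMt_nn _ i k) (ih k j)
  -- the scalar envelope
  set c : ℕ → ℝ := fun t => ∏ s ∈ Finset.range (t + 1), ρ s with hcdef
  have hc_nn : ∀ t, 0 ≤ c t := fun t => Finset.prod_nonneg fun s _ => hρ_nn s
  have hGv' : ∀ t i, (G' t *ᵥ v) i ≤ c t * v i := by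
    intro t
    induction t with
    | zero =>
      intro i
      rw [hG0, mul_one]
      have : c 0 = ρ 0 := by simp [hcdef]
      rw [this]
      exact hMtv 0 i
    | succ t ih =>
      intro i
      rw [hGrec t, ← Matrix.mulVec_mulVec]
      have step1 : (Mt (t + 1) *ᵥ (G' t *ᵥ v)) i ≤ (Mt (t + 1) *ᵥ (c t • v)) i :=
        mulVec_mono' (hMt_nn (t + 1)) (fun j => by
          simpa [Pi.smul_apply, smul_eq_mul] using ih j) i
      have step2 : (Mt (t + 1) *ᵥ (c t • v)) i = c t * (Mt (t + 1) *ᵥ v) i := by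
        rw [Matrix.mulVec_smul]; simp
      have step3 : c t * (Mt (t + 1) *ᵥ v) i ≤ c t * (ρ (t + 1) * v i) :=
        mul_le_mul_of_nonneg_left (hMtv (t + 1) i) (hc_nn t)
      have step4 : c (t + 1) = c t * ρ (t + 1) := by
        simp [hcdef, Finset.prod_range_succ]
      calc (Mt (t + 1) *ᵥ (G' t *ᵥ v)) i ≤ (Mt (t + 1) *ᵥ (c t • v)) i := step1
        _ = c t * (Mt (t + 1) *ᵥ v) i := step2
        _ ≤ c t * (ρ (t + 1) * v i) := step3
        _ = c (t + 1) * v i := by rw [step4]; ring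
  -- entrywise bound
  have hentry : ∀ t i j, G' t i j ≤ c t * V := by
    intro t i j
    calc G' t i j ≤ G' t i j * v j := le_mul_of_one_le_right (hGnn t i j) (hv1 j)
      _ ≤ ∑ k, G' t i k * v k :=
          Finset.single_le_sum
            (f := fun k => G' t i k * v k)
            (fun k _ => mul_nonneg (hGnn t i k) (le_trans zero_le_one (hv1 k)))
            (Finset.mem_univ j)
      _ = (G' t *ᵥ v) i := by simp [Matrix.mulVec, dotProduct]
      _ ≤ c t * v i := hGv' t i
      _ ≤ c t * V := mul_le_mul_of_nonneg_left (hvV i) (hc_nn t)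
  -- the envelope tends to zero
  have hS : Tendsto (fun t => ∑ s ∈ Finset.range (t + 1), ms s) atTop atTop := by
    have : (fun t => ∑ s ∈ Finset.range (t + 1), ms s)
        = (fun T => ∑ s ∈ Finset.range T, ⨅ i, w s i) ∘ (fun t => t + 1) := rfl
    rw [this]
    exact hdiv.comp (tendsto_add_atTop_nat 1)
  have hub : ∀ t, c t ≤ Real.exp (-(ε / V) * ∑ s ∈ Finset.range (t + 1), ms s) := by
    intro t
    calc c t ≤ ∏ s ∈ Finset.range (t + 1), Real.exp (-(ε * ms s / V)) :=
          Finset.prod_le_prod (fun s _ => hρ_nn s) (fun s _ => hρ_exp s)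
      _ = Real.exp (∑ s ∈ Finset.range (t + 1), -(ε * ms s / V)) :=
          (Real.exp_sum _ _).symm
      _ = Real.exp (-(ε / V) * ∑ s ∈ Finset.range (t + 1), ms s) := by
          rw [Finset.mul_sum]
          congr 1
          exact Finset.sum_congr rfl fun s _ => by ring
  have hexp : Tendsto
      (fun t => Real.exp (-(ε / V) * ∑ s ∈ Finset.range (t + 1), ms s)) atTop (𝓝 0) := by
    apply Real.tendsto_exp_atBot.comp
    exact hS.const_mul_atTop_of_neg (by simp; positivity)
  have hc_tendsto : Tendsto c atTop (𝓝 0) := squeeze_zero hc_nn hub hexp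
  -- conclude entrywise
  have hcV : Tendsto (fun t => c t * V) atTop (𝓝 0) := by
    simpa using hc_tendsto.mul_const V
  refine tendsto_pi_nhds.mpr fun i => tendsto_pi_nhds.mpr fun j => ?_
  have : (0 : Matrix (Fin n₁) (Fin n₁) ℝ) i j = 0 := rfl
  rw [this]
  exact squeeze_zero (fun t => hGnn t i j) (fun t => hentry t i j) hcV
end

section
/- Define G'(−1) = I and G'(t) = (I + Ω₁(t)G)·G'(t−1) for t ≥ 0, and let e denote the all-ones vector in ℝ^{n₁}. Then for all t ≥ 0, every entry of the vector G·G'(t)·e is nonpositive. -/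
/-!
Write `D = diagonal w`. The identity `G (I + D G) = (I + G D) G` moves one factor of the recursion
past `G`, and `I + G D` is entrywise nonnegative: off the diagonal its entries are `G i j * w j ≥ 0`,
on it they are `1 + G i i * w i ≥ 0` because `G i i ≥ -1` and `w i ≤ 1`. A nonnegative matrix keeps
a nonpositive vector nonpositive, so by induction on `t` every `G G'(t) e` is nonpositive, starting
from `G e ≤ 0`.
-/

open Matrix

section

variable {ι : Type*} [Fintype ι]

theorem Matrix.mulVec_nonpos_of_nonneg {M : Matrix ι ι ℝ} (hM : ∀ i j, 0 ≤ M i j)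
    {v : ι → ℝ} (hv : ∀ j, v j ≤ 0) (i : ι) : (M *ᵥ v) i ≤ 0 :=
  Finset.sum_nonpos fun j _ => mul_nonpos_of_nonneg_of_nonpos (hM i j) (hv j)

variable [DecidableEq ι]

theorem Matrix.one_add_mul_diagonal_nonneg {G : Matrix ι ι ℝ} (hoff : ∀ i j, i ≠ j → 0 ≤ G i j)
    (hdiag : ∀ i, -1 ≤ G i i) {w : ι → ℝ} (hw : ∀ i, w i ∈ Set.Icc (0 : ℝ) 1) (i j : ι) :
    0 ≤ (1 + G * diagonal w) i j := by
  rw [add_apply, mul_diagonal]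
  rcases eq_or_ne i j with rfl | hij
  · rw [one_apply_eq]
    nlinarith [hdiag i, (hw i).1, (hw i).2]
  · rw [one_apply_ne hij, zero_add]
    exact mul_nonneg (hoff i j hij) (hw j).1

theorem Matrix.mul_one_add_diagonal_mul (G : Matrix ι ι ℝ) (w : ι → ℝ) :
    G * (1 + diagonal w * G) = (1 + G * diagonal w) * G := by
  rw [mul_add, add_mul, mul_one, one_mul, Matrix.mul_assoc]

theorem Matrix.mulVec_one_add_diagonal_mul_mulVec_nonpos {G : Matrix ι ι ℝ}
    (hoff : ∀ i j, i ≠ j → 0 ≤ G i j) (hdiag : ∀ i, -1 ≤ G i i)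
    {w : ι → ℝ} (hw : ∀ i, w i ∈ Set.Icc (0 : ℝ) 1) {v : ι → ℝ} (hv : ∀ i, (G *ᵥ v) i ≤ 0)
    (i : ι) : (G *ᵥ ((1 + diagonal w * G) *ᵥ v)) i ≤ 0 := by
  rw [mulVec_mulVec, mul_one_add_diagonal_mul, ← mulVec_mulVec]
  exact mulVec_nonpos_of_nonneg (one_add_mul_diagonal_nonneg hoff hdiag hw) hv i

end

theorem G_mul_Gprime_ones_nonpos_general
    (n₁ : ℕ)
    (G : Matrix (Fin n₁) (Fin n₁) ℝ)
    (hoff : ∀ i j, i ≠ j → 0 ≤ G i j)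
    (hdiag : ∀ i, G i i ∈ Set.Icc (-1 : ℝ) 0)
    (hrow : ∀ i, (G *ᵥ fun _ => (1 : ℝ)) i ≤ 0)
    (w : ℕ → Fin n₁ → ℝ) (hw : ∀ t i, w t i ∈ Set.Icc (0 : ℝ) 1)
    (G' : ℕ → Matrix (Fin n₁) (Fin n₁) ℝ)
    (hG0 : G' 0 = (1 + Matrix.diagonal (w 0) * G) * 1)
    (hGrec : ∀ t, G' (t + 1) = (1 + Matrix.diagonal (w (t + 1)) * G) * G' t) :
    ∀ (t : ℕ) (i : Fin n₁), (G *ᵥ (G' t *ᵥ fun _ => (1 : ℝ))) i ≤ 0 := by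
  have hdiag' : ∀ i, -1 ≤ G i i := fun i => (hdiag i).1
  intro t
  induction t with
  | zero =>
    rw [hG0, mul_one]
    exact mulVec_one_add_diagonal_mul_mulVec_nonpos hoff hdiag' (hw 0) hrow
  | succ t ih =>
    rw [hGrec t, ← mulVec_mulVec]
    exact mulVec_one_add_diagonal_mul_mulVec_nonpos hoff hdiag' (hw (t + 1)) ih

/-- For `G'(-1) = I`, `G'(t) = (I + Ω₁(t)G) G'(t-1)`, every entry of
`G ⬝ G'(t) ⬝ e` is nonpositive, where `e` is the all-ones vector. -/
theorem G_mul_Gprime_ones_nonpos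
    (n₁ : ℕ) (hn₁ : 0 < n₁)
    (G : Matrix (Fin n₁) (Fin n₁) ℝ)
    (hoff : ∀ i j, i ≠ j → 0 ≤ G i j)
    (hdiag : ∀ i, G i i ∈ Set.Icc (-1 : ℝ) 0)
    (hrow : ∀ i, (G *ᵥ fun _ => (1 : ℝ)) i ≤ 0)
    (w : ℕ → Fin n₁ → ℝ) (hw : ∀ t i, w t i ∈ Set.Icc (0 : ℝ) 1)
    (G' : ℕ → Matrix (Fin n₁) (Fin n₁) ℝ)
    (hG0 : G' 0 = (1 + Matrix.diagonal (w 0) * G) * 1)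
    (hGrec : ∀ t, G' (t + 1) = (1 + Matrix.diagonal (w (t + 1)) * G) * G' t) :
    ∀ (t : ℕ) (i : Fin n₁), (G *ᵥ (G' t *ᵥ fun _ => (1 : ℝ))) i ≤ 0 :=
  G_mul_Gprime_ones_nonpos_general n₁ G hoff hdiag hrow w hw G' hG0 hGrec
end

section
/- Define G'(−1) = I and G'(t) = (I + Ω₁(t)G)·G'(t−1) for t ≥ 0, and define G''(t) = (I + ω̄(t)G)·(I + ω̄(t−1)G)···(I + ω̄(0)G) where ω̄(s) = min_{1≤i≤n₁} ω_i(s). Let e denote the all-ones vector in ℝ^{n₁}. Then for all t ≥ 0: (i) G'(t) is entrywise nonnegative with all row sums at most 1; (ii) entrywise, G'(t)·e ≤ G''(t)·e; and consequently (iii) the maximum absolute row-sum norm satisfies ‖G'(t)‖_∞ ≤ ‖G''(t)‖_∞. -/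
open Matrix

/-- The maximum absolute row-sum norm of a matrix. -/
noncomputable def rowSumNorm {n : ℕ} (M : Matrix (Fin n) (Fin n) ℝ) : ℝ :=
  ⨆ i : Fin n, ∑ j, |M i j|

/-- `G'(t)` is nonnegative and substochastic, its row sums are dominated by
those of `G''(t)` (the product built from the minimal stubbornness factors), and hence
`‖G'(t)‖_∞ ≤ ‖G''(t)‖_∞`. -/
theorem Gprime_dominated_by_Gdoubleprime
    (n₁ : ℕ) (hn₁ : 0 < n₁)
    (G : Matrix (Fin n₁) (Fin n₁) ℝ)
    (hoff : ∀ i j, i ≠ j → 0 ≤ G i j)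
    (hdiag : ∀ i, G i i ∈ Set.Icc (-1 : ℝ) 0)
    (hrow : ∀ i, ∑ j, G i j ≤ 0)
    (w : ℕ → Fin n₁ → ℝ) (hw : ∀ t i, w t i ∈ Set.Icc (0 : ℝ) 1)
    (G' : ℕ → Matrix (Fin n₁) (Fin n₁) ℝ)
    (hG0 : G' 0 = (1 + Matrix.diagonal (w 0) * G) * 1)
    (hGrec : ∀ t, G' (t + 1) = (1 + Matrix.diagonal (w (t + 1)) * G) * G' t)
    (G'' : ℕ → Matrix (Fin n₁) (Fin n₁) ℝ)
    (hG''0 : G'' 0 = 1 + (⨅ i, w 0 i) • G)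
    (hG''rec : ∀ t, G'' (t + 1) = (1 + (⨅ i, w (t + 1) i) • G) * G'' t) :
    (∀ (t : ℕ) (i j : Fin n₁), 0 ≤ G' t i j) ∧
    (∀ (t : ℕ) (i : Fin n₁), ∑ j, G' t i j ≤ 1) ∧
    (∀ (t : ℕ) (i : Fin n₁),
      (G' t *ᵥ fun _ => (1 : ℝ)) i ≤ (G'' t *ᵥ fun _ => (1 : ℝ)) i) ∧
    (∀ t : ℕ, rowSumNorm (G' t) ≤ rowSumNorm (G'' t)) := by
  haveI : Nonempty (Fin n₁) := ⟨⟨0, hn₁⟩⟩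
  have i0 : Fin n₁ := ⟨0, hn₁⟩
  have hm0 : ∀ t, (0:ℝ) ≤ ⨅ i, w t i := fun t => le_ciInf fun i => (hw t i).1
  have hm1 : ∀ t i, (⨅ i, w t i) ≤ w t i := fun t i =>
    ciInf_le (Set.Finite.bddBelow (Set.finite_range _)) i
  have hmIcc : ∀ t, (⨅ i, w t i) ∈ Set.Icc (0:ℝ) 1 := fun t =>
    ⟨hm0 t, le_trans (hm1 t i0) (hw t i0).2⟩
  -- entries of the per-step matrices
  have hA : ∀ t i j, (1 + Matrix.diagonal (w t) * G) i j
      = (if i = j then (1:ℝ) else 0) + w t i * G i j := by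
    intro t i j
    simp [Matrix.add_apply, Matrix.one_apply, Matrix.diagonal_mul]
  have hB : ∀ t i j, (1 + (⨅ i, w t i) • G) i j
      = (if i = j then (1:ℝ) else 0) + (⨅ i, w t i) * G i j := by
    intro t i j
    simp [Matrix.add_apply, Matrix.one_apply, Matrix.smul_apply, smul_eq_mul]
  -- nonnegativity of entries of 1 + c_i • G for c i ∈ [0,1]
  have hEntry : ∀ (c : Fin n₁ → ℝ), (∀ i, c i ∈ Set.Icc (0:ℝ) 1) → ∀ i j,
      (0:ℝ) ≤ (if i = j then (1:ℝ) else 0) + c i * G i j := by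
    intro c hc i j
    by_cases h : i = j
    · subst h
      rw [if_pos rfl]
      nlinarith [(hc i).1, (hc i).2, (hdiag i).1, (hdiag i).2]
    · simp only [if_neg h]
      have := mul_nonneg (hc i).1 (hoff i j h)
      linarith
  -- weighted row sums of the per-step matrices
  have hAv : ∀ t (v : Fin n₁ → ℝ) i,
      ∑ k, (1 + Matrix.diagonal (w t) * G) i k * v k
        = v i + w t i * ∑ k, G i k * v k := by
    intro t v i
    simp only [hA, add_mul, Finset.sum_add_distrib, ite_mul, one_mul, zero_mul,
      Finset.sum_ite_eq, Finset.mem_univ, if_true, mul_assoc, Finset.mul_sum]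
  have hBv : ∀ t (v : Fin n₁ → ℝ) i,
      ∑ k, (1 + (⨅ i, w t i) • G) i k * v k
        = v i + (⨅ i, w t i) * ∑ k, G i k * v k := by
    intro t v i
    simp only [hB, add_mul, Finset.sum_add_distrib, ite_mul, one_mul, zero_mul,
      Finset.sum_ite_eq, Finset.mem_univ, if_true, mul_assoc, Finset.mul_sum]
  -- row sums of products
  have hrowMul : ∀ (M N : Matrix (Fin n₁) (Fin n₁) ℝ) i,
      ∑ j, (M * N) i j = ∑ k, M i k * (∑ j, N k j) := by
    intro M N i
    simp only [Matrix.mul_apply, Finset.mul_sum]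
    exact Finset.sum_comm
  -- G commutes with G'' t
  have hcomm1 : ∀ c : ℝ, G * (1 + c • G) = (1 + c • G) * G := by
    intro c
    rw [mul_add, add_mul, mul_one, one_mul, mul_smul_comm, smul_mul_assoc]
  have hcomm : ∀ t, G * G'' t = G'' t * G := by
    intro t
    induction t with
    | zero => rw [hG''0]; exact hcomm1 _
    | succ t ih =>
      rw [hG''rec, ← mul_assoc, hcomm1, mul_assoc, ih, ← mul_assoc]
  -- G'' is nonnegative
  have hG''nn : ∀ t i j, 0 ≤ G'' t i j := by
    intro t
    induction t with
    | zero =>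
      intro i j
      rw [hG''0, hB 0 i j]
      exact hEntry (fun _ => ⨅ i, w 0 i) (fun _ => hmIcc 0) i j
    | succ t ih =>
      intro i j
      rw [hG''rec, Matrix.mul_apply]
      refine Finset.sum_nonneg fun k _ => mul_nonneg ?_ (ih k j)
      rw [hB (t+1) i k]
      exact hEntry (fun _ => ⨅ i, w (t+1) i) (fun _ => hmIcc (t+1)) i k
  -- the key inequality: G applied to the row sums of G'' is nonpositive
  have keyG : ∀ t i, ∑ k, G i k * (∑ j, G'' t k j) ≤ 0 := by
    intro t i
    have h1 : ∑ k, G i k * (∑ j, G'' t k j) = ∑ j, (G * G'' t) i j :=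
      (hrowMul G (G'' t) i).symm
    have h2 : ∑ j, (G'' t * G) i j = ∑ k, G'' t i k * (∑ j, G k j) :=
      hrowMul (G'' t) G i
    rw [h1, hcomm t, h2]
    refine Finset.sum_nonpos fun k _ => ?_
    have := hG''nn t i k
    have := hrow k
    nlinarith
  -- main induction
  have main : ∀ t, (∀ i j, 0 ≤ G' t i j) ∧ (∀ i, ∑ j, G' t i j ≤ 1) ∧
      (∀ i, ∑ j, G' t i j ≤ ∑ j, G'' t i j) := by
    intro t
    induction t with
    | zero =>
      have hG0' : G' 0 = 1 + Matrix.diagonal (w 0) * G := by rw [hG0, mul_one]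
      refine ⟨fun i j => ?_, fun i => ?_, fun i => ?_⟩
      · rw [hG0', hA 0 i j]; exact hEntry (w 0) (hw 0) i j
      · have h := hAv 0 (fun _ => (1:ℝ)) i
        simp only [mul_one] at h
        rw [hG0', h]
        have := mul_nonneg (hw 0 i).1 (neg_nonneg.mpr (hrow i))
        linarith
      · have hA0 := hAv 0 (fun _ => (1:ℝ)) i
        have hB0 := hBv 0 (fun _ => (1:ℝ)) i
        simp only [mul_one] at hA0 hB0
        rw [hG0', hG''0, hA0, hB0]
        have hle : w 0 i * ∑ j, G i j ≤ (⨅ i, w 0 i) * ∑ j, G i j :=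
          mul_le_mul_of_nonpos_right (hm1 0 i) (hrow i)
        linarith
    | succ t ih =>
      obtain ⟨ihnn, ihrow, ihcmp⟩ := ih
      have hAnn : ∀ i k, 0 ≤ (1 + Matrix.diagonal (w (t+1)) * G) i k := by
        intro i k; rw [hA (t+1) i k]; exact hEntry (w (t+1)) (hw (t+1)) i k
      refine ⟨fun i j => ?_, fun i => ?_, fun i => ?_⟩
      · rw [hGrec, Matrix.mul_apply]
        exact Finset.sum_nonneg fun k _ => mul_nonneg (hAnn i k) (ihnn k j)
      · rw [hGrec, hrowMul]
        calc ∑ k, (1 + Matrix.diagonal (w (t+1)) * G) i k * (∑ j, G' t k j)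
            ≤ ∑ k, (1 + Matrix.diagonal (w (t+1)) * G) i k * (fun _ => (1:ℝ)) k := by
              refine Finset.sum_le_sum fun k _ => ?_
              exact mul_le_mul_of_nonneg_left (ihrow k) (hAnn i k)
          _ = 1 + w (t+1) i * ∑ j, G i j := by rw [hAv]; simp
          _ ≤ 1 := by
              have := mul_nonneg (hw (t+1) i).1 (neg_nonneg.mpr (hrow i))
              linarith
      · rw [hGrec, hG''rec, hrowMul, hrowMul]
        calc ∑ k, (1 + Matrix.diagonal (w (t+1)) * G) i k * (∑ j, G' t k j)
            ≤ ∑ k, (1 + Matrix.diagonal (w (t+1)) * G) i k * (∑ j, G'' t k j) := by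
              refine Finset.sum_le_sum fun k _ => ?_
              exact mul_le_mul_of_nonneg_left (ihcmp k) (hAnn i k)
          _ = (∑ j, G'' t i j) + w (t+1) i * ∑ k, G i k * (∑ j, G'' t k j) := by
              rw [hAv]
          _ ≤ (∑ j, G'' t i j) + (⨅ i, w (t+1) i) * ∑ k, G i k * (∑ j, G'' t k j) := by
              have := mul_le_mul_of_nonpos_right (hm1 (t+1) i) (keyG t i)
              linarith
          _ = ∑ k, (1 + (⨅ i, w (t+1) i) • G) i k * (∑ j, G'' t k j) := by
              rw [hBv]
  refine ⟨fun t => (main t).1, fun t => (main t).2.1, fun t i => ?_, fun t => ?_⟩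
  · simpa [Matrix.mulVec, dotProduct] using (main t).2.2 i
  · simp only [rowSumNorm]
    refine ciSup_le fun i => ?_
    have h1 : ∑ j, |G' t i j| = ∑ j, G' t i j :=
      Finset.sum_congr rfl fun j _ => abs_of_nonneg ((main t).1 i j)
    have h2 : ∑ j, G'' t i j ≤ ∑ j, |G'' t i j| :=
      Finset.sum_le_sum fun j _ => le_abs_self _
    calc ∑ j, |G' t i j| = ∑ j, G' t i j := h1
      _ ≤ ∑ j, G'' t i j := (main t).2.2 i
      _ ≤ ∑ j, |G'' t i j| := h2
      _ ≤ rowSumNorm (G'' t) := by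
          simp only [rowSumNorm]
          exact le_ciSup (f := fun i => ∑ j, |G'' t i j|)
            (Set.Finite.bddAbove (Set.finite_range _)) i
end

section
/- Let M be an n×n complex matrix all of whose eigenvalues λ satisfy |1 + λ| < 1, and let ω̄(0), ω̄(1), … ∈ [0,1] be a sequence with ∑_{s=0}^∞ ω̄(s) = ∞. Then the ordered matrix product (I + ω̄(t)M)·(I + ω̄(t−1)M)···(I + ω̄(0)M) converges to the zero matrix as t → ∞. -/
open Matrix Filter Topology

open scoped NNReal ENNReal

/-!
Write `A = 1 + M`, so that each factor is the convex combination `(1 - ω) • 1 + ω • A`.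
The spectral radius of `A` is `< 1`, so for some `ρ < 1` and `k > 0` Gelfand's formula gives
`‖A ^ k‖ ≤ ρ ^ k`. The equivalent norm `N x = ∑_{j<k} ‖A ^ j * x‖ / ρ ^ j` then satisfies
`N (A * x) ≤ ρ * N x`, so left multiplication by `1 + ω • M` shrinks `N` by the factor
`1 - (1 - ρ) ω ≤ exp (-(1 - ρ) ω)`, and `∑ ω = ∞` drives `N (P t)` to `0`.
-/

section AdaptedNorm

variable {A : Type*} [NormedRing A]

noncomputable def adaptedNorm (a : A) (ρ : ℝ) (k : ℕ) (x : A) : ℝ :=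
  ∑ j ∈ Finset.range k, ‖a ^ j * x‖ / ρ ^ j

variable {a : A} {ρ : ℝ} {k : ℕ}

lemma adaptedNorm_nonneg (hρ : 0 ≤ ρ) (x : A) : 0 ≤ adaptedNorm a ρ k x :=
  Finset.sum_nonneg fun _ _ => by positivity

lemma norm_le_adaptedNorm (hρ : 0 ≤ ρ) (hk : 0 < k) (x : A) : ‖x‖ ≤ adaptedNorm a ρ k x := by
  unfold adaptedNorm
  simpa using Finset.single_le_sum (f := fun j => ‖a ^ j * x‖ / ρ ^ j)
    (fun _ _ => by positivity) (Finset.mem_range.2 hk)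

lemma adaptedNorm_add_le (hρ : 0 ≤ ρ) (x y : A) :
    adaptedNorm a ρ k (x + y) ≤ adaptedNorm a ρ k x + adaptedNorm a ρ k y := by
  rw [adaptedNorm, adaptedNorm, adaptedNorm, ← Finset.sum_add_distrib]
  gcongr with j
  rw [← add_div, mul_add]
  gcongr
  exact norm_add_le _ _

lemma adaptedNorm_smul {𝕜 : Type*} [NormedField 𝕜] [NormedAlgebra 𝕜 A] (c : 𝕜) (x : A) :
    adaptedNorm a ρ k (c • x) = ‖c‖ * adaptedNorm a ρ k x := by
  simp only [adaptedNorm, Finset.mul_sum, mul_smul_comm, norm_smul, mul_div_assoc]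

/-- Shifting the sum by one power of `a` costs a factor `ρ`; the one new term, of index `k`,
is paid for by the dropped term of index `0` because `‖a ^ k‖ ≤ ρ ^ k`. -/
lemma adaptedNorm_mul_le (hρ : 0 < ρ) (hak : ‖a ^ k‖ ≤ ρ ^ k) (x : A) :
    adaptedNorm a ρ k (a * x) ≤ ρ * adaptedNorm a ρ k x := by
  set g : ℕ → ℝ := fun j => ‖a ^ j * x‖ / ρ ^ j
  have hshift : adaptedNorm a ρ k (a * x) = ρ * ∑ j ∈ Finset.range k, g (j + 1) := by
    rw [adaptedNorm, Finset.mul_sum]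
    refine Finset.sum_congr rfl fun j _ => ?_
    rw [← mul_assoc, ← pow_succ]
    change _ = ρ * (‖a ^ (j + 1) * x‖ / ρ ^ (j + 1))
    rw [pow_succ ρ j]
    field_simp
  have hlast : g k ≤ g 0 := by
    calc g k = ‖a ^ k * x‖ / ρ ^ k := rfl
      _ ≤ ‖a ^ k‖ * ‖x‖ / ρ ^ k := by gcongr; exact norm_mul_le _ _
      _ ≤ ρ ^ k * ‖x‖ / ρ ^ k := by gcongr
      _ = g 0 := by field_simp; simp [g]
  have htele := (Finset.sum_range_succ' g k).symm.trans (Finset.sum_range_succ g k)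
  rw [hshift]
  gcongr
  change _ ≤ ∑ j ∈ Finset.range k, g j
  linarith

lemma adaptedNorm_smul_add_smul_mul_le {𝕜 : Type*} [NormedField 𝕜] [NormedAlgebra 𝕜 A]
    (hρ : 0 < ρ) (hak : ‖a ^ k‖ ≤ ρ ^ k) (c d : 𝕜) (x : A) :
    adaptedNorm a ρ k (c • x + d • (a * x)) ≤ (‖c‖ + ‖d‖ * ρ) * adaptedNorm a ρ k x := by
  calc adaptedNorm a ρ k (c • x + d • (a * x))
      ≤ ‖c‖ * adaptedNorm a ρ k x + ‖d‖ * adaptedNorm a ρ k (a * x) := by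
        rw [← adaptedNorm_smul, ← adaptedNorm_smul]
        exact adaptedNorm_add_le hρ.le _ _
    _ ≤ ‖c‖ * adaptedNorm a ρ k x + ‖d‖ * (ρ * adaptedNorm a ρ k x) := by
        gcongr
        exact adaptedNorm_mul_le hρ hak x
    _ = (‖c‖ + ‖d‖ * ρ) * adaptedNorm a ρ k x := by ring

end AdaptedNorm

lemma exists_norm_pow_le_pow_of_spectralRadius_lt {A : Type*} [NormedRing A] [NormedAlgebra ℂ A]
    [CompleteSpace A] (a : A) {ρ : ℝ≥0} (h : spectralRadius ℂ a < ρ) :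
    ∃ k, 0 < k ∧ ‖a ^ k‖ ≤ ρ ^ k := by
  obtain ⟨K, hK⟩ := eventually_atTop.1 <|
    (spectrum.pow_nnnorm_pow_one_div_tendsto_nhds_spectralRadius a).eventually_lt_const h
  have hk : 0 < max K 1 := by positivity
  have hlt := hK (max K 1) (le_max_left K 1)
  rw [one_div, ENNReal.rpow_inv_lt_iff (by positivity), ENNReal.rpow_natCast] at hlt
  exact ⟨max K 1, hk, by exact_mod_cast hlt.le⟩

lemma tendsto_zero_of_le_one_sub_mul {u a : ℕ → ℝ} (hu : ∀ t, 0 ≤ u t)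
    (hrec : ∀ t, u (t + 1) ≤ (1 - a t) * u t)
    (ha : Tendsto (fun T => ∑ s ∈ Finset.range T, a s) atTop atTop) :
    Tendsto u atTop (𝓝 0) := by
  have hbound : ∀ t, u t ≤ u 0 * Real.exp (-∑ s ∈ Finset.range t, a s) := by
    intro t
    induction t with
    | zero => simp
    | succ t ih =>
      calc u (t + 1) ≤ (1 - a t) * u t := hrec t
        _ ≤ Real.exp (-a t) * u t := by
          gcongr
          · exact hu t
          · linarith [Real.add_one_le_exp (-a t)]
        _ ≤ Real.exp (-a t) * (u 0 * Real.exp (-∑ s ∈ Finset.range t, a s)) := by gcongr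
        _ = u 0 * Real.exp (-∑ s ∈ Finset.range (t + 1), a s) := by
          rw [Finset.sum_range_succ, neg_add, Real.exp_add]; ring
  have hexp : Tendsto (fun t => u 0 * Real.exp (-∑ s ∈ Finset.range t, a s)) atTop (𝓝 0) := by
    simpa using (Real.tendsto_exp_atBot.comp (tendsto_neg_atTop_atBot.comp ha)).const_mul (u 0)
  exact squeeze_zero hu hbound hexp

theorem tendsto_zero_of_spectralRadius_one_add_lt_one {A : Type*} [NormedRing A]
    [NormedAlgebra ℂ A] [CompleteSpace A] {m : A} (hm : spectralRadius ℂ (1 + m) < 1)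
    {w : ℕ → ℝ} (hw : ∀ s, w s ∈ Set.Icc (0 : ℝ) 1)
    (hdiv : Tendsto (fun T => ∑ s ∈ Finset.range T, w s) atTop atTop)
    {P : ℕ → A} (hPrec : ∀ t, P (t + 1) = (1 + (w (t + 1) : ℂ) • m) * P t) :
    Tendsto P atTop (𝓝 0) := by
  obtain ⟨ρ, hρ, hρ1⟩ := ENNReal.lt_iff_exists_nnreal_btwn.1 hm
  have hρ0 : (0 : ℝ) < ρ := ENNReal.coe_pos.1 (zero_le.trans_lt hρ)
  replace hρ1 : (ρ : ℝ) < 1 := by exact_mod_cast hρ1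
  obtain ⟨k, hk, hak⟩ := exists_norm_pow_le_pow_of_spectralRadius_lt (1 + m) hρ
  set N := adaptedNorm (1 + m) ρ k
  have hstep : ∀ t, N (P (t + 1)) ≤ (1 - (1 - ρ) * w (t + 1)) * N (P t) := by
    intro t
    obtain ⟨hw0, hw1⟩ := hw (t + 1)
    have hfactor : (1 + (w (t + 1) : ℂ) • m) * P t =
        ((1 - w (t + 1) : ℝ) : ℂ) • P t + (w (t + 1) : ℂ) • ((1 + m) * P t) := by
      simp only [add_mul, one_mul, smul_mul_assoc]
      push_cast
      module
    calc N (P (t + 1))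
        ≤ (‖((1 - w (t + 1) : ℝ) : ℂ)‖ + ‖(w (t + 1) : ℂ)‖ * ρ) * N (P t) := by
          rw [hPrec, hfactor]
          exact adaptedNorm_smul_add_smul_mul_le hρ0 (by exact_mod_cast hak) _ _ _
      _ = (1 - (1 - ρ) * w (t + 1)) * N (P t) := by
          rw [Complex.norm_real, Complex.norm_real, Real.norm_of_nonneg (by linarith),
            Real.norm_of_nonneg hw0]
          ring
  have hdiv' : Tendsto (fun T => ∑ s ∈ Finset.range T, (1 - ρ) * w (s + 1)) atTop atTop := by
    have hshift := (tendsto_add_atTop_iff_nat 1).2 hdiv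
    simp only [Finset.sum_range_succ'] at hshift
    simp only [← Finset.mul_sum]
    exact (by simpa using tendsto_atTop_add_const_right _ (-w 0) hshift :
      Tendsto (fun T => ∑ s ∈ Finset.range T, w (s + 1)) atTop atTop).const_mul_atTop
        (by linarith)
  have hN : Tendsto (fun t => N (P t)) atTop (𝓝 0) :=
    tendsto_zero_of_le_one_sub_mul (fun t => adaptedNorm_nonneg hρ0.le _) hstep hdiv'
  exact tendsto_zero_iff_norm_tendsto_zero.2 <| squeeze_zero (fun _ => norm_nonneg _)
    (fun t => norm_le_adaptedNorm hρ0.le hk _) hN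

section
attribute [local instance] Matrix.linftyOpNormedRing Matrix.linftyOpNormedAlgebra

lemma Matrix.spectralRadius_one_add_lt_one {ι : Type*} [Fintype ι] [DecidableEq ι]
    (M : Matrix ι ι ℂ) (heig : ∀ lam : ℂ, M.charpoly.IsRoot lam → ‖1 + lam‖ < 1) :
    spectralRadius ℂ (1 + M) < 1 := by
  rcases (spectrum ℂ (1 + M)).eq_empty_or_nonempty with h | h
  · simp [spectralRadius, h]
  refine spectrum.spectralRadius_lt_of_forall_lt_of_nonempty h fun z hz => ?_
  rw [← map_one (algebraMap ℂ (Matrix ι ι ℂ)), ← spectrum.singleton_add_eq,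
    Set.singleton_add] at hz
  obtain ⟨lam, hlam, rfl⟩ := hz
  exact_mod_cast heig lam (Matrix.mem_spectrum_iff_isRoot_charpoly.1 hlam)

end

theorem matrix_product_tendsto_zero_general
    (n : ℕ) (M : Matrix (Fin n) (Fin n) ℂ)
    (heig : ∀ lam : ℂ, M.charpoly.IsRoot lam → ‖1 + lam‖ < 1)
    (w : ℕ → ℝ) (hw : ∀ s, w s ∈ Set.Icc (0 : ℝ) 1)
    (hdiv : Tendsto (fun T => ∑ s ∈ Finset.range T, w s) atTop atTop)
    (P : ℕ → Matrix (Fin n) (Fin n) ℂ)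
    (hPrec : ∀ t, P (t + 1) = (1 + (w (t + 1) : ℂ) • M) * P t) :
    Tendsto P atTop (𝓝 0) := by
  -- Any submultiplicative norm induces the product topology on matrices.
  let := Matrix.linftyOpNormedRing (n := Fin n) (α := ℂ)
  let := Matrix.linftyOpNormedAlgebra (n := Fin n) (R := ℂ) (α := ℂ)
  exact tendsto_zero_of_spectralRadius_one_add_lt_one (M.spectralRadius_one_add_lt_one heig)
    hw hdiv hPrec

/-- If all eigenvalues `λ` of `M` satisfy `|1 + λ| < 1` and
`∑ₛ ω̄(s) = ∞` with `ω̄(s) ∈ [0,1]`, then the products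
`(I + ω̄(t)M)⋯(I + ω̄(0)M)` tend to the zero matrix. -/
theorem matrix_product_tendsto_zero
    (n : ℕ) (M : Matrix (Fin n) (Fin n) ℂ)
    (heig : ∀ lam : ℂ, M.charpoly.IsRoot lam → ‖1 + lam‖ < 1)
    (w : ℕ → ℝ) (hw : ∀ s, w s ∈ Set.Icc (0 : ℝ) 1)
    (hdiv : Tendsto (fun T => ∑ s ∈ Finset.range T, w s) atTop atTop)
    (P : ℕ → Matrix (Fin n) (Fin n) ℂ)
    (hP0 : P 0 = 1 + (w 0 : ℂ) • M)
    (hPrec : ∀ t, P (t + 1) = (1 + (w (t + 1) : ℂ) • M) * P t) :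
    Tendsto P atTop (𝓝 0) :=
  matrix_product_tendsto_zero_general n M heig w hw hdiv P hPrec
end

section
/- Let D = {z ∈ ℂ : |z + 1| < 1}, let ω̄(0), ω̄(1), … ∈ [0,1] satisfy ∑_{s=0}^∞ ω̄(s) = ∞, and define f_t(z) = ∏_{s=0}^{t} (1 + ω̄(s)·z). Then: (i) f_t → 0 uniformly on every compact subset of D as t → ∞; and (ii) for every j ≥ 0 and every x ∈ D, the j-th derivative satisfies f_t^{(j)}(x) → 0 as t → ∞. -/
/-!
Writing `1 + a z = (1 - a) + a (z + 1)` gives `‖1 + a z‖ ≤ 1 - a (1 - ‖z + 1‖) ≤ exp (-a (1 - ‖z + 1‖))`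
for `a ∈ [0, 1]`, so on `‖z + 1‖ ≤ r < 1` the product is bounded by `exp (-(1 - r) ∑ ω̄(s))`, which
tends to `0`. Compact subsets of `D` lie in such discs, and locally uniform convergence of
holomorphic functions passes to all derivatives.
-/

open Filter Topology Finset

lemma norm_one_add_mul_le {a : ℝ} (ha : a ∈ Set.Icc (0 : ℝ) 1) (z : ℂ) :
    ‖1 + (a : ℂ) * z‖ ≤ 1 - a * (1 - ‖z + 1‖) := by
  have hsplit : 1 + (a : ℂ) * z = ((1 - a : ℝ) : ℂ) + (a : ℂ) * (z + 1) := by push_cast; ring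
  calc ‖1 + (a : ℂ) * z‖ ≤ ‖((1 - a : ℝ) : ℂ)‖ + ‖(a : ℂ) * (z + 1)‖ := hsplit ▸ norm_add_le _ _
    _ = (1 - a) + a * ‖z + 1‖ := by
      rw [norm_mul, Complex.norm_real, Complex.norm_real, Real.norm_of_nonneg (by linarith [ha.2]),
        Real.norm_of_nonneg ha.1]
    _ = 1 - a * (1 - ‖z + 1‖) := by ring

lemma norm_prod_one_add_mul_le_exp {ι : Type*} (s : Finset ι) {w : ι → ℝ}
    (hw : ∀ i ∈ s, w i ∈ Set.Icc (0 : ℝ) 1) (z : ℂ) :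
    ‖∏ i ∈ s, (1 + (w i : ℂ) * z)‖ ≤ Real.exp (-((1 - ‖z + 1‖) * ∑ i ∈ s, w i)) := by
  rw [norm_prod, mul_sum, ← sum_neg_distrib, Real.exp_sum]
  refine prod_le_prod (fun i _ => norm_nonneg _) fun i hi => ?_
  calc ‖1 + (w i : ℂ) * z‖ ≤ 1 - w i * (1 - ‖z + 1‖) := norm_one_add_mul_le (hw i hi) z
    _ ≤ Real.exp (-((1 - ‖z + 1‖) * w i)) := by
      linarith [Real.add_one_le_exp (-((1 - ‖z + 1‖) * w i))]

lemma tendstoUniformlyOn_prod_one_add_mul {w : ℕ → ℝ} (hw : ∀ s, w s ∈ Set.Icc (0 : ℝ) 1)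
    (hdiv : Tendsto (fun T => ∑ s ∈ range T, w s) atTop atTop) {r : ℝ} (hr : r < 1) :
    TendstoUniformlyOn (fun t z => ∏ s ∈ range (t + 1), (1 + (w s : ℂ) * z)) 0 atTop
      {z : ℂ | ‖z + 1‖ ≤ r} := by
  have hbound : ∀ t, ∀ z ∈ {z : ℂ | ‖z + 1‖ ≤ r}, ‖∏ s ∈ range (t + 1), (1 + (w s : ℂ) * z)‖ ≤
      Real.exp (-((1 - r) * ∑ s ∈ range (t + 1), w s)) := fun t z hz =>
    (norm_prod_one_add_mul_le_exp _ (fun s _ => hw s) z).trans <| Real.exp_le_exp.2 <|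
      neg_le_neg <| mul_le_mul_of_nonneg_right (by linarith [hz.out])
        (sum_nonneg fun s _ => (hw s).1)
  have hexp : Tendsto (fun t => Real.exp (-((1 - r) * ∑ s ∈ range (t + 1), w s))) atTop (𝓝 0) :=
    Real.tendsto_exp_atBot.comp <| tendsto_neg_atTop_atBot.comp <|
      ((hdiv.comp (tendsto_add_atTop_nat 1)).const_mul_atTop (by linarith))
  rw [Metric.tendstoUniformlyOn_iff]
  intro ε hε
  filter_upwards [hexp.eventually (gt_mem_nhds hε)] with t ht z hz
  simpa [dist_eq_norm'] using (hbound t z hz).trans_lt ht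

section IteratedDeriv

variable {E : Type*} [NormedAddCommGroup E] [NormedSpace ℂ E] [CompleteSpace E] {U : Set ℂ}

lemma DifferentiableOn.iteratedDeriv {f : ℂ → E} (hf : DifferentiableOn ℂ f U)
    (hU : IsOpen U) (j : ℕ) : DifferentiableOn ℂ (iteratedDeriv j f) U := by
  induction j with
  | zero => simpa using hf
  | succ j ih => simpa [iteratedDeriv_succ] using ih.deriv hU

theorem TendstoLocallyUniformlyOn.iteratedDeriv {ι : Type*} {φ : Filter ι} {F : ι → ℂ → E}
    {f : ℂ → E} (hF : TendstoLocallyUniformlyOn F f φ U)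
    (hFd : ∀ᶠ n in φ, DifferentiableOn ℂ (F n) U) (hU : IsOpen U) (j : ℕ) :
    TendstoLocallyUniformlyOn (fun n => iteratedDeriv j (F n)) (iteratedDeriv j f) φ U := by
  induction j with
  | zero => simpa using hF
  | succ j ih =>
    simpa only [iteratedDeriv_succ, Function.comp_def] using
      ih.deriv (hFd.mono fun n hn => hn.iteratedDeriv hU j) hU

end IteratedDeriv

/-- With `f_t(z) = ∏_{s=0}^t (1 + ω̄(s) z)`, `ω̄(s) ∈ [0,1]` and
`∑ₛ ω̄(s) = ∞`: (i) `f_t → 0` uniformly on compact subsets of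
`D = {z : |z + 1| < 1}`; (ii) every derivative `f_t⁽ʲ⁾(x) → 0` for `x ∈ D`. -/
theorem product_polys_tendsto_zero_locally_uniformly
    (w : ℕ → ℝ) (hw : ∀ s, w s ∈ Set.Icc (0 : ℝ) 1)
    (hdiv : Tendsto (fun T => ∑ s ∈ Finset.range T, w s) atTop atTop)
    (f : ℕ → ℂ → ℂ)
    (hf : ∀ t z, f t z = ∏ s ∈ Finset.range (t + 1), (1 + (w s : ℂ) * z)) :
    (∀ K : Set ℂ, K ⊆ {z : ℂ | ‖z + 1‖ < 1} → IsCompact K →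
      TendstoUniformlyOn f 0 atTop K) ∧
    (∀ (j : ℕ) (x : ℂ), ‖x + 1‖ < 1 →
      Tendsto (fun t => iteratedDeriv j (f t) x) atTop (𝓝 0)) := by
  have hf' : f = fun t z => ∏ s ∈ range (t + 1), (1 + (w s : ℂ) * z) := funext₂ hf
  have hD : {z : ℂ | ‖z + 1‖ < 1} = Metric.ball (-1) 1 := by
    ext z; simp [dist_eq_norm]
  have hDopen : IsOpen {z : ℂ | ‖z + 1‖ < 1} := hD ▸ Metric.isOpen_ball
  have hcompact : ∀ K ⊆ {z : ℂ | ‖z + 1‖ < 1}, IsCompact K → TendstoUniformlyOn f 0 atTop K := by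
    intro K hKD hK
    obtain ⟨r, hr, hKr⟩ := exists_lt_subset_ball hK.isClosed (hD ▸ hKD)
    rw [hf']
    refine (tendstoUniformlyOn_prod_one_add_mul hw hdiv hr).mono fun z hz => ?_
    have hzr : ‖z + 1‖ < r := by simpa [dist_eq_norm] using hKr hz
    exact hzr.le
  refine ⟨hcompact, fun j x hx => ?_⟩
  have hlocal := (tendstoLocallyUniformlyOn_iff_forall_isCompact hDopen).2 hcompact
  have hdiff : ∀ t, DifferentiableOn ℂ (f t) {z : ℂ | ‖z + 1‖ < 1} := fun t => by
    rw [hf']; fun_prop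
  simpa using (hlocal.iteratedDeriv (.of_forall hdiff) hDopen j).tendsto_at hx
end

section
/- Suppose every non-stubborn agent is reachable from a stubborn agent, the series ∑_{s=0}^∞ min_{i∈V₁} ω_i(s) diverges, and the series ∑_{s=0}^∞ max_{i∈V₁} ω_i(s)² converges. On a probability space, let θ(0) ∈ [0,1]^N be deterministic and define random vectors by θ(t+1) = (I + Ω(t)A)·θ(t) + Ω(t)·ε(t), where each ε(t) is a random vector with values in [−1,1]^N satisfying E[ε(t) | θ(0), …, θ(t)] = 0. Then every entry of the covariance matrix of θ(t), namely Cov(θ_i(t), θ_j(t)) for all i, j, converges to 0 as t → ∞. -/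
open Matrix MeasureTheory Filter Topology


section helpers
variable {Ωs : Type*} [MeasurableSpace Ωs] {μ : Measure Ωs} [IsProbabilityMeasure μ]

lemma my_integrable_of_bdd {f : Ωs → ℝ} (hm : Measurable f) {C : ℝ} (hb : ∀ x, |f x| ≤ C) :
    Integrable f μ :=
  ⟨hm.aestronglyMeasurable, HasFiniteIntegral.of_bounded (C := C)
    (ae_of_all μ (by simpa [Real.norm_eq_abs] using hb))⟩

end helpers

lemma my_aux_seq_tendsto_zero (x β ω : ℕ → ℝ) (δ : ℝ) (hδ : 0 < δ)
    (hx0 : x 0 = 0)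
    (hω0 : ∀ t, 0 ≤ ω t) (hω1 : ∀ t, δ * ω t ≤ 1)
    (hβ0 : ∀ t, 0 ≤ β t) (hβs : Summable β)
    (hdiv : Tendsto (fun T => ∑ s ∈ Finset.range T, ω s) atTop atTop)
    (hrec : ∀ t, x (t + 1) = (1 - δ * ω t) * x t + β t) :
    Tendsto x atTop (𝓝 0) := by
  have hxnn : ∀ t, 0 ≤ x t := by
    intro t; induction t with
    | zero => simp [hx0]
    | succ t ih =>
      rw [hrec]
      have h1 : 0 ≤ 1 - δ * ω t := by linarith [hω1 t]
      nlinarith [hβ0 t]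
  have key : ∀ S t, S ≤ t → x t ≤ x S * Real.exp (-(δ * ∑ u ∈ Finset.Ico S t, ω u))
      + ∑ s ∈ Finset.Ico S t, β s := by
    intro S t hSt
    induction t, hSt using Nat.le_induction with
    | base => simp
    | succ t hSt ih =>
      have hexp : (1 - δ * ω t) ≤ Real.exp (-(δ * ω t)) := by
        have := Real.add_one_le_exp (-(δ * ω t)); linarith
      have h1 : 0 ≤ 1 - δ * ω t := by linarith [hω1 t]
      have h2 : 0 ≤ δ * ω t := mul_nonneg hδ.le (hω0 t)
      have hE1 : Real.exp (-(δ * ω t)) ≤ 1 := by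
        rw [← Real.exp_zero]; exact Real.exp_le_exp.mpr (by linarith)
      have hsums : 0 ≤ ∑ s ∈ Finset.Ico S t, β s := Finset.sum_nonneg fun s _ => hβ0 s
      have hEpos : 0 < Real.exp (-(δ * ω t)) := Real.exp_pos _
      calc x (t+1) = (1 - δ * ω t) * x t + β t := hrec t
        _ ≤ Real.exp (-(δ * ω t)) * x t + β t := by
            nlinarith [hxnn t]
        _ ≤ Real.exp (-(δ * ω t)) * (x S * Real.exp (-(δ * ∑ u ∈ Finset.Ico S t, ω u))
              + ∑ s ∈ Finset.Ico S t, β s) + β t := by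
            nlinarith [hxnn t]
        _ ≤ x S * Real.exp (-(δ * ∑ u ∈ Finset.Ico S (t+1), ω u)) + ∑ s ∈ Finset.Ico S (t+1), β s := by
            rw [Finset.sum_Ico_succ_top hSt, Finset.sum_Ico_succ_top hSt]
            have e : Real.exp (-(δ * (∑ u ∈ Finset.Ico S t, ω u + ω t)))
                = Real.exp (-(δ * ω t)) * Real.exp (-(δ * ∑ u ∈ Finset.Ico S t, ω u)) := by
              rw [← Real.exp_add]; ring_nf
            rw [e]
            have h3 := mul_le_mul_of_nonneg_right hE1 hsums
            nlinarith [hxnn S, Real.exp_pos (-(δ * ∑ u ∈ Finset.Ico S t, ω u))]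
  rw [Metric.tendsto_atTop]
  intro εp hεp
  obtain ⟨S, hS⟩ : ∃ S, ∑' k, β (k + S) < εp / 2 := by
    have h1 : Tendsto (fun i => ∑' k, β (k + i)) atTop (𝓝 0) := tendsto_sum_nat_add β
    exact (h1.eventually_lt_const (by linarith)).exists
  have hsumshift : Summable (fun k => β (k + S)) := (summable_nat_add_iff S).2 hβs
  have hIco_le : ∀ t, ∑ s ∈ Finset.Ico S t, β s ≤ ∑' k, β (k + S) := by
    intro t
    rw [Finset.sum_Ico_eq_sum_range]
    calc ∑ i ∈ Finset.range (t - S), β (S + i)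
        = ∑ i ∈ Finset.range (t - S), β (i + S) := Finset.sum_congr rfl fun i _ => by rw [Nat.add_comm]
      _ ≤ ∑' k, β (k + S) := sum_le_hasSum _ (fun i _ => hβ0 _) hsumshift.hasSum
  have htendS : Tendsto (fun t => x S * Real.exp
      (-(δ * (∑ s ∈ Finset.range t, ω s - ∑ s ∈ Finset.range S, ω s)))) atTop (𝓝 0) := by
    have h1 : Tendsto (fun t => ∑ s ∈ Finset.range t, ω s - ∑ s ∈ Finset.range S, ω s) atTop atTop := by
      simpa [sub_eq_add_neg] using tendsto_atTop_add_const_right atTop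
        (-(∑ s ∈ Finset.range S, ω s)) hdiv
    have h2 : Tendsto (fun t => δ * (∑ s ∈ Finset.range t, ω s - ∑ s ∈ Finset.range S, ω s))
        atTop atTop := h1.const_mul_atTop hδ
    have h3 : Tendsto (fun t => -(δ * (∑ s ∈ Finset.range t, ω s - ∑ s ∈ Finset.range S, ω s)))
        atTop atBot := tendsto_neg_atBot_iff.mpr h2
    have h4 := Real.tendsto_exp_atBot.comp h3
    simpa using h4.const_mul (x S)
  have hev := (htendS.eventually_lt_const (show (0:ℝ) < εp/2 by linarith)).and
    (eventually_ge_atTop S)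
  obtain ⟨T₀, hT₀⟩ := eventually_atTop.mp hev
  refine ⟨T₀, fun t ht => ?_⟩
  obtain ⟨hlt, hSt⟩ := hT₀ t ht
  have hxt := key S t hSt
  have hIcoω : ∑ u ∈ Finset.Ico S t, ω u
      = ∑ s ∈ Finset.range t, ω s - ∑ s ∈ Finset.range S, ω s := Finset.sum_Ico_eq_sub _ hSt
  rw [Real.dist_eq, sub_zero, abs_of_nonneg (hxnn t)]
  have := hIco_le t
  rw [hIcoω] at hxt
  linarith


open Classical in
noncomputable def myReachFS {n₀ n₁ : ℕ} (A : Matrix (Fin n₀ ⊕ Fin n₁) (Fin n₀ ⊕ Fin n₁) ℝ) :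
    ℕ → Finset (Fin n₁)
  | 0 => ∅
  | m + 1 => myReachFS A m ∪ Finset.univ.filter (fun i =>
      (∃ k : Fin n₀, 0 < A (Sum.inr i) (Sum.inl k)) ∨
      ∃ j ∈ myReachFS A m, 0 < A (Sum.inr i) (Sum.inr j))

lemma my_exists_lyap (n₀ n₁ : ℕ) (hn₁ : 0 < n₁)
    (A : Matrix (Fin n₀ ⊕ Fin n₁) (Fin n₀ ⊕ Fin n₁) ℝ)
    (hoff : ∀ i j, i ≠ j → 0 ≤ A i j)
    (hdiag : ∀ i, A i i ∈ Set.Icc (-1 : ℝ) 0)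
    (hrowsum : ∀ i : Fin n₁, ∑ j, A (Sum.inr i) j = 0)
    (hreach : ∀ i : Fin n₁, ∃ (m : ℕ) (path : Fin (m + 1) → Fin n₀ ⊕ Fin n₁),
      1 ≤ m ∧ (∃ k : Fin n₀, path 0 = Sum.inl k) ∧ path (Fin.last m) = Sum.inr i ∧
      ∀ l : Fin m, 0 < A (path l.succ) (path l.castSucc)) :
    ∃ (v : Fin n₁ → ℝ) (δ : ℝ), 0 < δ ∧ δ ≤ 1 ∧ (∀ i, 1/2 ≤ v i ∧ v i ≤ 1) ∧
      ∀ i, ∑ j, A (Sum.inr i) (Sum.inr j) * v j ≤ -(δ * v i) := by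
  classical
  have hex : ∀ i : Fin n₁, ∃ m, i ∈ myReachFS A m := by
    intro i
    obtain ⟨m, path, hm, ⟨k0, hk0⟩, hlast, hedge⟩ := hreach i
    suffices h : ∀ l : ℕ, ∀ hl : l < m + 1, ∀ j, path ⟨l, hl⟩ = Sum.inr j → j ∈ myReachFS A l by
      exact ⟨m, h m (Nat.lt_succ_self m) i (by simpa [Fin.last] using hlast)⟩
    intro l
    induction l with
    | zero =>
      intro hl j hj
      rw [show (⟨0, hl⟩ : Fin (m+1)) = 0 from rfl, hk0] at hj
      simp at hj
    | succ l ih =>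
      intro hl j hj
      have hlm : l < m := by omega
      have hedge' := hedge ⟨l, hlm⟩
      have hsucc : (⟨l, hlm⟩ : Fin m).succ = (⟨l+1, hl⟩ : Fin (m+1)) := rfl
      have hcast : (⟨l, hlm⟩ : Fin m).castSucc = (⟨l, by omega⟩ : Fin (m+1)) := rfl
      rw [hsucc, hcast, hj] at hedge'
      rcases hpl : path ⟨l, by omega⟩ with k | j'
      · rw [hpl] at hedge'
        rw [myReachFS]
        exact Finset.mem_union_right _ (Finset.mem_filter.mpr
          ⟨Finset.mem_univ _, Or.inl ⟨k, hedge'⟩⟩)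
      · rw [hpl] at hedge'
        have hj' := ih (by omega) j' hpl
        rw [myReachFS]
        exact Finset.mem_union_right _ (Finset.mem_filter.mpr
          ⟨Finset.mem_univ _, Or.inr ⟨j', hj', hedge'⟩⟩)
  obtain ⟨d, hddef⟩ : ∃ d : Fin n₁ → ℕ, d = fun i => Nat.find (hex i) := ⟨_, rfl⟩
  have hdi_eq : ∀ i, d i = Nat.find (hex i) := fun i => by rw [hddef]
  have hd : ∀ i, i ∈ myReachFS A (d i) := by
    intro i; rw [hdi_eq]; exact Nat.find_spec (hex i)
  have hd1 : ∀ i, 1 ≤ d i := by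
    intro i
    by_contra h
    push_neg at h
    have h0 : d i = 0 := by omega
    have := hd i
    rw [h0] at this
    simp [myReachFS] at this
  have hstruct : ∀ i, (∃ k, 0 < A (Sum.inr i) (Sum.inl k)) ∨
      ∃ j, d j ≤ d i - 1 ∧ 0 < A (Sum.inr i) (Sum.inr j) ∧ j ≠ i := by
    intro i
    have hnot : i ∉ myReachFS A (d i - 1) := by
      rw [hdi_eq]
      refine Nat.find_min (hex i) ?_
      have h1 := hd1 i
      rw [hdi_eq] at h1
      omega
    have hmem : i ∈ myReachFS A ((d i - 1) + 1) := by
      have heq : d i = (d i - 1) + 1 := by have := hd1 i; omega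
      rw [← heq]; exact hd i
    rw [myReachFS] at hmem
    rcases Finset.mem_union.mp hmem with h | h
    · exact absurd h hnot
    · rcases (Finset.mem_filter.mp h).2 with h1 | ⟨j, hj, hjpos⟩
      · exact Or.inl h1
      · refine Or.inr ⟨j, ?_, hjpos, fun he => hnot (he ▸ hj)⟩
        rw [hdi_eq]
        exact Nat.find_min' (hex j) hj
  obtain ⟨E, hEdef⟩ : ∃ E : Finset ((Fin n₀ ⊕ Fin n₁) × (Fin n₀ ⊕ Fin n₁)),
      E = Finset.univ.filter (fun p => 0 < A p.1 p.2) := ⟨_, rfl⟩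
  have hEne : E.Nonempty := by
    rcases hstruct ⟨0, hn₁⟩ with ⟨k, hk⟩ | ⟨j, _, hj, _⟩
    · exact ⟨(Sum.inr ⟨0, hn₁⟩, Sum.inl k), by simp [hEdef, hk]⟩
    · exact ⟨(Sum.inr ⟨0, hn₁⟩, Sum.inr j), by simp [hEdef, hj]⟩
  obtain ⟨a, hadef⟩ : ∃ a : ℝ, a = min (E.inf' hEne fun p => A p.1 p.2) 1 := ⟨_, rfl⟩
  have hapos : 0 < a := by
    rw [hadef]
    refine lt_min ?_ one_pos
    rw [Finset.lt_inf'_iff]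
    intro p hp
    rw [hEdef] at hp
    exact (Finset.mem_filter.mp hp).2
  have ha1 : a ≤ 1 := by rw [hadef]; exact min_le_right _ _
  have hale : ∀ p q, 0 < A p q → a ≤ A p q := by
    intro p q h
    rw [hadef]
    refine le_trans (min_le_left _ _) ?_
    exact Finset.inf'_le _ (show (p, q) ∈ E by rw [hEdef]; simp [h])
  obtain ⟨c, hcdef⟩ : ∃ c : ℝ, c = a / 2 := ⟨_, rfl⟩
  have hc0 : 0 < c := by rw [hcdef]; positivity
  have hc1 : c ≤ 1 := by rw [hcdef]; linarith
  obtain ⟨D, hDdef⟩ : ∃ D : ℕ, D = Finset.univ.sup d := ⟨_, rfl⟩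
  have hdD : ∀ i, d i ≤ D := by
    intro i; rw [hDdef]; exact Finset.le_sup (Finset.mem_univ i)
  obtain ⟨v, hvdef⟩ : ∃ v : Fin n₁ → ℝ, v = fun i => 1 - (1/2) * c ^ (d i) := ⟨_, rfl⟩
  obtain ⟨δ, hδdef⟩ : ∃ δ : ℝ, δ = (1/2) * c ^ D := ⟨_, rfl⟩
  have hvi : ∀ i, v i = 1 - (1/2) * c ^ (d i) := fun i => by rw [hvdef]
  have hpow_pos : ∀ n : ℕ, 0 < c ^ n := fun n => pow_pos hc0 n
  have hpow_le1 : ∀ n : ℕ, c ^ n ≤ 1 := fun n => pow_le_one₀ hc0.le hc1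
  have hδ0 : 0 < δ := by rw [hδdef]; positivity
  have hδ1 : δ ≤ 1 := by have := hpow_le1 D; rw [hδdef]; linarith
  have hv12 : ∀ i, 1/2 ≤ v i ∧ v i ≤ 1 := by
    intro i
    rw [hvi i]
    constructor
    · linarith [hpow_le1 (d i)]
    · linarith [(hpow_pos (d i)).le]
  refine ⟨v, δ, hδ0, hδ1, hv12, ?_⟩
  intro i
  have hv1 : ∀ j, v j ≤ 1 := fun j => (hv12 j).2
  have hv0 : ∀ j, 0 ≤ v j := fun j => le_trans (by norm_num) (hv12 j).1
  obtain ⟨M, hMdef⟩ : ∃ M : Fin n₁ → ℝ,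
      M = fun j => (if j = i then (1:ℝ) else 0) + A (Sum.inr i) (Sum.inr j) := ⟨_, rfl⟩
  have hMj : ∀ j, M j = (if j = i then (1:ℝ) else 0) + A (Sum.inr i) (Sum.inr j) :=
    fun j => by rw [hMdef]
  have hMnn : ∀ j, 0 ≤ M j := by
    intro j
    by_cases h : j = i
    · subst h
      rw [hMj j, if_pos rfl]
      have := (hdiag (Sum.inr j)).1
      linarith
    · rw [hMj j, if_neg h, zero_add]
      exact hoff _ _ (fun he => h (Sum.inr.inj he).symm)
  have hrow_inr : ∑ j, A (Sum.inr i) (Sum.inr j) = -(∑ k, A (Sum.inr i) (Sum.inl k)) := by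
    have h := hrowsum i
    rw [Fintype.sum_sum_type] at h
    linarith
  have hstub_nn : 0 ≤ ∑ k, A (Sum.inr i) (Sum.inl k) :=
    Finset.sum_nonneg fun k _ => hoff _ _ (by simp)
  have hMrow' : ∑ j, M j = 1 + ∑ j, A (Sum.inr i) (Sum.inr j) := by
    rw [hMdef, Finset.sum_add_distrib]
    congr 1
    simp
  have hQ : ∑ j, M j * v j ≤ 1 - c ^ (d i) := by
    rcases hstruct i with ⟨k0, hk0⟩ | ⟨j0, hj0le, hj0pos, hj0ne⟩
    · have h1 : ∑ j, M j * v j ≤ ∑ j, M j := by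
        refine Finset.sum_le_sum fun j _ => ?_
        have := mul_le_mul_of_nonneg_left (hv1 j) (hMnn j)
        simpa using this
      have h3 : a ≤ ∑ k, A (Sum.inr i) (Sum.inl k) :=
        le_trans (hale _ _ hk0)
          (Finset.single_le_sum (fun k _ => hoff _ _ (by simp)) (Finset.mem_univ k0))
      have h4 : c ^ (d i) ≤ c := by
        calc c ^ (d i) ≤ c ^ 1 := pow_le_pow_of_le_one hc0.le hc1 (hd1 i)
          _ = c := pow_one c
      have h5 : ∑ j, M j = 1 - ∑ k, A (Sum.inr i) (Sum.inl k) := by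
        rw [hMrow', hrow_inr]; ring
      have hca : c ≤ a := by rw [hcdef]; linarith
      linarith
    · have hsplit : ∑ j, M j * v j = ∑ j ∈ Finset.univ.erase j0, M j * v j + M j0 * v j0 :=
        (Finset.sum_erase_add _ _ (Finset.mem_univ j0)).symm
      have h1 : ∑ j ∈ Finset.univ.erase j0, M j * v j ≤ ∑ j ∈ Finset.univ.erase j0, M j := by
        refine Finset.sum_le_sum fun j _ => ?_
        have := mul_le_mul_of_nonneg_left (hv1 j) (hMnn j)
        simpa using this
      have h2 : ∑ j ∈ Finset.univ.erase j0, M j = ∑ j, M j - M j0 := by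
        rw [← Finset.sum_erase_add Finset.univ M (Finset.mem_univ j0)]; ring
      have hMj0 : a ≤ M j0 := by
        have h : M j0 = A (Sum.inr i) (Sum.inr j0) := by rw [hMj j0, if_neg hj0ne, zero_add]
        rw [h]
        exact hale _ _ hj0pos
      have hpj0 : c ^ (d j0) ≥ c ^ (d i - 1) := pow_le_pow_of_le_one hc0.le hc1 hj0le
      have hrowle : ∑ j, M j ≤ 1 := by rw [hMrow', hrow_inr]; linarith
      have hpow_eq : c * c ^ (d i - 1) = c ^ (d i) := by
        rw [← pow_succ']
        congr 1
        have := hd1 i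
        omega
      have hprod : a * c ^ (d i - 1) ≤ M j0 * c ^ (d j0) :=
        mul_le_mul hMj0 hpj0 (hpow_pos _).le (le_trans hapos.le hMj0)
      have hfin : (1/2) * (a * c ^ (d i - 1)) = c ^ (d i) := by
        rw [← hpow_eq, hcdef]; ring
      have hMv : M j0 * v j0 = M j0 - (1/2) * (M j0 * c ^ (d j0)) := by
        rw [hvi j0]; ring
      linarith
  have hAv : ∑ j, A (Sum.inr i) (Sum.inr j) * v j = (∑ j, M j * v j) - v i := by
    rw [hMdef]
    simp only [add_mul, Finset.sum_add_distrib, ite_mul, one_mul, zero_mul,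
      Finset.sum_ite_eq', Finset.mem_univ, if_true]
    ring
  have hδle : δ * v i ≤ (1/2) * c ^ (d i) := by
    have h1 : c ^ D ≤ c ^ (d i) := pow_le_pow_of_le_one hc0.le hc1 (hdD i)
    have h4 : c ^ D * v i ≤ c ^ D := mul_le_of_le_one_right (hpow_pos D).le (hv1 i)
    rw [hδdef]
    nlinarith [hv0 i, hpow_pos D]
  rw [hAv]
  linarith [hQ, hδle, hvi i]

/-- Under reachability, divergence of `∑ₛ minᵢ ωᵢ(s)` and convergence of
`∑ₛ maxᵢ ωᵢ(s)²`, each entry of the covariance matrix of the opinion process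
`θ(t+1) = (I + Ω(t)A) θ(t) + Ω(t) ε(t)` tends to zero. -/
theorem opinion_covariance_tendsto_zero
    (n₀ n₁ : ℕ) (hn₀ : 0 < n₀) (hn₁ : 0 < n₁)
    (A : Matrix (Fin n₀ ⊕ Fin n₁) (Fin n₀ ⊕ Fin n₁) ℝ)
    (hrow0 : ∀ (i : Fin n₀) (j : Fin n₀ ⊕ Fin n₁), A (Sum.inl i) j = 0)
    (hoff : ∀ i j, i ≠ j → 0 ≤ A i j)
    (hdiag : ∀ i, A i i ∈ Set.Icc (-1 : ℝ) 0)
    (hrowsum : ∀ i : Fin n₁, ∑ j, A (Sum.inr i) j = 0)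
    (hreach : ∀ i : Fin n₁, ∃ (m : ℕ) (path : Fin (m + 1) → Fin n₀ ⊕ Fin n₁),
      1 ≤ m ∧ (∃ k : Fin n₀, path 0 = Sum.inl k) ∧ path (Fin.last m) = Sum.inr i ∧
      ∀ l : Fin m, 0 < A (path l.succ) (path l.castSucc))
    (w : ℕ → Fin n₁ → ℝ) (hw : ∀ t i, w t i ∈ Set.Icc (0 : ℝ) 1)
    (hdiv : Tendsto (fun T => ∑ s ∈ Finset.range T, ⨅ i, w s i) atTop atTop)
    (hsq : Summable fun s => ⨆ i, (w s i) ^ 2)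
    {Ωs : Type*} [MeasurableSpace Ωs] (μ : Measure Ωs) [IsProbabilityMeasure μ]
    (θ0 : (Fin n₀ ⊕ Fin n₁) → ℝ) (hθ0 : ∀ i, θ0 i ∈ Set.Icc (0 : ℝ) 1)
    (θ ε : ℕ → Ωs → (Fin n₀ ⊕ Fin n₁) → ℝ)
    (hθinit : ∀ x, θ 0 x = θ0)
    (hεmeas : ∀ t, Measurable (ε t))
    (hεrange : ∀ t x i, ε t x i ∈ Set.Icc (-1 : ℝ) 1)
    (hrec : ∀ t x, θ (t + 1) x =
      (1 + Matrix.diagonal (Sum.elim 0 (w t)) * A) *ᵥ θ t x +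
        Matrix.diagonal (Sum.elim 0 (w t)) *ᵥ ε t x)
    (hcond : ∀ t i, μ[(fun x => ε t x i) |
        ⨆ s ∈ Finset.range (t + 1), MeasurableSpace.comap (θ s) inferInstance] =ᵐ[μ] 0) :
    ∀ i j, Tendsto (fun t => ∫ x, θ t x i * θ t x j ∂μ -
      (∫ x, θ t x i ∂μ) * ∫ x, θ t x j ∂μ) atTop (𝓝 0) := by
  classical
  haveI : Nonempty (Fin n₁) := ⟨⟨0, hn₁⟩⟩
  -- weight function on the sum type
  obtain ⟨dW, hdWdef⟩ : ∃ dW : ℕ → (Fin n₀ ⊕ Fin n₁) → ℝ,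
      dW = fun t => Sum.elim (0 : Fin n₀ → ℝ) (w t) := ⟨_, rfl⟩
  have hdWl : ∀ t k, dW t (Sum.inl k) = 0 := fun t k => by rw [hdWdef]; rfl
  have hdWr : ∀ t i, dW t (Sum.inr i) = w t i := fun t i => by rw [hdWdef]; rfl
  have hdW01 : ∀ t i, 0 ≤ dW t i ∧ dW t i ≤ 1 := by
    rintro t (k | i)
    · rw [hdWl]; norm_num
    · rw [hdWr]; exact ⟨(hw t i).1, (hw t i).2⟩
  -- the matrix B
  obtain ⟨B, hBdef⟩ : ∃ B : ℕ → Matrix (Fin n₀ ⊕ Fin n₁) (Fin n₀ ⊕ Fin n₁) ℝ,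
      B = fun t => 1 + Matrix.diagonal (dW t) * A := ⟨_, rfl⟩
  have hBapp : ∀ t i j, B t i j = (if i = j then (1:ℝ) else 0) + dW t i * A i j := by
    intro t i j
    rw [hBdef]
    simp [Matrix.add_apply, Matrix.one_apply, Matrix.diagonal_mul]
  have hBnn : ∀ t i j, 0 ≤ B t i j := by
    intro t i j
    rw [hBapp]
    by_cases h : i = j
    · subst h
      rw [if_pos rfl]
      have h1 := (hdiag i).1
      have h2 := (hdiag i).2
      have h3 := (hdW01 t i).1
      have h4 := (hdW01 t i).2
      nlinarith
    · rw [if_neg h, zero_add]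
      exact mul_nonneg (hdW01 t i).1 (hoff i j h)
  have hBrow : ∀ t i, ∑ j, B t i j = 1 := by
    intro t i
    have h1 : ∑ j, B t i j = (∑ j, if i = j then (1:ℝ) else 0) + dW t i * ∑ j, A i j := by
      rw [Finset.mul_sum]
      rw [← Finset.sum_add_distrib]
      exact Finset.sum_congr rfl fun j _ => by rw [hBapp]
    rw [h1]
    rcases i with k | i
    · rw [hdWl]
      simp
    · rw [hdWr, hrowsum i]
      simp
  -- pointwise recursion
  have hstep : ∀ t x i, θ (t+1) x i = (∑ j, B t i j * θ t x j) + dW t i * ε t x i := by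
    intro t x i
    have h := congrFun (hrec t x) i
    have e1 : ((1 + Matrix.diagonal (Sum.elim (0 : Fin n₀ → ℝ) (w t)) * A) *ᵥ θ t x) i
        = θ t x i + Sum.elim (0 : Fin n₀ → ℝ) (w t) i * (A *ᵥ θ t x) i := by
      rw [Matrix.add_mulVec, Matrix.one_mulVec, ← Matrix.mulVec_mulVec, Pi.add_apply,
        Matrix.mulVec_diagonal]
    have e2 : (Matrix.diagonal (Sum.elim (0 : Fin n₀ → ℝ) (w t)) *ᵥ ε t x) i
        = Sum.elim (0 : Fin n₀ → ℝ) (w t) i * ε t x i := Matrix.mulVec_diagonal _ _ _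
    have e4 : (A *ᵥ θ t x) i = ∑ j, A i j * θ t x j := rfl
    have e3 : ∑ j, B t i j * θ t x j = θ t x i + dW t i * ∑ j, A i j * θ t x j := by
      simp only [hBapp, add_mul, Finset.sum_add_distrib, ite_mul, one_mul, zero_mul]
      congr 1
      · simp
      · rw [Finset.sum_congr rfl (fun j _ => mul_assoc (dW t i) (A i j) (θ t x j)),
          ← Finset.mul_sum]
    rw [h, Pi.add_apply, e1, e2, e3, e4, hdWdef]
  -- stubborn coordinates are constant
  have hθl : ∀ t x k, θ t x (Sum.inl k) = θ0 (Sum.inl k) := by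
    intro t
    induction t with
    | zero => intro x k; rw [hθinit]
    | succ t ih =>
      intro x k
      rw [hstep, hdWl, zero_mul, add_zero]
      have h1 : ∀ j, B t (Sum.inl k) j = if (Sum.inl k : Fin n₀ ⊕ Fin n₁) = j then (1:ℝ) else 0 := by
        intro j
        rw [hBapp, hdWl, zero_mul, add_zero]
      calc ∑ j, B t (Sum.inl k) j * θ t x j
          = ∑ j, (if (Sum.inl k : Fin n₀ ⊕ Fin n₁) = j then (1:ℝ) else 0) * θ t x j :=
            Finset.sum_congr rfl fun j _ => by rw [h1]
        _ = θ t x (Sum.inl k) := by simp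
        _ = θ0 (Sum.inl k) := ih x k
  -- measurability
  have hθmeas : ∀ t, Measurable (θ t) := by
    intro t
    induction t with
    | zero =>
      have : θ 0 = fun _ => θ0 := funext hθinit
      rw [this]
      exact measurable_const
    | succ t ih =>
      apply measurable_pi_lambda
      intro i
      have h : (fun x => θ (t+1) x i)
          = fun x => (∑ j, B t i j * θ t x j) + dW t i * ε t x i :=
        funext fun x => hstep t x i
      rw [h]
      exact (Finset.measurable_sum _ fun j _ =>
        (measurable_const.mul ((measurable_pi_apply j).comp ih))).add
        (measurable_const.mul ((measurable_pi_apply i).comp (hεmeas t)))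
  -- boundedness
  have hεbd : ∀ t x i, |ε t x i| ≤ 1 := fun t x i =>
    abs_le.mpr ⟨(hεrange t x i).1, (hεrange t x i).2⟩
  have hθbd : ∀ t x i, |θ t x i| ≤ (t : ℝ) + 1 := by
    intro t
    induction t with
    | zero =>
      intro x i
      rw [hθinit]
      simp only [Nat.cast_zero, zero_add]
      exact abs_le.mpr ⟨by linarith [(hθ0 i).1], (hθ0 i).2⟩
    | succ t ih =>
      intro x i
      rw [hstep]
      have h1 : |∑ j, B t i j * θ t x j| ≤ ∑ j, B t i j * ((t:ℝ)+1) := by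
        refine (Finset.abs_sum_le_sum_abs _ _).trans (Finset.sum_le_sum fun j _ => ?_)
        rw [abs_mul, abs_of_nonneg (hBnn t i j)]
        exact mul_le_mul_of_nonneg_left (ih x j) (hBnn t i j)
      have h2 : ∑ j, B t i j * ((t:ℝ)+1) = (t:ℝ)+1 := by
        rw [← Finset.sum_mul, hBrow, one_mul]
      have h3 : |dW t i * ε t x i| ≤ 1 := by
        rw [abs_mul]
        have := hdW01 t i
        have h4 := hεbd t x i
        have h5 : |dW t i| ≤ 1 := abs_le.mpr ⟨by linarith [this.1], this.2⟩
        nlinarith [abs_nonneg (dW t i), abs_nonneg (ε t x i)]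
      calc |(∑ j, B t i j * θ t x j) + dW t i * ε t x i|
          ≤ |∑ j, B t i j * θ t x j| + |dW t i * ε t x i| := abs_add_le _ _
        _ ≤ ((t:ℝ)+1) + 1 := by linarith
        _ = ((t+1 : ℕ) : ℝ) + 1 := by push_cast; ring
  -- integrability
  have hθmeasi : ∀ t i, Measurable (fun x => θ t x i) :=
    fun t i => (measurable_pi_apply i).comp (hθmeas t)
  have hεmeasi : ∀ t i, Measurable (fun x => ε t x i) :=
    fun t i => (measurable_pi_apply i).comp (hεmeas t)
  have hIθ : ∀ t i, Integrable (fun x => θ t x i) μ :=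
    fun t i => my_integrable_of_bdd (hθmeasi t i) (fun x => hθbd t x i)
  have hIε : ∀ t i, Integrable (fun x => ε t x i) μ :=
    fun t i => my_integrable_of_bdd (hεmeasi t i) (fun x => hεbd t x i)
  have hIθθ : ∀ t i j, Integrable (fun x => θ t x i * θ t x j) μ := by
    intro t i j
    refine my_integrable_of_bdd ((hθmeasi t i).mul (hθmeasi t j))
      (C := ((t:ℝ)+1) * ((t:ℝ)+1)) (fun x => ?_)
    rw [abs_mul]
    exact mul_le_mul (hθbd t x i) (hθbd t x j) (abs_nonneg _) (by positivity)
  have hIθε : ∀ t s i j, Integrable (fun x => θ t x i * ε s x j) μ := by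
    intro t s i j
    refine my_integrable_of_bdd ((hθmeasi t i).mul (hεmeasi s j))
      (C := ((t:ℝ)+1) * 1) (fun x => ?_)
    rw [abs_mul]
    exact mul_le_mul (hθbd t x i) (hεbd s x j) (abs_nonneg _) (by positivity)
  have hIεε : ∀ t i j, Integrable (fun x => ε t x i * ε t x j) μ := by
    intro t i j
    refine my_integrable_of_bdd ((hεmeasi t i).mul (hεmeasi t j)) (C := 1 * 1) (fun x => ?_)
    rw [abs_mul]
    exact mul_le_mul (hεbd t x i) (hεbd t x j) (abs_nonneg _) (by positivity)
  -- the filtration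
  have hFle : ∀ t : ℕ, (⨆ s ∈ Finset.range (t + 1), MeasurableSpace.comap (θ s) inferInstance)
      ≤ (inferInstance : MeasurableSpace Ωs) :=
    fun t => iSup₂_le fun s _ => measurable_iff_comap_le.mp (hθmeas s)
  have hθsm : ∀ t i, StronglyMeasurable[⨆ s ∈ Finset.range (t + 1),
      MeasurableSpace.comap (θ s) inferInstance] (fun x => θ t x i) := by
    intro t i
    have h1 : MeasurableSpace.comap (θ t) inferInstance
        ≤ ⨆ s ∈ Finset.range (t + 1), MeasurableSpace.comap (θ s) inferInstance :=
      le_iSup₂ (f := fun (s : ℕ) (_ : s ∈ Finset.range (t + 1)) =>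
        MeasurableSpace.comap (θ s) inferInstance) t (Finset.self_mem_range_succ t)
    have h2 : Measurable[MeasurableSpace.comap (θ t) inferInstance] (θ t) :=
      measurable_iff_comap_le.mpr le_rfl
    exact (((measurable_pi_apply i).comp h2).mono h1 le_rfl).stronglyMeasurable
  -- zero mean of noise
  have hε0 : ∀ t i, ∫ x, ε t x i ∂μ = 0 := by
    intro t i
    rw [← integral_condExp (hFle t) (f := fun x => ε t x i)]
    rw [integral_congr_ae (hcond t i)]
    simp
  -- orthogonality
  have hθε0 : ∀ t i j, ∫ x, θ t x i * ε t x j ∂μ = 0 := by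
    intro t i j
    have hmul : μ[(fun x => θ t x i) * (fun x => ε t x j) |
        ⨆ s ∈ Finset.range (t + 1), MeasurableSpace.comap (θ s) inferInstance]
        =ᵐ[μ] (fun x => θ t x i) * μ[(fun x => ε t x j) |
        ⨆ s ∈ Finset.range (t + 1), MeasurableSpace.comap (θ s) inferInstance] :=
      condExp_mul_of_stronglyMeasurable_left (hθsm t i) (hIθε t t i j) (hIε t j)
    have h1 : ∫ x, θ t x i * ε t x j ∂μ
        = ∫ x, ((fun x => θ t x i) * (fun x => ε t x j)) x ∂μ := rfl
    rw [h1, ← integral_condExp (hFle t) (f := (fun x => θ t x i) * (fun x => ε t x j)),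
      integral_congr_ae hmul]
    have h2 : (fun x => θ t x i) * μ[(fun x => ε t x j) |
        ⨆ s ∈ Finset.range (t + 1), MeasurableSpace.comap (θ s) inferInstance]
        =ᵐ[μ] 0 := by
      filter_upwards [hcond t j] with x hx
      simp only [Pi.mul_apply, Pi.zero_apply] at hx ⊢
      rw [hx, mul_zero]
    rw [integral_congr_ae h2]
    simp
  -- mean recursion
  have hmean : ∀ t i, (∫ x, θ (t+1) x i ∂μ) = ∑ j, B t i j * ∫ x, θ t x j ∂μ := by
    intro t i
    have h1 : (fun x => θ (t+1) x i)
        = fun x => (∑ j, B t i j * θ t x j) + dW t i * ε t x i :=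
      funext fun x => hstep t x i
    rw [h1, integral_add (integrable_finset_sum _ fun j _ => (hIθ t j).const_mul _)
      ((hIε t i).const_mul _),
      integral_finset_sum _ fun j _ => (hIθ t j).const_mul _]
    have h2 : ∫ x, dW t i * ε t x i ∂μ = dW t i * ∫ x, ε t x i ∂μ := integral_const_mul _ _
    rw [h2, hε0 t i, mul_zero, add_zero]
    exact Finset.sum_congr rfl fun j _ => integral_const_mul _ _
  -- second moment recursion
  have hmom : ∀ t i j, (∫ x, θ (t+1) x i * θ (t+1) x j ∂μ)
      = (∑ k, ∑ l, B t i k * B t j l * ∫ x, θ t x k * θ t x l ∂μ)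
        + dW t i * dW t j * ∫ x, ε t x i * ε t x j ∂μ := by
    intro t i j
    have e2 : ∀ x : Ωs, (∑ k, B t i k * θ t x k) * (dW t j * ε t x j)
        = ∑ k, B t i k * dW t j * (θ t x k * ε t x j) := by
      intro x
      rw [Finset.sum_mul]
      exact Finset.sum_congr rfl fun k _ => by ring
    have e3 : ∀ x : Ωs, (dW t i * ε t x i) * (∑ l, B t j l * θ t x l)
        = ∑ l, B t j l * dW t i * (θ t x l * ε t x i) := by
      intro x
      rw [Finset.mul_sum]
      exact Finset.sum_congr rfl fun l _ => by ring
    have e1 : ∀ x : Ωs, (∑ k, B t i k * θ t x k) * (∑ l, B t j l * θ t x l)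
        = ∑ k, ∑ l, B t i k * B t j l * (θ t x k * θ t x l) := by
      intro x
      rw [Finset.sum_mul_sum]
      exact Finset.sum_congr rfl fun k _ => Finset.sum_congr rfl fun l _ => by ring
    have hexp : (fun x => θ (t+1) x i * θ (t+1) x j) = fun x =>
        (∑ k, ∑ l, B t i k * B t j l * (θ t x k * θ t x l))
        + ((∑ k, B t i k * dW t j * (θ t x k * ε t x j))
        + ((∑ l, B t j l * dW t i * (θ t x l * ε t x i))
        + dW t i * dW t j * (ε t x i * ε t x j))) := by
      funext x
      rw [hstep t x i, hstep t x j, ← e1 x, ← e2 x, ← e3 x]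
      ring
    have hint1 : Integrable (fun x => ∑ k, ∑ l, B t i k * B t j l * (θ t x k * θ t x l)) μ :=
      integrable_finset_sum _ fun k _ => integrable_finset_sum _ fun l _ =>
        (hIθθ t k l).const_mul _
    have hint2 : Integrable (fun x => ∑ k, B t i k * dW t j * (θ t x k * ε t x j)) μ :=
      integrable_finset_sum _ fun k _ => (hIθε t t k j).const_mul _
    have hint3 : Integrable (fun x => ∑ l, B t j l * dW t i * (θ t x l * ε t x i)) μ :=
      integrable_finset_sum _ fun l _ => (hIθε t t l i).const_mul _
    have hint4 : Integrable (fun x => dW t i * dW t j * (ε t x i * ε t x j)) μ :=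
      (hIεε t i j).const_mul _
    have hint34 : Integrable (fun x => (∑ l, B t j l * dW t i * (θ t x l * ε t x i))
        + dW t i * dW t j * (ε t x i * ε t x j)) μ := hint3.add hint4
    have hint234 : Integrable (fun x => (∑ k, B t i k * dW t j * (θ t x k * ε t x j))
        + ((∑ l, B t j l * dW t i * (θ t x l * ε t x i))
          + dW t i * dW t j * (ε t x i * ε t x j))) μ := hint2.add hint34
    rw [hexp, integral_add hint1 hint234, integral_add hint2 hint34, integral_add hint3 hint4]
    have hI1 : ∫ x, (∑ k, ∑ l, B t i k * B t j l * (θ t x k * θ t x l)) ∂μ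
        = ∑ k, ∑ l, B t i k * B t j l * ∫ x, θ t x k * θ t x l ∂μ := by
      rw [integral_finset_sum _ fun k _ => integrable_finset_sum _ fun l _ =>
        (hIθθ t k l).const_mul _]
      refine Finset.sum_congr rfl fun k _ => ?_
      rw [integral_finset_sum _ fun l _ => (hIθθ t k l).const_mul _]
      exact Finset.sum_congr rfl fun l _ => integral_const_mul _ _
    have hI2 : ∫ x, (∑ k, B t i k * dW t j * (θ t x k * ε t x j)) ∂μ = 0 := by
      rw [integral_finset_sum _ fun k _ => (hIθε t t k j).const_mul _]
      refine Finset.sum_eq_zero fun k _ => ?_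
      rw [integral_const_mul, hθε0 t k j, mul_zero]
    have hI3 : ∫ x, (∑ l, B t j l * dW t i * (θ t x l * ε t x i)) ∂μ = 0 := by
      rw [integral_finset_sum _ fun l _ => (hIθε t t l i).const_mul _]
      refine Finset.sum_eq_zero fun l _ => ?_
      rw [integral_const_mul, hθε0 t l i, mul_zero]
    have hI4 : ∫ x, dW t i * dW t j * (ε t x i * ε t x j) ∂μ
        = dW t i * dW t j * ∫ x, ε t x i * ε t x j ∂μ := integral_const_mul _ _
    rw [hI1, hI2, hI3, hI4]
    ring
  -- covariance
  obtain ⟨Cov, hCovdef⟩ : ∃ Cov : ℕ → (Fin n₀ ⊕ Fin n₁) → (Fin n₀ ⊕ Fin n₁) → ℝ,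
      Cov = fun t i j => (∫ x, θ t x i * θ t x j ∂μ)
        - (∫ x, θ t x i ∂μ) * ∫ x, θ t x j ∂μ := ⟨_, rfl⟩
  have hCov : ∀ t i j, Cov t i j = (∫ x, θ t x i * θ t x j ∂μ)
      - (∫ x, θ t x i ∂μ) * ∫ x, θ t x j ∂μ := fun t i j => by rw [hCovdef]
  have hCrec : ∀ t i j, Cov (t+1) i j
      = (∑ k, ∑ l, B t i k * B t j l * Cov t k l)
        + dW t i * dW t j * ∫ x, ε t x i * ε t x j ∂μ := by
    intro t i j
    have h1 : (∫ x, θ (t+1) x i ∂μ) * ∫ x, θ (t+1) x j ∂μ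
        = ∑ k, ∑ l, B t i k * B t j l * ((∫ x, θ t x k ∂μ) * ∫ x, θ t x l ∂μ) := by
      rw [hmean t i, hmean t j, Finset.sum_mul_sum]
      exact Finset.sum_congr rfl fun k _ => Finset.sum_congr rfl fun l _ => by ring
    rw [hCov, hmom, h1]
    have h2 : ∑ k, ∑ l, B t i k * B t j l * Cov t k l
        = (∑ k, ∑ l, B t i k * B t j l * ∫ x, θ t x k * θ t x l ∂μ)
          - ∑ k, ∑ l, B t i k * B t j l * ((∫ x, θ t x k ∂μ) * ∫ x, θ t x l ∂μ) := by
      rw [← Finset.sum_sub_distrib]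
      refine Finset.sum_congr rfl fun k _ => ?_
      rw [← Finset.sum_sub_distrib]
      refine Finset.sum_congr rfl fun l _ => ?_
      rw [hCov]
      ring
    rw [h2]
    ring
  -- stubborn rows and columns of Cov vanish
  have hθconst : ∀ t k, (fun x => θ t x (Sum.inl k)) = fun _ => θ0 (Sum.inl k) :=
    fun t k => funext fun x => hθl t x k
  have hCzL : ∀ t k j, Cov t (Sum.inl k) j = 0 := by
    intro t k j
    rw [hCov]
    have h1 : ∫ x, θ t x (Sum.inl k) * θ t x j ∂μ = θ0 (Sum.inl k) * ∫ x, θ t x j ∂μ := by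
      have : (fun x => θ t x (Sum.inl k) * θ t x j)
          = fun x => θ0 (Sum.inl k) * θ t x j := funext fun x => by rw [hθl t x k]
      rw [this, integral_const_mul]
    have h2 : ∫ x, θ t x (Sum.inl k) ∂μ = θ0 (Sum.inl k) := by
      rw [hθconst t k]
      simp
    rw [h1, h2]
    ring
  have hCzR : ∀ t j k, Cov t j (Sum.inl k) = 0 := by
    intro t j k
    rw [hCov]
    have h1 : ∫ x, θ t x j * θ t x (Sum.inl k) ∂μ = (∫ x, θ t x j ∂μ) * θ0 (Sum.inl k) := by
      have : (fun x => θ t x j * θ t x (Sum.inl k))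
          = fun x => θ t x j * θ0 (Sum.inl k) := funext fun x => by rw [hθl t x k]
      rw [this, integral_mul_const]
    have h2 : ∫ x, θ t x (Sum.inl k) ∂μ = θ0 (Sum.inl k) := by
      rw [hθconst t k]
      simp
    rw [h1, h2]
    ring
  -- bound on noise second moments
  have hEbd : ∀ t i j, |∫ x, ε t x i * ε t x j ∂μ| ≤ 1 := by
    intro t i j
    have h1 : |∫ x, ε t x i * ε t x j ∂μ| ≤ ∫ x, |ε t x i| * |ε t x j| ∂μ := by
      have := norm_integral_le_integral_norm (f := fun x => ε t x i * ε t x j) (μ := μ)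
      simpa [Real.norm_eq_abs, abs_mul] using this
    have h2 : ∫ x, |ε t x i| * |ε t x j| ∂μ ≤ ∫ x, (1:ℝ) ∂μ := by
      have habs : Integrable (fun x => |ε t x i| * |ε t x j|) μ := by
        have := (hIεε t i j).abs
        simpa [abs_mul] using this
      refine integral_mono habs (integrable_const 1) fun x => ?_
      exact mul_le_one₀ (hεbd t x i) (abs_nonneg _) (hεbd t x j)
    have h3 : ∫ x, (1:ℝ) ∂μ = 1 := by simp
    linarith
  -- weights
  obtain ⟨ωm, hωmdef⟩ : ∃ f : ℕ → ℝ, f = fun t => ⨅ i, w t i := ⟨_, rfl⟩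
  obtain ⟨Wm, hWmdef⟩ : ∃ f : ℕ → ℝ, f = fun t => ⨆ i, (w t i)^2 := ⟨_, rfl⟩
  have hωm_le : ∀ t i, ωm t ≤ w t i := by
    intro t i
    rw [hωmdef]
    show (⨅ i, w t i) ≤ w t i
    exact ciInf_le (f := fun i => w t i) (Set.Finite.bddBelow (Set.finite_range _)) i
  have hωm_nn : ∀ t, 0 ≤ ωm t := by
    intro t
    rw [hωmdef]
    show (0:ℝ) ≤ ⨅ i, w t i
    exact le_ciInf fun i => (hw t i).1
  have hωm_1 : ∀ t, ωm t ≤ 1 := fun t => le_trans (hωm_le t ⟨0, hn₁⟩) (hw t _).2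
  have hWm_ge : ∀ t i, (w t i)^2 ≤ Wm t := by
    intro t i
    rw [hWmdef]
    show w t i ^ 2 ≤ ⨆ i, w t i ^ 2
    exact le_ciSup (f := fun i => w t i ^ 2) (Set.Finite.bddAbove (Set.finite_range _)) i
  have hWm_nn : ∀ t, 0 ≤ Wm t := fun t => le_trans (sq_nonneg _) (hWm_ge t ⟨0, hn₁⟩)
  -- Lyapunov data
  obtain ⟨v, δ, hδ0, hδ1, hv12, hkeyv⟩ := my_exists_lyap n₀ n₁ hn₁ A hoff hdiag hrowsum hreach
  have hv0 : ∀ i, 0 ≤ v i := fun i => le_trans (by norm_num) (hv12 i).1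
  -- weighted row sums
  have hBv : ∀ t (i : Fin n₁),
      (∑ k, B t (Sum.inr i) (Sum.inr k) * v k) ≤ (1 - δ * w t i) * v i := by
    intro t i
    have h2 : ∀ k, B t (Sum.inr i) (Sum.inr k) * v k
        = (if i = k then (1:ℝ) else 0) * v k + w t i * (A (Sum.inr i) (Sum.inr k) * v k) := by
      intro k
      rw [hBapp, hdWr]
      simp only [Sum.inr.injEq]
      ring
    have h1 : ∑ k, B t (Sum.inr i) (Sum.inr k) * v k
        = v i + w t i * ∑ k, A (Sum.inr i) (Sum.inr k) * v k := by
      rw [Finset.sum_congr rfl fun k _ => h2 k, Finset.sum_add_distrib, ← Finset.mul_sum]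
      congr 1
      simp [ite_mul]
    rw [h1]
    have h3 := mul_le_mul_of_nonneg_left (hkeyv i) (hw t i).1
    have h4 : w t i * -(δ * v i) = -(δ * w t i * v i) := by ring
    have h5 : (1 - δ * w t i) * v i = v i - δ * w t i * v i := by ring
    linarith
  have hBvnn : ∀ t (i : Fin n₁), 0 ≤ ∑ k, B t (Sum.inr i) (Sum.inr k) * v k :=
    fun t i => Finset.sum_nonneg fun k _ => mul_nonneg (hBnn t _ _) (hv0 k)
  have h1δw : ∀ t (i : Fin n₁), 0 ≤ 1 - δ * w t i := by
    intro t i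
    have h1 := (hw t i).1; have h2 := (hw t i).2
    nlinarith
  -- the scalar majorant sequence
  obtain ⟨M, hMseq⟩ : ∃ M : ℕ → ℝ, M = fun t => Nat.rec (motive := fun _ => ℝ) 0
      (fun s Ms => (1 - δ * ωm s) * Ms + 4 * Wm s) t := ⟨_, rfl⟩
  have hM0 : M 0 = 0 := by rw [hMseq]; rfl
  have hMstep : ∀ t, M (t+1) = (1 - δ * ωm t) * M t + 4 * Wm t := by
    intro t; rw [hMseq]
  have h1δω : ∀ t, 0 ≤ 1 - δ * ωm t := by
    intro t; have h1 := hωm_nn t; have h2 := hωm_1 t; nlinarith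
  have hMnn : ∀ t, 0 ≤ M t := by
    intro t
    induction t with
    | zero => rw [hM0]
    | succ t ih =>
      rw [hMstep]
      have h1 := h1δω t; have h2 := hWm_nn t
      nlinarith
  -- the inductive covariance bound
  have hbound : ∀ t (i j : Fin n₁), |Cov t (Sum.inr i) (Sum.inr j)| ≤ M t * (v i * v j) := by
    intro t
    induction t with
    | zero =>
      intro i j
      have h1 : Cov 0 (Sum.inr i) (Sum.inr j) = 0 := by
        rw [hCov]
        have e1 : (fun x => θ 0 x (Sum.inr i) * θ 0 x (Sum.inr j))
            = fun _ => θ0 (Sum.inr i) * θ0 (Sum.inr j) := funext fun x => by rw [hθinit]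
        have e2 : (fun x => θ 0 x (Sum.inr i)) = fun _ => θ0 (Sum.inr i) :=
          funext fun x => by rw [hθinit]
        have e3 : (fun x => θ 0 x (Sum.inr j)) = fun _ => θ0 (Sum.inr j) :=
          funext fun x => by rw [hθinit]
        rw [show (∫ x, θ 0 x (Sum.inr i) * θ 0 x (Sum.inr j) ∂μ)
              = θ0 (Sum.inr i) * θ0 (Sum.inr j) by rw [e1]; simp,
          show (∫ x, θ 0 x (Sum.inr i) ∂μ) = θ0 (Sum.inr i) by rw [e2]; simp,
          show (∫ x, θ 0 x (Sum.inr j) ∂μ) = θ0 (Sum.inr j) by rw [e3]; simp]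
        ring
      rw [h1, hM0]
      simp
    | succ t ih =>
      intro i j
      rw [hCrec]
      have hcol : ∑ k, ∑ l, B t (Sum.inr i) k * B t (Sum.inr j) l * Cov t k l
          = ∑ k : Fin n₁, ∑ l : Fin n₁, B t (Sum.inr i) (Sum.inr k) * B t (Sum.inr j) (Sum.inr l)
            * Cov t (Sum.inr k) (Sum.inr l) := by
        rw [Fintype.sum_sum_type]
        have hz1 : ∑ k : Fin n₀, ∑ l, B t (Sum.inr i) (Sum.inl k) * B t (Sum.inr j) l
            * Cov t (Sum.inl k) l = 0 :=
          Finset.sum_eq_zero fun k _ => Finset.sum_eq_zero fun l _ => by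
            rw [hCzL t k l, mul_zero]
        rw [hz1, zero_add]
        refine Finset.sum_congr rfl fun k _ => ?_
        rw [Fintype.sum_sum_type]
        have hz2 : ∑ l : Fin n₀, B t (Sum.inr i) (Sum.inr k) * B t (Sum.inr j) (Sum.inl l)
            * Cov t (Sum.inr k) (Sum.inl l) = 0 :=
          Finset.sum_eq_zero fun l _ => by rw [hCzR t _ l, mul_zero]
        rw [hz2, zero_add]
      rw [hcol]
      have habs : |∑ k : Fin n₁, ∑ l : Fin n₁, B t (Sum.inr i) (Sum.inr k)
          * B t (Sum.inr j) (Sum.inr l) * Cov t (Sum.inr k) (Sum.inr l)|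
          ≤ M t * ((∑ k, B t (Sum.inr i) (Sum.inr k) * v k)
            * (∑ l, B t (Sum.inr j) (Sum.inr l) * v l)) := by
        have h1 : |∑ k : Fin n₁, ∑ l : Fin n₁, B t (Sum.inr i) (Sum.inr k)
            * B t (Sum.inr j) (Sum.inr l) * Cov t (Sum.inr k) (Sum.inr l)|
            ≤ ∑ k : Fin n₁, ∑ l : Fin n₁, B t (Sum.inr i) (Sum.inr k)
              * B t (Sum.inr j) (Sum.inr l) * (M t * (v k * v l)) := by
          refine (Finset.abs_sum_le_sum_abs _ _).trans ?_
          refine Finset.sum_le_sum fun k _ => ?_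
          refine (Finset.abs_sum_le_sum_abs _ _).trans ?_
          refine Finset.sum_le_sum fun l _ => ?_
          rw [abs_mul, abs_of_nonneg (mul_nonneg (hBnn t _ _) (hBnn t _ _))]
          exact mul_le_mul_of_nonneg_left (ih k l) (mul_nonneg (hBnn t _ _) (hBnn t _ _))
        have h2 : M t * ((∑ k, B t (Sum.inr i) (Sum.inr k) * v k)
            * (∑ l, B t (Sum.inr j) (Sum.inr l) * v l))
            = ∑ k : Fin n₁, ∑ l : Fin n₁, B t (Sum.inr i) (Sum.inr k)
              * B t (Sum.inr j) (Sum.inr l) * (M t * (v k * v l)) := by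
          rw [Finset.sum_mul_sum, Finset.mul_sum]
          refine Finset.sum_congr rfl fun k _ => ?_
          rw [Finset.mul_sum]
          exact Finset.sum_congr rfl fun l _ => by ring
        exact h1.trans (le_of_eq h2.symm)
      have hfac : (∑ k, B t (Sum.inr i) (Sum.inr k) * v k)
          * (∑ l, B t (Sum.inr j) (Sum.inr l) * v l) ≤ (1 - δ * ωm t) * (v i * v j) := by
        have hp1 : (1 - δ * w t i) ≤ (1 - δ * ωm t) := by
          have := mul_le_mul_of_nonneg_left (hωm_le t i) hδ0.le
          linarith
        have hq1 : (1 - δ * w t j) * v j ≤ v j := by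
          have h6 : 0 ≤ δ * w t j * v j :=
            mul_nonneg (mul_nonneg hδ0.le (hw t j).1) (hv0 j)
          nlinarith
        have step0 : (∑ k, B t (Sum.inr i) (Sum.inr k) * v k)
            * (∑ l, B t (Sum.inr j) (Sum.inr l) * v l)
            ≤ ((1 - δ * w t i) * v i) * ((1 - δ * w t j) * v j) :=
          mul_le_mul (hBv t i) (hBv t j) (hBvnn t j) (mul_nonneg (h1δw t i) (hv0 i))
        have step1 : ((1 - δ * w t i) * v i) * ((1 - δ * w t j) * v j)
            ≤ ((1 - δ * w t i) * v i) * v j :=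
          mul_le_mul_of_nonneg_left hq1 (mul_nonneg (h1δw t i) (hv0 i))
        have step2 : (1 - δ * w t i) * v i ≤ (1 - δ * ωm t) * v i :=
          mul_le_mul_of_nonneg_right hp1 (hv0 i)
        have step3 : ((1 - δ * w t i) * v i) * v j ≤ ((1 - δ * ωm t) * v i) * v j :=
          mul_le_mul_of_nonneg_right step2 (hv0 j)
        calc (∑ k, B t (Sum.inr i) (Sum.inr k) * v k)
            * (∑ l, B t (Sum.inr j) (Sum.inr l) * v l)
            ≤ ((1 - δ * w t i) * v i) * ((1 - δ * w t j) * v j) := step0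
          _ ≤ ((1 - δ * w t i) * v i) * v j := step1
          _ ≤ ((1 - δ * ωm t) * v i) * v j := step3
          _ = (1 - δ * ωm t) * (v i * v j) := by ring
      have hnoise : |dW t (Sum.inr i) * dW t (Sum.inr j)
          * ∫ x, ε t x (Sum.inr i) * ε t x (Sum.inr j) ∂μ| ≤ 4 * Wm t * (v i * v j) := by
        rw [abs_mul, abs_mul, hdWr, hdWr, abs_of_nonneg (hw t i).1, abs_of_nonneg (hw t j).1]
        have h3 : w t i * w t j ≤ Wm t := by
          nlinarith [hWm_ge t i, hWm_ge t j, (hw t i).1, (hw t j).1, sq_nonneg (w t i - w t j)]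
        have h4 := hEbd t (Sum.inr i) (Sum.inr j)
        have h5 : (1:ℝ)/4 ≤ v i * v j := by nlinarith [(hv12 i).1, (hv12 j).1]
        have h6 : w t i * w t j * |∫ x, ε t x (Sum.inr i) * ε t x (Sum.inr j) ∂μ| ≤ Wm t := by
          have h7 : w t i * w t j * |∫ x, ε t x (Sum.inr i) * ε t x (Sum.inr j) ∂μ|
              ≤ w t i * w t j * 1 :=
            mul_le_mul_of_nonneg_left h4 (mul_nonneg (hw t i).1 (hw t j).1)
          linarith
        have h8 : Wm t ≤ 4 * Wm t * (v i * v j) := by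
          nlinarith [mul_nonneg (hWm_nn t) (by linarith : (0:ℝ) ≤ v i * v j - 1/4)]
        linarith
      calc |(∑ k : Fin n₁, ∑ l : Fin n₁, B t (Sum.inr i) (Sum.inr k)
            * B t (Sum.inr j) (Sum.inr l) * Cov t (Sum.inr k) (Sum.inr l))
            + dW t (Sum.inr i) * dW t (Sum.inr j)
              * ∫ x, ε t x (Sum.inr i) * ε t x (Sum.inr j) ∂μ|
          ≤ |∑ k : Fin n₁, ∑ l : Fin n₁, B t (Sum.inr i) (Sum.inr k)
            * B t (Sum.inr j) (Sum.inr l) * Cov t (Sum.inr k) (Sum.inr l)|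
            + |dW t (Sum.inr i) * dW t (Sum.inr j)
              * ∫ x, ε t x (Sum.inr i) * ε t x (Sum.inr j) ∂μ| := abs_add_le _ _
        _ ≤ M t * ((1 - δ * ωm t) * (v i * v j)) + 4 * Wm t * (v i * v j) := by
            have h9 := mul_le_mul_of_nonneg_left hfac (hMnn t)
            linarith [habs, hnoise]
        _ = M (t+1) * (v i * v j) := by rw [hMstep]; ring
  -- convergence of M
  have hβs : Summable (fun t => 4 * Wm t) := by
    rw [hWmdef]
    exact hsq.mul_left 4
  have hdiv' : Tendsto (fun T => ∑ s ∈ Finset.range T, ωm s) atTop atTop := by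
    rw [hωmdef]; exact hdiv
  have hMtend : Tendsto M atTop (𝓝 0) :=
    my_aux_seq_tendsto_zero M (fun t => 4 * Wm t) ωm δ hδ0 hM0 hωm_nn
      (fun t => by have h1 := hωm_1 t; have h2 := hωm_nn t; nlinarith)
      (fun t => by have := hWm_nn t; show (0:ℝ) ≤ 4 * Wm t; linarith) hβs hdiv' hMstep
  -- conclusion
  intro i j
  rcases i with k | i
  · have hfun : (fun t => (∫ x, θ t x (Sum.inl k) * θ t x j ∂μ) -
        (∫ x, θ t x (Sum.inl k) ∂μ) * ∫ x, θ t x j ∂μ) = fun _ => (0:ℝ) := by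
      funext t
      have h := hCzL t k j
      rw [hCov] at h
      exact h
    rw [hfun]
    exact tendsto_const_nhds
  rcases j with k | j
  · have hfun : (fun t => (∫ x, θ t x (Sum.inr i) * θ t x (Sum.inl k) ∂μ) -
        (∫ x, θ t x (Sum.inr i) ∂μ) * ∫ x, θ t x (Sum.inl k) ∂μ) = fun _ => (0:ℝ) := by
      funext t
      have h := hCzR t (Sum.inr i) k
      rw [hCov] at h
      exact h
    rw [hfun]
    exact tendsto_const_nhds
  · have hg : Tendsto (fun t => M t * (v i * v j)) atTop (𝓝 0) := by
      simpa using hMtend.mul_const (v i * v j)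
    have hgneg : Tendsto (fun t => -(M t * (v i * v j))) atTop (𝓝 0) := by
      simpa using hg.neg
    have h := tendsto_of_tendsto_of_tendsto_of_le_of_le hgneg hg
      (fun t => (abs_le.mp (hbound t i j)).1) (fun t => (abs_le.mp (hbound t i j)).2)
    have hfun : (fun t => (∫ x, θ t x (Sum.inr i) * θ t x (Sum.inr j) ∂μ) -
        (∫ x, θ t x (Sum.inr i) ∂μ) * ∫ x, θ t x (Sum.inr j) ∂μ)
        = fun t => Cov t (Sum.inr i) (Sum.inr j) := funext fun t => (hCov t _ _).symm
    rw [hfun]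
    exact h
end

section
/- Let (a_t)_{t≥0} be a sequence of nonnegative reals, and let b > 1, τ ≥ 0, K ≥ 0 satisfy b ≤ τ + 1 and a_{t+1} ≤ (1 − b/(t + τ + 1))·a_t + K/(t + τ + 1)² for all t ≥ 0. Then a_t ≤ C'/(t + τ + 1) for all t ≥ 0, where C' = max{ a_0·(τ + 1), K/(b − 1) }. -/
/-- If `a_{t+1} ≤ (1 - b/(t+τ+1)) a_t + K/(t+τ+1)²` with `b > 1`,
`τ ≥ 0`, `K ≥ 0`, `b ≤ τ + 1`, then `a_t ≤ C'/(t+τ+1)` where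
`C' = max (a₀ (τ+1)) (K/(b-1))`. -/
theorem recursive_sequence_bound
    (a : ℕ → ℝ) (ha : ∀ t, 0 ≤ a t)
    (b τ K : ℝ) (hb : 1 < b) (hτ : 0 ≤ τ) (hK : 0 ≤ K) (hbτ : b ≤ τ + 1)
    (hrec : ∀ t : ℕ, a (t + 1) ≤ (1 - b / (t + τ + 1)) * a t + K / (t + τ + 1) ^ 2) :
    ∀ t : ℕ, a t ≤ max (a 0 * (τ + 1)) (K / (b - 1)) / (t + τ + 1) := by
  set C := max (a 0 * (τ + 1)) (K / (b - 1)) with hC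
  have hτ1 : (0:ℝ) < τ + 1 := by linarith
  have hC0 : 0 ≤ C := le_trans (div_nonneg hK (by linarith)) (le_max_right _ _)
  have hKC : K ≤ C * (b - 1) := by
    have := le_max_right (a 0 * (τ + 1)) (K / (b - 1))
    rw [div_le_iff₀ (by linarith)] at this
    linarith
  intro t
  induction t with
  | zero =>
    push_cast
    rw [le_div_iff₀ (by linarith)]
    calc a 0 * (0 + τ + 1) = a 0 * (τ + 1) := by ring
    _ ≤ C := le_max_left _ _
  | succ t ih =>
    have hs : (0:ℝ) < t + τ + 1 := by positivity
    have hbs : b ≤ t + τ + 1 := by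
      have : (0:ℝ) ≤ t := Nat.cast_nonneg t
      linarith
    have hcoef : 0 ≤ 1 - b / (t + τ + 1) := by
      rw [sub_nonneg, div_le_one hs]; exact hbs
    have h1 : a (t + 1) ≤ (1 - b / (t + τ + 1)) * (C / (t + τ + 1)) + K / (t + τ + 1) ^ 2 :=
      le_trans (hrec t) (by gcongr)
    have h2 : (1 - b / (t + τ + 1)) * (C / (t + τ + 1)) + K / (t + τ + 1) ^ 2
        ≤ C / (t + τ + 1 + 1) := by
      have e : (1 - b / (t + τ + 1)) * (C / (t + τ + 1)) + K / (t + τ + 1) ^ 2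
          = (((t:ℝ) + τ + 1 - b) * C + K) / ((t:ℝ) + τ + 1) ^ 2 := by
        field_simp
      rw [e, div_le_div_iff₀ (by positivity) (by linarith)]
      nlinarith [mul_nonneg hC0 hs.le]
    push_cast
    calc a (t + 1) ≤ C / (t + τ + 1 + 1) := le_trans h1 h2
    _ = C / ((t:ℝ) + 1 + τ + 1) := by ring_nf
end

section
/- Let G be an n×n complex matrix all of whose eigenvalues have strictly negative real part. Then there exist an invertible n×n complex matrix U and an n×n complex matrix Λ such that G = U·Λ·U⁻¹ and Λ + Λ* is a Hermitian negative definite matrix, where Λ* denotes the conjugate transpose of Λ. -/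
/-!
Induct on the dimension. An eigenvector of `G` brings it, up to similarity, to the block lower
triangular form `[[M', 0], [w, μ]]` with `Re μ < 0`. By induction `M' U' = U' L'` with
`-(L' + L'ᴴ)` positive definite, and conjugating by `diag(c U', 1)` gives `[[L', 0], [c w U', μ]]`.
The negated Hermitian part of the latter has the positive definite block `-(L' + L'ᴴ)` and the
scalar Schur complement `-2 Re μ - c² k`, where `k ≥ 0` does not depend on `c`; so it is positive
definite once `c ≠ 0` is small enough.
-/

open Matrix Filter Topology
open scoped ComplexOrder

namespace Matrix

variable {m n 𝕜 : Type*} [RCLike 𝕜]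

theorem posDef_of_unique [Unique n] {S : Matrix n n 𝕜} (hS : 0 < S default default) :
    S.PosDef := by
  classical
  have : S = diagonal fun _ => S default default := by
    ext i j
    simp [Subsingleton.elim i default, Subsingleton.elim j default]
  rw [this, posDef_diagonal_iff]
  exact fun _ => hS

def IsStrictlyDissipative (L : Matrix n n 𝕜) : Prop :=
  (-(L + Lᴴ)).PosDef

theorem IsStrictlyDissipative.submatrix {L : Matrix m m 𝕜} (hL : L.IsStrictlyDissipative)
    (e : n ≃ m) : (L.submatrix e e).IsStrictlyDissipative := by
  rw [IsStrictlyDissipative, conjTranspose_submatrix]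
  exact PosDef.submatrix hL e.injective

def _root_.Equiv.subtypeNeSumUnit [DecidableEq m] (i : m) : {j // j ≠ i} ⊕ Unit ≃ m :=
  (Equiv.optionEquivSumPUnit _).symm.trans (Equiv.optionSubtypeNe i)

variable [Fintype m] [DecidableEq m] [Fintype n] [DecidableEq n]

theorem PosDef.fromBlocks_of_schur₁₁ {A : Matrix m m 𝕜} (B : Matrix m n 𝕜) (D : Matrix n n 𝕜)
    (hA : A.PosDef) (hS : (D - Bᴴ * A⁻¹ * B).PosDef) : (fromBlocks A B Bᴴ D).PosDef := by
  have := hA.isUnit.invertible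
  refine ((hA.fromBlocks₁₁ B D).mpr hS.posSemidef).posDef_iff_det_ne_zero.mpr ?_
  rw [det_fromBlocks₁₁, invOf_eq_nonsing_inv]
  exact mul_ne_zero hA.det_pos.ne' hS.det_pos.ne'

theorem IsStrictlyDissipative.eventually_fromBlocks {L : Matrix n n 𝕜}
    (hL : L.IsStrictlyDissipative) {μ : 𝕜} (hμ : RCLike.re μ < 0) (B : Matrix Unit n 𝕜) :
    ∀ᶠ c : ℝ in 𝓝 0,
      (fromBlocks L 0 ((c : 𝕜) • B) (of fun _ _ => μ)).IsStrictlyDissipative := by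
  set S := B * (-(L + Lᴴ))⁻¹ * Bᴴ
  have hS : S.IsHermitian := (hL.inv.posSemidef.mul_mul_conjTranspose_same B).isHermitian
  have hlim : Tendsto (fun c : ℝ => -2 * RCLike.re μ - c ^ 2 * RCLike.re (S () ()))
      (𝓝 0) (𝓝 (-2 * RCLike.re μ)) := by
    have : Continuous fun c : ℝ => -2 * RCLike.re μ - c ^ 2 * RCLike.re (S () ()) := by
      fun_prop
    simpa using this.tendsto 0
  have hpos : (0 : ℝ) < -2 * RCLike.re μ := by linarith
  filter_upwards [hlim.eventually (lt_mem_nhds hpos)] with c hc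
  have hblocks : -(fromBlocks L 0 ((c : 𝕜) • B) (of fun _ _ => μ) +
      (fromBlocks L 0 ((c : 𝕜) • B) (of fun _ _ => μ))ᴴ) =
      fromBlocks (-(L + Lᴴ)) (-((c : 𝕜) • B)ᴴ) (-((c : 𝕜) • B)ᴴ)ᴴ
        (-((of fun _ _ => μ) + (of fun _ _ => μ)ᴴ)) := by
    simp [fromBlocks_conjTranspose, fromBlocks_add, fromBlocks_neg]
  rw [IsStrictlyDissipative, hblocks]
  refine PosDef.fromBlocks_of_schur₁₁ _ _ hL (posDef_of_unique ?_)
  have hSre : (RCLike.re (S () ()) : 𝕜) = S () () := congrFun hS.coe_re_diag ()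
  have hentry : (-((of fun _ _ => μ) + (of fun _ _ => μ)ᴴ) -
      (-((c : 𝕜) • B)ᴴ)ᴴ * (-(L + Lᴴ))⁻¹ * -((c : 𝕜) • B)ᴴ : Matrix Unit Unit 𝕜) () () =
      ((-2 * RCLike.re μ - c ^ 2 * RCLike.re (S () ()) : ℝ) : 𝕜) := by
    push_cast
    simp only [hSre]
    simp only [S, neg_add_rev, neg_of, algebraMap_smul, conjTranspose_smul, star_trivial,
      conjTranspose_neg, conjTranspose_conjTranspose, Matrix.neg_mul, smul_mul, Matrix.mul_neg,
      Matrix.mul_smul, smul_neg, neg_neg, sub_apply, add_apply, neg_apply, conjTranspose_apply,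
      of_apply, RCLike.star_def, Pi.neg_apply, smul_apply, RCLike.real_smul_eq_coe_mul, neg_mul]
    linear_combination -RCLike.add_conj μ
  rw [hentry]
  exact RCLike.ofReal_pos.mpr hc

def IsSimilarToStrictlyDissipative (G : Matrix n n 𝕜) : Prop :=
  ∃ U L : Matrix n n 𝕜, IsUnit U.det ∧ G * U = U * L ∧ L.IsStrictlyDissipative

theorem IsStrictlyDissipative.isSimilarToStrictlyDissipative {L : Matrix n n 𝕜}
    (hL : L.IsStrictlyDissipative) : L.IsSimilarToStrictlyDissipative :=
  ⟨1, L, by simp, by simp, hL⟩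

theorem IsSimilarToStrictlyDissipative.of_mul_eq_mul {G X P : Matrix n n 𝕜}
    (hP : IsUnit P.det) (hGP : G * P = P * X) (hX : X.IsSimilarToStrictlyDissipative) :
    G.IsSimilarToStrictlyDissipative := by
  obtain ⟨U, L, hU, hXU, hL⟩ := hX
  refine ⟨P * U, L, by rw [det_mul]; exact hP.mul hU, ?_, hL⟩
  rw [← Matrix.mul_assoc, hGP, Matrix.mul_assoc, hXU, Matrix.mul_assoc]

theorem IsSimilarToStrictlyDissipative.submatrix {G : Matrix m m 𝕜}
    (hG : G.IsSimilarToStrictlyDissipative) (e : n ≃ m) :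
    (G.submatrix e e).IsSimilarToStrictlyDissipative := by
  obtain ⟨U, L, hU, hGU, hL⟩ := hG
  refine ⟨U.submatrix e e, L.submatrix e e, by rwa [det_submatrix_equiv_self], ?_,
    hL.submatrix e⟩
  rw [submatrix_mul_equiv, submatrix_mul_equiv, hGU]

theorem isSimilarToStrictlyDissipative_fromBlocks {M : Matrix n n 𝕜}
    (hM : M.IsSimilarToStrictlyDissipative) {μ : 𝕜} (hμ : RCLike.re μ < 0)
    (w : Matrix Unit n 𝕜) :
    (fromBlocks M 0 w (of fun _ _ => μ)).IsSimilarToStrictlyDissipative := by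
  obtain ⟨U, L, hU, hMU, hL⟩ := hM
  obtain ⟨c, hc, hc0⟩ := ((hL.eventually_fromBlocks hμ (w * U)).filter_mono
    nhdsWithin_le_nhds |>.and self_mem_nhdsWithin).exists (f := 𝓝[≠] (0 : ℝ))
  refine .of_mul_eq_mul (P := fromBlocks ((c : 𝕜) • U) 0 0 1) ?_ ?_
    hc.isSimilarToStrictlyDissipative
  · rw [det_fromBlocks_zero₂₁, det_smul, det_one, mul_one]
    exact (IsUnit.pow _ (by simpa using hc0)).mul hU
  · simp [fromBlocks_multiply, Matrix.mul_smul, hMU]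

theorem charpoly_eq_of_mul_eq_mul {K : Type*} [CommRing K] {G M P : Matrix m m K}
    (hP : IsUnit P.det) (h : G * P = P * M) : G.charpoly = M.charpoly := by
  have hM : M = P⁻¹ * (G * P) := by rw [h, nonsing_inv_mul_cancel_left _ _ hP]
  rw [hM, charpoly_mul_comm, mul_nonsing_inv_cancel_right _ _ hP]

theorem exists_mul_eq_mul_mulVec_single {K : Type*} [Field K] {G : Matrix m m K} {v : m → K}
    {μ : K} (hv : v ≠ 0) (hGv : G *ᵥ v = μ • v) :
    ∃ (i : m) (P M : Matrix m m K), IsUnit P.det ∧ G * P = P * M ∧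
      M *ᵥ Pi.single i 1 = μ • Pi.single i 1 := by
  obtain ⟨i, hi⟩ := Function.ne_iff.mp hv
  set P := (1 : Matrix m m K).updateCol i v
  have hP : IsUnit P.det := by
    -- Cramer's rule for the identity matrix
    rw [show P.det = v i by rw [← cramer_apply, cramer_one]; rfl]
    exact isUnit_iff_ne_zero.mpr hi
  have hPe : P *ᵥ Pi.single i 1 = v := by
    ext j
    simp [P]
  refine ⟨i, P, P⁻¹ * G * P, hP, by rw [Matrix.mul_assoc, mul_nonsing_inv_cancel_left _ _ hP], ?_⟩
  have hPv : P⁻¹ *ᵥ v = Pi.single i 1 := by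
    rw [← hPe, mulVec_mulVec, nonsing_inv_mul _ hP, one_mulVec]
  rw [← mulVec_mulVec, ← mulVec_mulVec, hPe, hGv, mulVec_smul, hPv]

theorem submatrix_subtypeNeSumUnit {K : Type*} [Field K] {M : Matrix m m K} {i : m} {μ : K}
    (h : M *ᵥ Pi.single i 1 = μ • Pi.single i 1) :
    M.submatrix (Equiv.subtypeNeSumUnit i) (Equiv.subtypeNeSumUnit i) =
      fromBlocks (M.submatrix Subtype.val Subtype.val) 0 (of fun _ j => M i j)
        (of fun _ _ => μ) := by
  have hcol : ∀ j, M j i = (μ • Pi.single i 1 : m → K) j := fun j => by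
    rw [← h, mulVec_single_one]; rfl
  ext (j | _) (k | _)
  case inl.inr => simp [Equiv.subtypeNeSumUnit, hcol, j.2]
  all_goals simp [Equiv.subtypeNeSumUnit, hcol]

theorem isSimilarToStrictlyDissipative_of_forall_isRoot_charpoly {G : Matrix m m ℂ}
    (hG : ∀ μ : ℂ, G.charpoly.IsRoot μ → μ.re < 0) : G.IsSimilarToStrictlyDissipative := by
  induction hcard : Fintype.card m generalizing m with
  | zero =>
    have := Fintype.card_eq_zero_iff.mp hcard
    refine IsStrictlyDissipative.isSimilarToStrictlyDissipative
      (.of_dotProduct_mulVec_pos ?_ fun x hx => (hx (Subsingleton.elim x 0)).elim)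
    ext i
    exact isEmptyElim i
  | succ k ih =>
    have : Nonempty m := Fintype.card_pos_iff.mp (by omega)
    obtain ⟨μ, hμ⟩ := Module.End.exists_eigenvalue (toLin' G)
    have hμG : G.charpoly.IsRoot μ := by
      rwa [Module.End.hasEigenvalue_iff_isRoot_charpoly, charpoly_toLin'] at hμ
    obtain ⟨v, hv⟩ := hμ.exists_hasEigenvector
    obtain ⟨i, P, M, hP, hGP, hM⟩ :=
      exists_mul_eq_mul_mulVec_single hv.2 (by simpa using hv.apply_eq_smul)
    set e := Equiv.subtypeNeSumUnit i
    set M' : Matrix {j // j ≠ i} {j // j ≠ i} ℂ := M.submatrix Subtype.val Subtype.val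
    have hblocks : M.submatrix e e = fromBlocks M' 0 (of fun _ j => M i j) (of fun _ _ => μ) :=
      submatrix_subtypeNeSumUnit hM
    have hcharpoly :
        G.charpoly = M'.charpoly * (of fun _ _ => μ : Matrix Unit Unit ℂ).charpoly := by
      rw [charpoly_eq_of_mul_eq_mul hP hGP, ← charpoly_fromBlocks_zero₁₂, ← hblocks,
        ← charpoly_reindex e.symm, reindex_apply, Equiv.symm_symm]
    have hM' : M'.IsSimilarToStrictlyDissipative := by
      refine ih (fun ν hν => hG ν ?_) ?_
      · rw [Polynomial.IsRoot, hcharpoly, Polynomial.eval_mul, hν.eq_zero, zero_mul]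
      · have := Fintype.card_congr (Equiv.optionSubtypeNe i)
        rw [Fintype.card_option] at this
        omega
    have hMe : (M.submatrix e e).IsSimilarToStrictlyDissipative := by
      rw [hblocks]
      exact isSimilarToStrictlyDissipative_fromBlocks hM' (hG μ hμG) _
    refine .of_mul_eq_mul hP hGP ?_
    simpa using hMe.submatrix e.symm

end Matrix

/-- If all eigenvalues of `G` have negative real part, there exist an invertible
`U` and a matrix `Λ` with `G = U Λ U⁻¹` and `Λ + Λᴴ` Hermitian negative definite. -/
theorem exists_similarity_with_negdef_hermitian_part
    (n : ℕ) (G : Matrix (Fin n) (Fin n) ℂ)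
    (heig : ∀ lam : ℂ, G.charpoly.IsRoot lam → lam.re < 0) :
    ∃ (U L : Matrix (Fin n) (Fin n) ℂ),
      IsUnit U.det ∧ G = U * L * U⁻¹ ∧ (-(L + Lᴴ)).PosDef := by
  obtain ⟨U, L, hU, hGU, hL⟩ := isSimilarToStrictlyDissipative_of_forall_isRoot_charpoly heig
  exact ⟨U, L, hU, by rw [← hGU, mul_nonsing_inv_cancel_right _ _ hU], hL⟩
end

section
/- Let A be an n×n real matrix with all off-diagonal entries nonnegative, all diagonal entries in [−1,0], and every row summing to zero, and suppose P = I + A is scrambling, i.e., for every pair of rows i, j there is a column s with P_{is}·P_{js} > 0. Suppose ∑_{s=0}^∞ min_i ω_i(s) = ∞ and ∑_{s=0}^∞ max_i ω_i(s)² < ∞. On a probability space let θ(0) ∈ [0,1]^n be deterministic and θ(t+1) = (I + Ω(t)A)·θ(t) + Ω(t)·ε(t), where Ω(t) is the diagonal matrix with entries ω_i(t) ∈ [0,1] and each ε(t) is a random vector with values in [−1,1]^n satisfying E[ε(t) | θ(0), …, θ(t)] = 0. Then C·θ(t) → 0 in L², i.e., E[‖C·θ(t)‖₂²] → 0 as t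 → ∞, where C = I − (1/n)·e·eᵀ is the centering matrix and e is the all-ones vector. -/
/-!
Write `Q t = I + Ω(t) A` and `Φ(t, s) = Q (t-1) ⋯ Q s`. Each `Q t` has unit row sums, and since
`P = I + A` is scrambling, any two rows of `Q t` share mass at least `c t = γ · minᵢ ωᵢ(t)`,
where `γ > 0` is the least row overlap of `P`. By Dobrushin's argument the spread `max - min` of a
vector contracts by the factor `1 - c t` at each step, and `B(s, t) = ∏_{s ≤ r < t} (1 - c r)`
tends to zero as `t → ∞` because `∑ c` diverges.

By variation of constants `θ(t) = Φ(t, 0) θ(0) + ∑_{s<t} Φ(t, s+1) Ω(s) ε(s)`. The noise terms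
are martingale differences for the history of `θ`, hence orthogonal in `L²` to each other and to
constants, so `E ‖C θ(t)‖²` is the sum of the second moments of the terms. With
`‖C y‖² ≤ n · spread(y)²` this gives
`E ‖C θ(t)‖² ≤ n (B(0, t)² spread(θ(0))² + ∑_{s<t} B(s+1, t)² · 4 maxᵢ ωᵢ(s)²)`,
and the sum tends to zero by dominated convergence since `∑ maxᵢ ωᵢ(s)² < ∞`.
-/

open Matrix MeasureTheory Filter Topology Finset

namespace Consensus

section Spread

variable {ι : Type*} [Fintype ι] [Nonempty ι]

noncomputable def spread (x : ι → ℝ) : ℝ :=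
  univ.sup' univ_nonempty x - univ.inf' univ_nonempty x

lemma sub_le_spread (x : ι → ℝ) (i j : ι) : x i - x j ≤ spread x :=
  sub_le_sub (le_sup' x (mem_univ i)) (inf'_le x (mem_univ j))

lemma spread_nonneg (x : ι → ℝ) : 0 ≤ spread x := by
  obtain ⟨i⟩ := ‹Nonempty ι›
  simpa using sub_le_spread x i i

lemma abs_sub_le_spread (x : ι → ℝ) (i j : ι) : |x i - x j| ≤ spread x :=
  abs_sub_le_iff.2 ⟨sub_le_spread x i j, sub_le_spread x j i⟩

lemma spread_le {x : ι → ℝ} {a : ℝ} (h : ∀ i j, x i - x j ≤ a) : spread x ≤ a := by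
  obtain ⟨i, -, hi⟩ := exists_mem_eq_sup' univ_nonempty x
  obtain ⟨j, -, hj⟩ := exists_mem_eq_inf' univ_nonempty x
  rw [spread, hi, hj]
  exact h i j

lemma spread_sq_le {x b : ι → ℝ} (h : ∀ i, |x i| ≤ b i) :
    spread x ^ 2 ≤ 4 * ⨆ i, b i ^ 2 := by
  set M := ⨆ i, b i ^ 2
  have hbM (i : ι) : b i ^ 2 ≤ M := le_ciSup (f := fun i => b i ^ 2) (Finite.bddAbove_range _) i
  have hM : 0 ≤ M := (sq_nonneg _).trans (hbM (Classical.arbitrary ι))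
  have hx (i : ι) : |x i| ≤ √M := (h i).trans ((le_abs_self _).trans (Real.abs_le_sqrt (hbM i)))
  have hspread : spread x ≤ 2 * √M :=
    spread_le fun i j => by linarith [(abs_le.1 (hx i)).2, (abs_le.1 (hx j)).1]
  calc spread x ^ 2 ≤ (2 * √M) ^ 2 := pow_le_pow_left₀ (spread_nonneg x) hspread 2
    _ = 4 * M := by rw [mul_pow, Real.sq_sqrt hM]; norm_num

/-- Rows `i, j` of `Q` share the mass `∑ s, min (Q i s) (Q j s)`, which cancels in
`(Q *ᵥ y) i - (Q *ᵥ y) j` (Dobrushin). -/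
lemma spread_mulVec_le {Q : Matrix ι ι ℝ} (hQ : ∀ i, ∑ j, Q i j = 1) {c : ℝ}
    (hc : ∀ i j, c ≤ ∑ s, min (Q i s) (Q j s)) (y : ι → ℝ) :
    spread (Q *ᵥ y) ≤ (1 - c) * spread y := by
  refine spread_le fun i j => ?_
  set m : ι → ℝ := fun s => min (Q i s) (Q j s)
  have hrow (k : ι) : ∑ s, (Q k s - m s) = 1 - ∑ s, m s := by rw [sum_sub_distrib, hQ]
  have hi : ∑ s, (Q i s - m s) * y s ≤ (1 - ∑ s, m s) * univ.sup' univ_nonempty y := by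
    rw [← hrow, sum_mul]
    exact sum_le_sum fun s _ =>
      mul_le_mul_of_nonneg_left (le_sup' y (mem_univ s)) (sub_nonneg.2 (min_le_left _ _))
  have hj : (1 - ∑ s, m s) * univ.inf' univ_nonempty y ≤ ∑ s, (Q j s - m s) * y s := by
    rw [← hrow, sum_mul]
    exact sum_le_sum fun s _ =>
      mul_le_mul_of_nonneg_left (inf'_le y (mem_univ s)) (sub_nonneg.2 (min_le_right _ _))
  have hdiff : (Q *ᵥ y) i - (Q *ᵥ y) j
      = ∑ s, (Q i s - m s) * y s - ∑ s, (Q j s - m s) * y s := by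
    simp only [mulVec, dotProduct, sub_mul, sum_sub_distrib]
    ring
  have hcm := mul_nonneg (sub_nonneg.2 (hc i j)) (spread_nonneg y)
  rw [spread] at hcm ⊢
  nlinarith

lemma le_one_of_le_sum_min {Q : Matrix ι ι ℝ} (hQ : ∀ i, ∑ j, Q i j = 1) {c : ℝ}
    (hc : ∀ i j, c ≤ ∑ s, min (Q i s) (Q j s)) : c ≤ 1 := by
  obtain ⟨i⟩ := ‹Nonempty ι›
  simpa [hQ] using hc i i

end Spread

section Transition

variable {ι R : Type*} [Fintype ι] [DecidableEq ι] [CommSemiring R]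

/-- `transitionMatrix Q s t = Q (t - 1) * ⋯ * Q s`, the identity when `t ≤ s`. -/
def transitionMatrix (Q : ℕ → Matrix ι ι R) (s : ℕ) : ℕ → Matrix ι ι R
  | 0 => 1
  | t + 1 => if t < s then 1 else Q t * transitionMatrix Q s t

variable (Q : ℕ → Matrix ι ι R)

@[simp]
lemma transitionMatrix_self (s : ℕ) : transitionMatrix Q s s = 1 := by
  cases s <;> simp [transitionMatrix]

lemma transitionMatrix_succ {s t : ℕ} (h : s ≤ t) :
    transitionMatrix Q s (t + 1) = Q t * transitionMatrix Q s t := by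
  simp [transitionMatrix, Nat.not_lt.2 h]

lemma eq_transitionMatrix_mulVec_add_sum {x u : ℕ → ι → R}
    (hx : ∀ t, x (t + 1) = Q t *ᵥ x t + u t) (t : ℕ) :
    x t = transitionMatrix Q 0 t *ᵥ x 0
      + ∑ s ∈ range t, transitionMatrix Q (s + 1) t *ᵥ u s := by
  induction t with
  | zero => simp
  | succ t ih =>
    have hsum : ∑ s ∈ range t, Q t *ᵥ (transitionMatrix Q (s + 1) t *ᵥ u s)
        = ∑ s ∈ range t, transitionMatrix Q (s + 1) (t + 1) *ᵥ u s :=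
      sum_congr rfl fun s hs => by
        rw [mulVec_mulVec, transitionMatrix_succ Q (mem_range.1 hs)]
    rw [hx, ih, mulVec_add, mulVec_sum, hsum, mulVec_mulVec,
      ← transitionMatrix_succ Q t.zero_le, sum_range_succ, transitionMatrix_self, one_mulVec,
      add_assoc]

end Transition

lemma spread_transitionMatrix_mulVec_le {ι : Type*} [Fintype ι] [DecidableEq ι] [Nonempty ι]
    {Q : ℕ → Matrix ι ι ℝ} (hQ : ∀ t i, ∑ j, Q t i j = 1) {c : ℕ → ℝ}
    (hc : ∀ t i j, c t ≤ ∑ s, min (Q t i s) (Q t j s)) {s t : ℕ} (hst : s ≤ t) (y : ι → ℝ) :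
    spread (transitionMatrix Q s t *ᵥ y) ≤ (∏ r ∈ Ico s t, (1 - c r)) * spread y := by
  induction t, hst using Nat.le_induction with
  | base => simp
  | succ t hst ih =>
    rw [transitionMatrix_succ Q hst, ← mulVec_mulVec, prod_Ico_succ_top hst, mul_comm _ (1 - c t),
      mul_assoc]
    exact (spread_mulVec_le (hQ t) (hc t) _).trans <| mul_le_mul_of_nonneg_left ih
      (sub_nonneg.2 (le_one_of_le_sum_min (hQ t) (hc t)))

section Overlap

variable {ι : Type*} [Fintype ι] [Nonempty ι]

/-- One minus Dobrushin's ergodicity coefficient of `P`. -/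
noncomputable def overlap (P : Matrix ι ι ℝ) : ℝ :=
  univ.inf' univ_nonempty fun p : ι × ι => ∑ s, min (P p.1 s) (P p.2 s)

lemma overlap_le_sum_min (P : Matrix ι ι ℝ) (i j : ι) :
    overlap P ≤ ∑ s, min (P i s) (P j s) :=
  inf'_le _ (mem_univ (i, j))

lemma overlap_pos {P : Matrix ι ι ℝ} (hP : ∀ i j, 0 ≤ P i j)
    (hscr : ∀ i j, ∃ s, 0 < P i s * P j s) : 0 < overlap P := by
  refine (lt_inf'_iff _).2 fun ⟨i, j⟩ _ => ?_
  obtain ⟨s, hs⟩ := hscr i j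
  refine sum_pos' (fun k _ => le_min (hP i k) (hP j k)) ⟨s, mem_univ s, lt_min ?_ ?_⟩
  · exact (hP i s).lt_of_ne fun h => by simp [← h] at hs
  · exact (hP j s).lt_of_ne fun h => by simp [← h] at hs

lemma overlap_mul_iInf_le_sum_min {P Q : Matrix ι ι ℝ} {w : ι → ℝ} (hP : ∀ i j, 0 ≤ P i j)
    (hw : ∀ i, 0 ≤ w i) (hQ : ∀ i j, w i * P i j ≤ Q i j) (i j : ι) :
    overlap P * ⨅ k, w k ≤ ∑ s, min (Q i s) (Q j s) := by
  have hle (k : ι) : ⨅ k, w k ≤ w k := ciInf_le (Finite.bddBelow_range w) k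
  have hmin (s : ι) : (⨅ k, w k) * min (P i s) (P j s) ≤ min (Q i s) (Q j s) := by
    have h0 := le_min (hP i s) (hP j s)
    exact le_min ((mul_le_mul (hle i) (min_le_left _ _) h0 (hw i)).trans (hQ i s))
      ((mul_le_mul (hle j) (min_le_right _ _) h0 (hw j)).trans (hQ j s))
  calc overlap P * ⨅ k, w k ≤ (∑ s, min (P i s) (P j s)) * ⨅ k, w k :=
        mul_le_mul_of_nonneg_right (overlap_le_sum_min P i j) (le_ciInf hw)
    _ = ∑ s, (⨅ k, w k) * min (P i s) (P j s) := by rw [sum_mul]; simp only [mul_comm]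
    _ ≤ ∑ s, min (Q i s) (Q j s) := sum_le_sum fun s _ => hmin s

end Overlap

lemma one_add_apply_nonneg {ι : Type*} [DecidableEq ι] {A : Matrix ι ι ℝ}
    (hoff : ∀ i j, i ≠ j → 0 ≤ A i j) (hdiag : ∀ i, -1 ≤ A i i) (i j : ι) : 0 ≤ (1 + A) i j := by
  rcases eq_or_ne i j with rfl | hij
  · simpa [add_comm] using neg_le_iff_add_nonneg.1 (hdiag i)
  · simpa [hij] using hoff i j hij

section OneAddDiagonalMul

variable {ι : Type*} [Fintype ι] [DecidableEq ι] {A : Matrix ι ι ℝ} {w : ι → ℝ}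

lemma sum_one_add_diagonal_mul_apply (hA : ∀ i, ∑ j, A i j = 0) (i : ι) :
    ∑ j, (1 + diagonal w * A) i j = 1 := by
  simp [diagonal_mul, one_apply, sum_add_distrib, ← mul_sum, hA]

lemma mul_one_add_apply_le (hw : ∀ i, w i ≤ 1) (i j : ι) :
    w i * (1 + A) i j ≤ (1 + diagonal w * A) i j := by
  simp only [Matrix.add_apply, one_apply, diagonal_mul, mul_add]
  split_ifs <;> linarith [hw i]

lemma spread_diagonal_mulVec_sq_le [Nonempty ι] (hw : ∀ i, 0 ≤ w i) {v : ι → ℝ}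
    (hv : ∀ i, |v i| ≤ 1) : spread (diagonal w *ᵥ v) ^ 2 ≤ 4 * ⨆ i, w i ^ 2 :=
  spread_sq_le fun i => by
    rw [mulVec_diagonal, abs_mul, abs_of_nonneg (hw i)]
    exact mul_le_of_le_one_right (hw i) (hv i)

end OneAddDiagonalMul

section Centering

variable (ι : Type*) [Fintype ι] [DecidableEq ι]

noncomputable def centering : Matrix ι ι ℝ :=
  1 - (Fintype.card ι : ℝ)⁻¹ • of fun _ _ => 1

variable {ι} [Nonempty ι]

lemma centering_mulVec_apply (y : ι → ℝ) (i : ι) :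
    (centering ι *ᵥ y) i = (Fintype.card ι : ℝ)⁻¹ * ∑ j, (y i - y j) := by
  have hcard : (Fintype.card ι : ℝ) ≠ 0 := Nat.cast_ne_zero.2 Fintype.card_ne_zero
  rw [centering, sub_mulVec, one_mulVec, sum_sub_distrib, sum_const, card_univ, nsmul_eq_mul]
  simp only [Pi.sub_apply, smul_mulVec, Pi.smul_apply, smul_eq_mul, mulVec, dotProduct, of_apply,
    one_mul]
  field_simp

lemma sum_sq_centering_mulVec_le (y : ι → ℝ) :
    ∑ i, (centering ι *ᵥ y) i ^ 2 ≤ Fintype.card ι * spread y ^ 2 := by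
  have hcard : (0 : ℝ) < Fintype.card ι := Nat.cast_pos.2 Fintype.card_pos
  have habs (i : ι) : |(centering ι *ᵥ y) i| ≤ spread y := by
    rw [centering_mulVec_apply, abs_mul, abs_inv, Nat.abs_cast, inv_mul_le_iff₀ hcard]
    calc |∑ j, (y i - y j)| ≤ ∑ j, |y i - y j| := abs_sum_le_sum_abs _ _
      _ ≤ ∑ _j : ι, spread y := sum_le_sum fun j _ => abs_sub_le_spread y i j
      _ = Fintype.card ι * spread y := by simp
  calc ∑ i, (centering ι *ᵥ y) i ^ 2 ≤ ∑ _i : ι, spread y ^ 2 :=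
        sum_le_sum fun i _ => sq_le_sq' (abs_le.1 (habs i)).1 (abs_le.1 (habs i)).2
    _ = Fintype.card ι * spread y ^ 2 := by simp

lemma centering_fin (n : ℕ) : centering (Fin n) = 1 - (n : ℝ)⁻¹ • of fun _ _ => 1 := by
  simp [centering]

end Centering

lemma sum_sq_centering_transitionMatrix_mulVec_le {ι : Type*} [Fintype ι] [DecidableEq ι]
    [Nonempty ι] {Q : ℕ → Matrix ι ι ℝ} (hQ : ∀ t i, ∑ j, Q t i j = 1) {c : ℕ → ℝ}
    (hc : ∀ t i j, c t ≤ ∑ s, min (Q t i s) (Q t j s)) {s t : ℕ} (hst : s ≤ t) (y : ι → ℝ) :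
    ∑ i, (centering ι *ᵥ (transitionMatrix Q s t *ᵥ y)) i ^ 2
      ≤ Fintype.card ι * ((∏ r ∈ Ico s t, (1 - c r)) ^ 2 * spread y ^ 2) := by
  refine (sum_sq_centering_mulVec_le _).trans (mul_le_mul_of_nonneg_left ?_ (Nat.cast_nonneg _))
  rw [← mul_pow]
  exact pow_le_pow_left₀ (spread_nonneg _) (spread_transitionMatrix_mulVec_le hQ hc hst y) 2

lemma tendsto_prod_Ico_one_sub_atTop {c : ℕ → ℝ} (hc : ∀ r, c r ≤ 1)
    (hsum : Tendsto (fun T => ∑ r ∈ range T, c r) atTop atTop) (s : ℕ) :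
    Tendsto (fun t => ∏ r ∈ Ico s t, (1 - c r)) atTop (𝓝 0) := by
  have hexp : ∀ t, s ≤ t → ∏ r ∈ Ico s t, (1 - c r)
      ≤ Real.exp (-(∑ r ∈ range t, c r - ∑ r ∈ range s, c r)) := fun t hst => by
    rw [← sum_Ico_eq_sub _ hst, ← sum_neg_distrib, Real.exp_sum]
    exact prod_le_prod (fun r _ => sub_nonneg.2 (hc r)) fun r _ => by
      linarith [Real.add_one_le_exp (-c r)]
  have hlim : Tendsto (fun t => Real.exp (-(∑ r ∈ range t, c r - ∑ r ∈ range s, c r)))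
      atTop (𝓝 0) :=
    Real.tendsto_exp_atBot.comp <| tendsto_neg_atTop_atBot.comp <|
      tendsto_atTop_add_const_right _ _ hsum
  refine squeeze_zero' (Eventually.of_forall fun t => prod_nonneg fun r _ => sub_nonneg.2 (hc r))
    ?_ hlim
  filter_upwards [eventually_ge_atTop s] with t hst using hexp t hst

lemma tendsto_sum_range_mul_of_summable {b : ℕ → ℕ → ℝ} {a : ℕ → ℝ} (hb : ∀ t s, |b t s| ≤ 1)
    (hlim : ∀ s, Tendsto (fun t => b t s) atTop (𝓝 0)) (ha : Summable a) (ha0 : ∀ s, 0 ≤ a s) :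
    Tendsto (fun t => ∑ s ∈ range t, b t s * a s) atTop (𝓝 0) := by
  set f : ℕ → ℕ → ℝ := fun t s => if s < t then b t s * a s else 0
  have hf : ∀ t, ∑' s, f t s = ∑ s ∈ range t, b t s * a s := fun t => by
    rw [tsum_eq_sum (s := range t) fun s hs => if_neg (by simpa using hs)]
    exact sum_congr rfl fun s hs => if_pos (mem_range.1 hs)
  have hdom := tendsto_tsum_of_dominated_convergence (f := f) (g := fun _ => 0) ha
    (fun s => by
      refine (zero_mul (a s) ▸ (hlim s).mul_const (a s)).congr' ?_
      filter_upwards [eventually_gt_atTop s] with t hst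
      simp [f, hst])
    (Eventually.of_forall fun t s => by
      by_cases hst : s < t
      · simpa [f, hst, abs_mul, abs_of_nonneg (ha0 s)] using
          mul_le_of_le_one_left (ha0 s) (hb t s)
      · simp [f, hst, ha0 s])
  simpa [hf] using hdom

lemma tendsto_centered_moment_bound {c δ : ℕ → ℝ} (hc0 : ∀ r, 0 ≤ c r) (hc1 : ∀ r, c r ≤ 1)
    (hsum : Tendsto (fun T => ∑ r ∈ range T, c r) atTop atTop) (hδ : Summable δ)
    (hδ0 : ∀ s, 0 ≤ δ s) (K a : ℝ) :
    Tendsto (fun t => K * ((∏ r ∈ Ico 0 t, (1 - c r)) ^ 2 * a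
      + ∑ s ∈ range t, (∏ r ∈ Ico (s + 1) t, (1 - c r)) ^ 2 * δ s)) atTop (𝓝 0) := by
  have hlim := tendsto_prod_Ico_one_sub_atTop hc1 hsum
  have hB (s t : ℕ) : |(∏ r ∈ Ico s t, (1 - c r)) ^ 2| ≤ 1 := by
    rw [abs_of_nonneg (sq_nonneg _)]
    exact pow_le_one₀ (prod_nonneg fun r _ => sub_nonneg.2 (hc1 r))
      (prod_le_one (fun r _ => sub_nonneg.2 (hc1 r)) fun r _ => sub_le_self _ (hc0 r))
  have hinit : Tendsto (fun t => (∏ r ∈ Ico 0 t, (1 - c r)) ^ 2 * a) atTop (𝓝 0) := by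
    simpa using ((hlim 0).pow 2).mul_const a
  have htail := tendsto_sum_range_mul_of_summable
    (b := fun t s => (∏ r ∈ Ico (s + 1) t, (1 - c r)) ^ 2) (fun t s => hB (s + 1) t)
    (fun s => by simpa using (hlim (s + 1)).pow 2) hδ hδ0
  simpa using (hinit.add htail).const_mul K

section SecondMoment

lemma integral_mul_eq_zero_of_condExp_eq_zero {Ω : Type*} {m m₀ : MeasurableSpace Ω}
    {μ : Measure[m₀] Ω} [IsFiniteMeasure μ] (hm : m ≤ m₀) {f g : Ω → ℝ}
    (hf : StronglyMeasurable[m] f) (hfg : Integrable (f * g) μ) (hg : Integrable g μ)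
    (hcond : μ[g|m] =ᵐ[μ] 0) : ∫ ω, f ω * g ω ∂μ = 0 := by
  have hzero : μ[f * g|m] =ᵐ[μ] 0 :=
    (condExp_mul_of_stronglyMeasurable_left hf hfg hg).trans <| by
      filter_upwards [hcond] with ω hω
      simp [hω]
  change ∫ ω, (f * g) ω ∂μ = 0
  rw [← integral_condExp hm, integral_congr_ae hzero]
  simp

variable {Ω : Type*} [MeasurableSpace Ω] {μ : Measure Ω}

lemma integral_sum_sq_of_orthogonal {κ : Type*} (T : Finset κ) {g : κ → Ω → ℝ}
    (hg : ∀ s ∈ T, MemLp (g s) 2 μ)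
    (horth : ∀ s ∈ T, ∀ s' ∈ T, s ≠ s' → ∫ ω, g s ω * g s' ω ∂μ = 0) :
    ∫ ω, (∑ s ∈ T, g s ω) ^ 2 ∂μ = ∑ s ∈ T, ∫ ω, g s ω ^ 2 ∂μ := by
  have hint : ∀ s ∈ T, ∀ s' ∈ T, Integrable (fun ω => g s ω * g s' ω) μ :=
    fun s hs s' hs' => (hg s hs).integrable_mul (hg s' hs')
  simp_rw [sq, sum_mul_sum]
  rw [integral_finsetSum _ fun s hs => integrable_finsetSum _ fun s' hs' => hint s hs s' hs']
  refine sum_congr rfl fun s hs => ?_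
  rw [integral_finsetSum _ fun s' hs' => hint s hs s' hs']
  exact sum_eq_single_of_mem s hs fun s' hs' hne => horth s hs s' hs' hne.symm

lemma integral_const_add_sq [IsProbabilityMeasure μ] (a : ℝ) {g : Ω → ℝ} (hg : MemLp g 2 μ)
    (hg0 : ∫ ω, g ω ∂μ = 0) : ∫ ω, (a + g ω) ^ 2 ∂μ = a ^ 2 + ∫ ω, g ω ^ 2 ∂μ := by
  have hg1 : Integrable g μ := hg.integrable one_le_two
  calc ∫ ω, (a + g ω) ^ 2 ∂μ = ∫ ω, (a ^ 2 + 2 * a * g ω) + g ω ^ 2 ∂μ :=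
        integral_congr_ae (ae_of_all _ fun ω => by ring)
    _ = a ^ 2 + ∫ ω, g ω ^ 2 ∂μ := by
        have hlin : Integrable (fun ω => a ^ 2 + 2 * a * g ω) μ :=
          (integrable_const _).add (hg1.const_mul _)
        rw [integral_add hlin hg.integrable_sq, integral_add (integrable_const _) (hg1.const_mul _),
          integral_const_mul, hg0]
        simp

end SecondMoment

lemma measurable_mulVec {ι : Type*} [Fintype ι] (N : Matrix ι ι ℝ) :
    Measurable fun v : ι → ℝ => N *ᵥ v :=
  (continuous_const.matrix_mulVec continuous_id).measurable

section NoisyLinearSystem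

variable {ι Ω : Type*}

abbrev history (x : ℕ → Ω → ι → ℝ) (t : ℕ) : MeasurableSpace Ω :=
  ⨆ s ∈ range (t + 1), MeasurableSpace.comap (x s) inferInstance

lemma measurable_history {x : ℕ → Ω → ι → ℝ} {s t : ℕ} (hst : s ≤ t) :
    Measurable[history x t] (x s) :=
  (comap_measurable (x s)).mono (le_iSup₂ (f := fun s (_ : s ∈ range (t + 1)) =>
    MeasurableSpace.comap (x s) inferInstance) s (mem_range.2 (Nat.lt_succ_of_le hst))) le_rfl

lemma memLp_apply_of_abs_le_one [MeasurableSpace Ω] {μ : Measure Ω} [IsFiniteMeasure μ]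
    {v : Ω → ι → ℝ} (hm : Measurable v) (hb : ∀ ω i, |v ω i| ≤ 1) (p : ENNReal) (k : ι) :
    MemLp (fun ω => v ω k) p μ :=
  MemLp.of_bound ((measurable_pi_apply k).comp hm).aestronglyMeasurable 1
    (ae_of_all _ fun ω => by simpa using hb ω k)

variable [Fintype ι] {Q D : ℕ → Matrix ι ι ℝ} {x ε : ℕ → Ω → ι → ℝ} {x₀ : ι → ℝ}
  (hx₀ : ∀ ω, x 0 ω = x₀) (hx : ∀ t ω, x (t + 1) ω = Q t *ᵥ x t ω + D t *ᵥ ε t ω)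

include hx in
lemma measurable_history_noise {s t : ℕ} (hst : s < t) :
    Measurable[history x t] fun ω => D s *ᵥ ε s ω := by
  have hnoise : (fun ω => D s *ᵥ ε s ω) = fun ω => x (s + 1) ω - Q s *ᵥ x s ω :=
    funext fun ω => by rw [hx, add_sub_cancel_left]
  rw [hnoise]
  exact (measurable_history hst).sub ((measurable_mulVec _).comp (measurable_history hst.le))

include hx₀ hx in
lemma mulVec_apply_eq_add_sum [DecidableEq ι] (M : Matrix ι ι ℝ) (t : ℕ) (ω : Ω) (i : ι) :
    (M *ᵥ x t ω) i = (M *ᵥ (transitionMatrix Q 0 t *ᵥ x₀)) i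
      + ∑ s ∈ range t, (M *ᵥ (transitionMatrix Q (s + 1) t *ᵥ (D s *ᵥ ε s ω))) i := by
  rw [eq_transitionMatrix_mulVec_add_sum Q (x := fun t => x t ω) (fun t => hx t ω) t, hx₀,
    mulVec_add, mulVec_sum]
  simp only [Pi.add_apply, Finset.sum_apply]

variable [MeasurableSpace Ω] {μ : Measure Ω} (hεm : ∀ t, Measurable (ε t))
  (hεb : ∀ t ω i, |ε t ω i| ≤ 1) (hε : ∀ t i, μ[fun ω => ε t ω i | history x t] =ᵐ[μ] 0)

include hx₀ hx hεm in
lemma history_le (t : ℕ) : history x t ≤ ‹MeasurableSpace Ω› := by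
  have hxm (s : ℕ) : Measurable (x s) := by
    induction s with
    | zero => simp [funext hx₀]
    | succ s ih =>
      rw [funext (hx s)]
      exact ((measurable_mulVec _).comp ih).add ((measurable_mulVec _).comp (hεm s))
  exact iSup₂_le fun s _ => (hxm s).comap_le

include hεm hεb in
lemma memLp_mulVec_noise [IsFiniteMeasure μ] (p : ENNReal) (N : Matrix ι ι ℝ) (t : ℕ) (i : ι) :
    MemLp (fun ω => (N *ᵥ (D t *ᵥ ε t ω)) i) p μ := by
  simp only [mulVec_mulVec]
  exact memLp_finsetSum univ fun k _ =>
    (memLp_apply_of_abs_le_one (hεm t) (hεb t) p k).const_mul ((N * D t) i k)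

include hx₀ hx hεm hεb hε in
lemma integral_mul_mulVec_noise_eq_zero [IsFiniteMeasure μ] (N : Matrix ι ι ℝ) {t : ℕ}
    {f : Ω → ℝ} (hf : StronglyMeasurable[history x t] f) (hfi : Integrable f μ) (i : ι) :
    ∫ ω, f ω * (N *ᵥ (D t *ᵥ ε t ω)) i ∂μ = 0 := by
  have hεi (k : ι) : Integrable (fun ω => ε t ω k) μ :=
    (memLp_apply_of_abs_le_one (hεm t) (hεb t) 1 k).integrable le_rfl
  have hterm (k : ι) : Integrable (fun ω => f ω * (N * D t) i k * ε t ω k) μ :=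
    (hfi.mul_const _).mul_bdd ((measurable_pi_apply k).comp (hεm t)).aestronglyMeasurable
      (c := 1) (ae_of_all _ fun ω => by simpa using hεb t ω k)
  simp only [mulVec_mulVec]
  simp only [mulVec, dotProduct, mul_sum, ← mul_assoc]
  rw [integral_finsetSum _ fun k _ => hterm k]
  exact sum_eq_zero fun k _ => integral_mul_eq_zero_of_condExp_eq_zero (history_le hx₀ hx hεm t)
    (hf.mul stronglyMeasurable_const) (hterm k) (hεi k) (hε t k)

include hx₀ hx hεm hεb hε in
lemma integral_mulVec_noise_eq_zero [IsFiniteMeasure μ] (N : Matrix ι ι ℝ) (t : ℕ) (i : ι) :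
    ∫ ω, (N *ᵥ (D t *ᵥ ε t ω)) i ∂μ = 0 := by
  simpa using integral_mul_mulVec_noise_eq_zero hx₀ hx hεm hεb hε N
    (stronglyMeasurable_const (b := (1 : ℝ))) (integrable_const 1) i

include hx₀ hx hεm hεb hε in
lemma integral_mulVec_noise_mul_mulVec_noise_eq_zero [IsFiniteMeasure μ] (N N' : Matrix ι ι ℝ)
    {s s' : ℕ} (hss' : s ≠ s') (i : ι) :
    ∫ ω, (N *ᵥ (D s *ᵥ ε s ω)) i * (N' *ᵥ (D s' *ᵥ ε s' ω)) i ∂μ = 0 := by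
  wlog hlt : s < s' generalizing N N' s s'
  · simpa only [mul_comm] using this N' N hss'.symm (hss'.symm.lt_of_le (not_lt.1 hlt))
  have hf : Measurable[history x s'] fun ω => (N *ᵥ (D s *ᵥ ε s ω)) i :=
    (measurable_pi_apply i).comp ((measurable_mulVec N).comp (measurable_history_noise hx hlt))
  exact integral_mul_mulVec_noise_eq_zero hx₀ hx hεm hεb hε N' hf.stronglyMeasurable
    ((memLp_mulVec_noise hεm hεb 1 N s i).integrable le_rfl) i

include hx₀ hx hεm hεb in
lemma memLp_mulVec_apply [DecidableEq ι] [IsFiniteMeasure μ] (M : Matrix ι ι ℝ) (t : ℕ)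
    (i : ι) : MemLp (fun ω => (M *ᵥ x t ω) i) 2 μ := by
  simp_rw [mulVec_apply_eq_add_sum hx₀ hx M t, mulVec_mulVec _ M]
  have hsum : MemLp (fun ω => ∑ s ∈ range t,
      ((M * transitionMatrix Q (s + 1) t) *ᵥ (D s *ᵥ ε s ω)) i) 2 μ :=
    memLp_finsetSum _ fun s _ => memLp_mulVec_noise hεm hεb 2 _ s i
  have hconst : MemLp (fun _ : Ω => ((M * transitionMatrix Q 0 t) *ᵥ x₀) i) 2 μ := memLp_const _
  exact hconst.add hsum

include hx₀ hx hεm hεb hε in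
lemma integral_mulVec_apply_sq_eq [DecidableEq ι] [IsProbabilityMeasure μ] (M : Matrix ι ι ℝ)
    (t : ℕ) (i : ι) :
    ∫ ω, (M *ᵥ x t ω) i ^ 2 ∂μ = (M *ᵥ (transitionMatrix Q 0 t *ᵥ x₀)) i ^ 2
      + ∑ s ∈ range t, ∫ ω, (M *ᵥ (transitionMatrix Q (s + 1) t *ᵥ (D s *ᵥ ε s ω))) i ^ 2 ∂μ := by
  simp_rw [mulVec_apply_eq_add_sum hx₀ hx M t, mulVec_mulVec _ M]
  have hmem (s : ℕ) :
      MemLp (fun ω => ((M * transitionMatrix Q (s + 1) t) *ᵥ (D s *ᵥ ε s ω)) i) 2 μ :=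
    memLp_mulVec_noise hεm hεb 2 _ s i
  rw [integral_const_add_sq _ (memLp_finsetSum _ fun s _ => hmem s) ?_,
    integral_sum_sq_of_orthogonal _ (fun s _ => hmem s) fun s _ s' _ hss' =>
      integral_mulVec_noise_mul_mulVec_noise_eq_zero hx₀ hx hεm hεb hε _ _ hss' i]
  rw [integral_finsetSum _ fun s _ => (hmem s).integrable one_le_two]
  exact sum_eq_zero fun s _ => integral_mulVec_noise_eq_zero hx₀ hx hεm hεb hε _ s i

include hx₀ hx hεm hεb hε in
theorem integral_sum_sq_mulVec_eq [DecidableEq ι] [IsProbabilityMeasure μ] (M : Matrix ι ι ℝ)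
    (t : ℕ) :
    ∫ ω, ∑ i, (M *ᵥ x t ω) i ^ 2 ∂μ
      = ∑ i, (M *ᵥ (transitionMatrix Q 0 t *ᵥ x₀)) i ^ 2
        + ∑ s ∈ range t,
            ∫ ω, ∑ i, (M *ᵥ (transitionMatrix Q (s + 1) t *ᵥ (D s *ᵥ ε s ω))) i ^ 2 ∂μ := by
  rw [integral_finsetSum _ fun i _ => (memLp_mulVec_apply hx₀ hx hεm hεb M t i).integrable_sq,
    sum_congr rfl fun i _ => integral_mulVec_apply_sq_eq hx₀ hx hεm hεb hε M t i,
    sum_add_distrib, sum_comm]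
  refine congrArg _ (sum_congr rfl fun s _ => ?_)
  have hint (i : ι) :
      Integrable (fun ω => (M *ᵥ (transitionMatrix Q (s + 1) t *ᵥ (D s *ᵥ ε s ω))) i ^ 2) μ := by
    simp_rw [mulVec_mulVec _ M]
    exact (memLp_mulVec_noise hεm hεb 2 _ s i).integrable_sq
  exact (integral_finsetSum _ fun i _ => hint i).symm

include hx₀ hx hεm hεb hε in
theorem integral_sum_sq_centering_mulVec_le [DecidableEq ι] [Nonempty ι] [IsProbabilityMeasure μ]
    (hQ : ∀ t i, ∑ j, Q t i j = 1) {c : ℕ → ℝ}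
    (hc : ∀ t i j, c t ≤ ∑ s, min (Q t i s) (Q t j s)) {δ : ℕ → ℝ}
    (hδ : ∀ t ω, spread (D t *ᵥ ε t ω) ^ 2 ≤ δ t) (t : ℕ) :
    ∫ ω, ∑ i, (centering ι *ᵥ x t ω) i ^ 2 ∂μ
      ≤ Fintype.card ι * ((∏ r ∈ Ico 0 t, (1 - c r)) ^ 2 * spread x₀ ^ 2
        + ∑ s ∈ range t, (∏ r ∈ Ico (s + 1) t, (1 - c r)) ^ 2 * δ s) := by
  rw [integral_sum_sq_mulVec_eq hx₀ hx hεm hεb hε, mul_add, mul_sum]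
  refine add_le_add (sum_sq_centering_transitionMatrix_mulVec_le hQ hc t.zero_le x₀)
    (sum_le_sum fun s hs => ?_)
  refine (integral_mono_of_nonneg (ae_of_all _ fun ω => sum_nonneg fun i _ => sq_nonneg _)
    (integrable_const ((Fintype.card ι : ℝ) * ((∏ r ∈ Ico (s + 1) t, (1 - c r)) ^ 2 * δ s)))
    (ae_of_all _ fun ω => ?_)).trans_eq (by simp)
  exact (sum_sq_centering_transitionMatrix_mulVec_le hQ hc (mem_range.1 hs) _).trans <|
    mul_le_mul_of_nonneg_left (mul_le_mul_of_nonneg_left (hδ s ω) (sq_nonneg _))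
      (Nat.cast_nonneg _)

end NoisyLinearSystem

end Consensus

open Consensus in
theorem centered_opinions_tendsto_zero_L2_general
    (n : ℕ) (hn : 0 < n)
    (A : Matrix (Fin n) (Fin n) ℝ)
    (hoff : ∀ i j, i ≠ j → 0 ≤ A i j)
    (hdiag : ∀ i, A i i ∈ Set.Icc (-1 : ℝ) 0)
    (hrowsum : ∀ i, ∑ j, A i j = 0)
    (hscramble : ∀ i j : Fin n, ∃ s : Fin n,
      0 < (1 + A : Matrix (Fin n) (Fin n) ℝ) i s * (1 + A : Matrix (Fin n) (Fin n) ℝ) j s)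
    (w : ℕ → Fin n → ℝ) (hw : ∀ t i, w t i ∈ Set.Icc (0 : ℝ) 1)
    (hdiv : Tendsto (fun T => ∑ s ∈ Finset.range T, ⨅ i, w s i) atTop atTop)
    (hsq : Summable fun s => ⨆ i, (w s i) ^ 2)
    {Ωs : Type*} [MeasurableSpace Ωs] (μ : Measure Ωs) [IsProbabilityMeasure μ]
    (θ0 : Fin n → ℝ)
    (θ ε : ℕ → Ωs → Fin n → ℝ)
    (hθinit : ∀ x, θ 0 x = θ0)
    (hεmeas : ∀ t, Measurable (ε t))
    (hεrange : ∀ t x i, ε t x i ∈ Set.Icc (-1 : ℝ) 1)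
    (hrec : ∀ t x, θ (t + 1) x =
      (1 + Matrix.diagonal (w t) * A) *ᵥ θ t x + Matrix.diagonal (w t) *ᵥ ε t x)
    (hcond : ∀ t i, μ[(fun x => ε t x i) |
        ⨆ s ∈ Finset.range (t + 1), MeasurableSpace.comap (θ s) inferInstance] =ᵐ[μ] 0) :
    Tendsto (fun t => ∫ x, ∑ i,
        ((((1 : Matrix (Fin n) (Fin n) ℝ) - (n : ℝ)⁻¹ • Matrix.of fun _ _ => (1 : ℝ)) *ᵥ θ t x) i) ^ 2 ∂μ)
      atTop (𝓝 0) := by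
  have : Nonempty (Fin n) := ⟨⟨0, hn⟩⟩
  have hP := one_add_apply_nonneg hoff fun i => (hdiag i).1
  have hγ : 0 < overlap (1 + A) := overlap_pos hP hscramble
  set c : ℕ → ℝ := fun t => overlap (1 + A) * ⨅ i, w t i
  have hQ (t : ℕ) := sum_one_add_diagonal_mul_apply (w := w t) hrowsum
  have hc (t : ℕ) : ∀ i j, c t ≤ _ :=
    overlap_mul_iInf_le_sum_min hP (fun i => (hw t i).1) (mul_one_add_apply_le fun i => (hw t i).2)
  have hεb (t : ℕ) (ω : Ωs) (i : Fin n) : |ε t ω i| ≤ 1 := abs_le.2 (hεrange t ω i)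
  rw [← centering_fin]
  refine squeeze_zero (fun t => integral_nonneg fun ω => sum_nonneg fun i _ => sq_nonneg _)
    (integral_sum_sq_centering_mulVec_le hθinit hrec hεmeas hεb hcond hQ hc
      fun t ω => spread_diagonal_mulVec_sq_le (hw t · |>.1) (hεb t ω)) ?_
  exact tendsto_centered_moment_bound (fun t => mul_nonneg hγ.le (le_ciInf (hw t · |>.1)))
    (fun t => le_one_of_le_sum_min (hQ t) (hc t))
    (by simpa [c, ← mul_sum] using hdiv.const_mul_atTop hγ) (hsq.mul_left 4)
    (fun s => mul_nonneg zero_le_four <| Real.iSup_nonneg fun i => sq_nonneg _) _ _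

/-- For a scrambling chain `P = I + A` with no stubborn agents, divergence of
`∑ₜ minᵢ ωᵢ(t)` and convergence of `∑ₜ maxᵢ ωᵢ(t)²`, the centered opinions `C θ(t)` tend to
zero in `L²`, where `C = I - (1/n) e eᵀ`. -/
theorem centered_opinions_tendsto_zero_L2
    (n : ℕ) (hn : 0 < n)
    (A : Matrix (Fin n) (Fin n) ℝ)
    (hoff : ∀ i j, i ≠ j → 0 ≤ A i j)
    (hdiag : ∀ i, A i i ∈ Set.Icc (-1 : ℝ) 0)
    (hrowsum : ∀ i, ∑ j, A i j = 0)
    (hscramble : ∀ i j : Fin n, ∃ s : Fin n,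
      0 < (1 + A : Matrix (Fin n) (Fin n) ℝ) i s * (1 + A : Matrix (Fin n) (Fin n) ℝ) j s)
    (w : ℕ → Fin n → ℝ) (hw : ∀ t i, w t i ∈ Set.Icc (0 : ℝ) 1)
    (hdiv : Tendsto (fun T => ∑ s ∈ Finset.range T, ⨅ i, w s i) atTop atTop)
    (hsq : Summable fun s => ⨆ i, (w s i) ^ 2)
    {Ωs : Type*} [MeasurableSpace Ωs] (μ : Measure Ωs) [IsProbabilityMeasure μ]
    (θ0 : Fin n → ℝ) (hθ0 : ∀ i, θ0 i ∈ Set.Icc (0 : ℝ) 1)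
    (θ ε : ℕ → Ωs → Fin n → ℝ)
    (hθinit : ∀ x, θ 0 x = θ0)
    (hεmeas : ∀ t, Measurable (ε t))
    (hεrange : ∀ t x i, ε t x i ∈ Set.Icc (-1 : ℝ) 1)
    (hrec : ∀ t x, θ (t + 1) x =
      (1 + Matrix.diagonal (w t) * A) *ᵥ θ t x + Matrix.diagonal (w t) *ᵥ ε t x)
    (hcond : ∀ t i, μ[(fun x => ε t x i) |
        ⨆ s ∈ Finset.range (t + 1), MeasurableSpace.comap (θ s) inferInstance] =ᵐ[μ] 0) :
    Tendsto (fun t => ∫ x, ∑ i,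
        ((((1 : Matrix (Fin n) (Fin n) ℝ) - (n : ℝ)⁻¹ • Matrix.of fun _ _ => (1 : ℝ)) *ᵥ θ t x) i) ^ 2 ∂μ)
      atTop (𝓝 0) :=
  centered_opinions_tendsto_zero_L2_general n hn A hoff hdiag hrowsum hscramble w hw hdiv hsq μ θ0 θ
    ε hθinit hεmeas hεrange hrec hcond
end
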